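/- arXiv:1210.4353 — 9 statements merged into one kernel-verified Lean document; each statement's English description precedes it below -/
import Mathlib

section
/- Let C be a Boolean circuit of depth d with fan-in-2 AND and OR gates (and negated inputs allowed). Then for every 5-cycle μ ∈ S₅, there is a width-5 permutation branching program of length at most 4^d that evaluates to μ on inputs where C outputs true, and to the identity on inputs where C outputs false (Barrington's theorem). -/
/-- An instruction over `S₅`: an index into the input bits together with two
permutations; on input `x` it evaluates to the first permutation if the selected
bit is `1` and to the second otherwise. -/
abbrev Instr (n : ℕ) := Fin n × Equiv.Perm (Fin 5) × Equiv.Perm (Fin 5)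

/-- The value of an instruction on input `x`. -/
def evalInstr {n : ℕ} (x : Fin n → Bool) (I : Instr n) : Equiv.Perm (Fin 5) :=
  if x I.1 then I.2.1 else I.2.2

/-- A width-5 permutation branching program: a finite sequence of instructions over `S₅`. -/
abbrev BP (n : ℕ) := List (Instr n)

/-- The value of a width-5 permutation branching program on input `x`:
the product of the values of its instructions. -/
def evalBP {n : ℕ} (x : Fin n → Bool) (P : BP n) : Equiv.Perm (Fin 5) :=
  (P.map (evalInstr x)).prod

/-- `P` computes `C` with output `μ`: it evaluates to `μ` whenever `C x` is true
and to the identity whenever `C x` is false. -/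
def ComputesWith {n : ℕ} (P : BP n) (C : (Fin n → Bool) → Bool)
    (μ : Equiv.Perm (Fin 5)) : Prop :=
  ∀ x, evalBP x P = if C x then μ else 1

/-- `μ` is a 5-cycle in `S₅`: a single cycle moving all five elements. -/
def IsFiveCycle (μ : Equiv.Perm (Fin 5)) : Prop :=
  μ.IsCycle ∧ μ.support.card = 5

/-- Boolean circuits of fan-in 2 with AND and OR gates; leaves are input bits,
possibly negated (`lit i b` evaluates to `xᵢ xor b`). -/
inductive BoolCircuit (n : ℕ) where
  | lit : Fin n → Bool → BoolCircuit n
  | and : BoolCircuit n → BoolCircuit n → BoolCircuit n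
  | or  : BoolCircuit n → BoolCircuit n → BoolCircuit n

def BoolCircuit.eval {n : ℕ} : BoolCircuit n → (Fin n → Bool) → Bool
  | lit i b, x => xor (x i) b
  | and C₁ C₂, x => C₁.eval x && C₂.eval x
  | or C₁ C₂, x => C₁.eval x || C₂.eval x

def BoolCircuit.depth {n : ℕ} : BoolCircuit n → ℕ
  | lit _ _ => 0
  | and C₁ C₂ => max C₁.depth C₂.depth + 1
  | or C₁ C₂ => max C₁.depth C₂.depth + 1

/- ### Auxiliary material for the proof -/

namespace BarringtonAux

open Equiv Equiv.Perm

def a0 : Perm (Fin 5) := [(0 : Fin 5), 1, 2, 3, 4].formPerm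
def b0 : Perm (Fin 5) := [(0 : Fin 5), 2, 4, 3, 1].formPerm
def g0 : Perm (Fin 5) := [(0 : Fin 5), 3, 2, 4, 1].formPerm

lemma isFiveCycle_a0 : IsFiveCycle a0 :=
  ⟨List.isCycle_formPerm (by decide) (by decide), by decide⟩
lemma isFiveCycle_b0 : IsFiveCycle b0 :=
  ⟨List.isCycle_formPerm (by decide) (by decide), by decide⟩
lemma isFiveCycle_g0 : IsFiveCycle g0 :=
  ⟨List.isCycle_formPerm (by decide) (by decide), by decide⟩

lemma comm_g0 : a0 * b0 * a0⁻¹ * b0⁻¹ = g0 := by decide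

lemma fiveCycle_inv {μ : Perm (Fin 5)} (h : IsFiveCycle μ) : IsFiveCycle μ⁻¹ :=
  ⟨h.1.inv, by rw [Equiv.Perm.support_inv]; exact h.2⟩

lemma fiveCycle_conj {μ : Perm (Fin 5)} (σ : Perm (Fin 5)) (h : IsFiveCycle μ) :
    IsFiveCycle (σ * μ * σ⁻¹) :=
  ⟨h.1.conj, by rw [Equiv.Perm.support_conj, Finset.card_map]; exact h.2⟩

/-- Every 5-cycle is a commutator of two 5-cycles. -/
lemma exists_commutator {μ : Perm (Fin 5)} (hμ : IsFiveCycle μ) :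
    ∃ α β : Perm (Fin 5), IsFiveCycle α ∧ IsFiveCycle β ∧ α * β * α⁻¹ * β⁻¹ = μ := by
  have hconj : IsConj g0 μ :=
    isFiveCycle_g0.1.isConj hμ.1 (by rw [isFiveCycle_g0.2, hμ.2])
  obtain ⟨σ, hσ⟩ := isConj_iff.mp hconj
  refine ⟨σ * a0 * σ⁻¹, σ * b0 * σ⁻¹, fiveCycle_conj σ isFiveCycle_a0, fiveCycle_conj σ isFiveCycle_b0, ?_⟩
  rw [← hσ, ← comm_g0]
  group

lemma evalBP_append {n : ℕ} (x : Fin n → Bool) (P Q : BP n) :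
    evalBP x (P ++ Q) = evalBP x P * evalBP x Q := by
  simp [evalBP]

lemma evalBP_cons {n : ℕ} (x : Fin n → Bool) (I : Instr n) (P : BP n) :
    evalBP x (I :: P) = evalInstr x I * evalBP x P := by
  simp [evalBP]

/-- Negation: left-multiplying the first instruction by `γ⁻¹` turns a program for `D`
with output `γ` into one for `¬D` with output `γ⁻¹`, of the same length. -/
lemma neg_bp {n : ℕ} {P : BP n} {D : (Fin n → Bool) → Bool} {γ : Perm (Fin 5)}
    (hP : ComputesWith P D γ) (hne : P ≠ []) :
    ∃ P' : BP n, P'.length = P.length ∧ P' ≠ [] ∧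
      ComputesWith P' (fun x => !(D x)) γ⁻¹ := by
  obtain ⟨I, rest, rfl⟩ : ∃ I rest, P = I :: rest := by
    cases P with
    | nil => exact absurd rfl hne
    | cons I rest => exact ⟨I, rest, rfl⟩
  refine ⟨(I.1, γ⁻¹ * I.2.1, γ⁻¹ * I.2.2) :: rest, rfl, by simp, fun x => ?_⟩
  have h1 : evalInstr x (I.1, γ⁻¹ * I.2.1, γ⁻¹ * I.2.2) = γ⁻¹ * evalInstr x I := by
    simp only [evalInstr]
    by_cases h : x I.1 <;> simp [h]
  have := hP x
  rw [evalBP_cons] at this ⊢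
  rw [h1, mul_assoc, this]
  by_cases h : D x <;> simp [h]

/-- The commutator construction for AND. -/
lemma and_bp {n : ℕ} {P₁ P₂ P₃ P₄ : BP n} {f g : (Fin n → Bool) → Bool}
    {α β : Perm (Fin 5)}
    (h₁ : ComputesWith P₁ f α) (h₂ : ComputesWith P₂ g β)
    (h₃ : ComputesWith P₃ f α⁻¹) (h₄ : ComputesWith P₄ g β⁻¹) :
    ComputesWith (P₁ ++ P₂ ++ P₃ ++ P₄) (fun x => f x && g x) (α * β * α⁻¹ * β⁻¹) := by
  intro x
  rw [evalBP_append, evalBP_append, evalBP_append, h₁ x, h₂ x, h₃ x, h₄ x]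
  by_cases hf : f x <;> by_cases hg : g x <;> simp [hf, hg]

lemma computesWith_congr {n : ℕ} {P : BP n} {f g : (Fin n → Bool) → Bool}
    {μ : Perm (Fin 5)} (h : ∀ x, f x = g x) (hP : ComputesWith P f μ) :
    ComputesWith P g μ := fun x => by rw [hP x, h x]

/-- The main induction. -/
lemma main {n : ℕ} (C : BoolCircuit n) :
    ∀ μ : Perm (Fin 5), IsFiveCycle μ →
      ∃ P : BP n, P ≠ [] ∧ P.length ≤ 4 ^ C.depth ∧ ComputesWith P C.eval μ := by
  induction C with
  | lit i b =>
    intro μ _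
    refine ⟨[(i, if b then 1 else μ, if b then μ else 1)], by simp,
      by simp [BoolCircuit.depth], fun x => ?_⟩
    cases b <;> cases h : x i <;>
      simp [evalBP, evalInstr, BoolCircuit.eval, h]
  | and C₁ C₂ ih₁ ih₂ =>
    intro μ hμ
    obtain ⟨α, β, hα, hβ, hcomm⟩ := exists_commutator hμ
    obtain ⟨P₁, h₁ne, h₁l, h₁⟩ := ih₁ α hα
    obtain ⟨P₂, _, h₂l, h₂⟩ := ih₂ β hβ
    obtain ⟨P₃, _, h₃l, h₃⟩ := ih₁ α⁻¹ (fiveCycle_inv hα)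
    obtain ⟨P₄, _, h₄l, h₄⟩ := ih₂ β⁻¹ (fiveCycle_inv hβ)
    refine ⟨P₁ ++ P₂ ++ P₃ ++ P₄, by simp [h₁ne], ?_, ?_⟩
    · have e1 : (4:ℕ) ^ C₁.depth ≤ 4 ^ max C₁.depth C₂.depth :=
        Nat.pow_le_pow_right (by norm_num) (le_max_left _ _)
      have e2 : (4:ℕ) ^ C₂.depth ≤ 4 ^ max C₁.depth C₂.depth :=
        Nat.pow_le_pow_right (by norm_num) (le_max_right _ _)
      simp only [List.length_append, BoolCircuit.depth, pow_succ]
      omega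
    · rw [← hcomm]
      exact and_bp h₁ h₂ h₃ h₄
  | or C₁ C₂ ih₁ ih₂ =>
    intro μ hμ
    obtain ⟨α, β, hα, hβ, hcomm⟩ := exists_commutator (fiveCycle_inv hμ)
    obtain ⟨Q₁, h₁ne, h₁l, h₁⟩ := ih₁ α⁻¹ (fiveCycle_inv hα)
    obtain ⟨Q₂, h₂ne, h₂l, h₂⟩ := ih₂ β⁻¹ (fiveCycle_inv hβ)
    obtain ⟨Q₃, h₃ne, h₃l, h₃⟩ := ih₁ α hα
    obtain ⟨Q₄, h₄ne, h₄l, h₄⟩ := ih₂ β hβ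
    obtain ⟨R₁, hR₁l, hR₁ne, hR₁⟩ := neg_bp h₁ h₁ne
    obtain ⟨R₂, hR₂l, hR₂ne, hR₂⟩ := neg_bp h₂ h₂ne
    obtain ⟨R₃, hR₃l, hR₃ne, hR₃⟩ := neg_bp h₃ h₃ne
    obtain ⟨R₄, hR₄l, hR₄ne, hR₄⟩ := neg_bp h₄ h₄ne
    rw [inv_inv] at hR₁ hR₂
    have hand : ComputesWith (R₁ ++ R₂ ++ R₃ ++ R₄)
        (fun x => (!C₁.eval x) && (!C₂.eval x)) (α * β * α⁻¹ * β⁻¹) :=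
      and_bp hR₁ hR₂ hR₃ hR₄
    rw [hcomm] at hand
    obtain ⟨R, hRl, hRne, hR⟩ := neg_bp hand (by simp [hR₁ne])
    rw [inv_inv] at hR
    refine ⟨R, hRne, ?_, ?_⟩
    · have e1 : (4:ℕ) ^ C₁.depth ≤ 4 ^ max C₁.depth C₂.depth :=
        Nat.pow_le_pow_right (by norm_num) (le_max_left _ _)
      have e2 : (4:ℕ) ^ C₂.depth ≤ 4 ^ max C₁.depth C₂.depth :=
        Nat.pow_le_pow_right (by norm_num) (le_max_right _ _)
      simp only [BoolCircuit.depth, pow_succ]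
      rw [hRl] at *
      simp only [List.length_append, hR₁l, hR₂l, hR₃l, hR₄l] at *
      omega
    · refine computesWith_congr (fun x => ?_) hR
      simp [BoolCircuit.eval]

end BarringtonAux

/-- **Barrington's theorem.**  For every Boolean circuit `C` of depth `d` with fan-in-2
AND/OR gates (negated inputs allowed) and every 5-cycle `μ ∈ S₅`, there is a width-5
permutation branching program of length at most `4^d` that evaluates to `μ` on inputs
where `C` outputs true and to the identity on inputs where `C` outputs false. -/
theorem barrington (n : ℕ) (C : BoolCircuit n) (μ : Equiv.Perm (Fin 5))
    (hμ : IsFiveCycle μ) :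
    ∃ P : BP n, P.length ≤ 4 ^ C.depth ∧ ComputesWith P C.eval μ := by
  obtain ⟨P, _, hl, hP⟩ := BarringtonAux.main C μ hμ
  exact ⟨P, hl, hP⟩
end

section
/- If a width-5 permutation branching program P of length ℓ computes a Boolean function C with output some 5-cycle μ, then there is a width-5 permutation branching program of the same length ℓ computing C with output any prescribed 5-cycle ν. -/
/-- A width-5 permutation branching program is independent of its output 5-cycle:
if `P` (of length `ℓ`) computes `C` with output the 5-cycle `μ`, then there is a program
of the same length `ℓ` computing `C` with output any prescribed 5-cycle `ν`. -/
theorem bp_change_output {n : ℕ} (P : BP n) (C : (Fin n → Bool) → Bool)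
    (μ ν : Equiv.Perm (Fin 5)) (hμ : IsFiveCycle μ) (hν : IsFiveCycle ν)
    (h : ComputesWith P C μ) :
    ∃ P' : BP n, P'.length = P.length ∧ ComputesWith P' C ν := by
  obtain ⟨θ, hθ⟩ := isConj_iff.mp (hμ.1.isConj hν.1 (by rw [hμ.2, hν.2]))
  refine ⟨P.map (fun I => (I.1, θ * I.2.1 * θ⁻¹, θ * I.2.2 * θ⁻¹)), by simp, fun x => ?_⟩
  have key : ∀ Q : BP n,
      evalBP x (Q.map (fun I => (I.1, θ * I.2.1 * θ⁻¹, θ * I.2.2 * θ⁻¹)))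
        = θ * evalBP x Q * θ⁻¹ := by
    intro Q
    induction Q with
    | nil => simp [evalBP]
    | cons I Q ih =>
      simp only [List.map_cons, evalBP, List.prod_cons] at ih ⊢
      rw [ih]
      unfold evalInstr
      by_cases hx : x I.1 <;> simp [hx, mul_assoc]
  rw [key, h x]
  split
  · exact hθ
  · simp
end

section
/- If a width-5 permutation branching program of length ℓ computes a Boolean function C (with output some 5-cycle), then there is a width-5 permutation branching program of length ℓ computing the negation of C (with output some 5-cycle). -/
/-- If a (nonempty) width-5 permutation branching program of length `ℓ` computes `C`
with output some 5-cycle, then there is a width-5 permutation branching program of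
length `ℓ` computing the negation of `C` with output some 5-cycle. -/
theorem bp_negation {n : ℕ} (P : BP n) (hP : P ≠ []) (C : (Fin n → Bool) → Bool)
    (μ : Equiv.Perm (Fin 5)) (hμ : IsFiveCycle μ) (h : ComputesWith P C μ) :
    ∃ P' : BP n, P'.length = P.length ∧
      ∃ ν : Equiv.Perm (Fin 5), IsFiveCycle ν ∧ ComputesWith P' (fun x => !(C x)) ν := by
  rcases List.eq_nil_or_concat P with rfl | ⟨Q, I, rfl⟩
  · exact absurd rfl hP
  refine ⟨Q.concat (I.1, I.2.1 * μ⁻¹, I.2.2 * μ⁻¹), by simp, μ⁻¹,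
    ⟨hμ.1.inv, by simpa using hμ.2⟩, fun x => ?_⟩
  have hx := h x
  simp only [evalBP, List.concat_eq_append, List.map_append, List.prod_append,
    List.map_cons, List.map_nil, List.prod_cons, List.prod_nil, mul_one] at hx ⊢
  have : evalInstr x (I.1, I.2.1 * μ⁻¹, I.2.2 * μ⁻¹) = evalInstr x I * μ⁻¹ := by
    simp only [evalInstr]; split <;> rfl
  rw [this, ← mul_assoc, hx]
  by_cases hC : C x = true <;> simp [hC]
end

section
/- The equality function EQ(x,y) = [x = y] on n-bit strings has garden-hose complexity at most 3n + 1. -/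
/-!  The garden-hose model.  Vertices: `Sum.inl none` is Alice's water tap,
`Sum.inl (some i)` is Alice's end of pipe `i`, and `Sum.inr i` is Bob's end of pipe `i`. -/

abbrev GHVertex (s : ℕ) := Option (Fin s) ⊕ Fin s

/-- A partial matching on a type, given by a partner function:
each vertex is matched to at most one other vertex, symmetrically, with no self-loops. -/
structure PartialMatching (α : Type*) where
  partner : α → Option α
  symm : ∀ a b, partner a = some b → partner b = some a
  irrefl : ∀ a, partner a ≠ some a

/-- A garden-hose game with `n`-bit inputs and `s` pipes: Alice's connections `EA x`
(a partial matching on her `s` pipe-ends together with the tap) depend only on `x`,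
and Bob's connections `EB y` (a partial matching on his `s` pipe-ends) only on `y`. -/
structure GHGame (n s : ℕ) where
  EA : (Fin n → Bool) → PartialMatching (Option (Fin s))
  EB : (Fin n → Bool) → PartialMatching (Fin s)

/-- Adjacency in the graph `G(x,y)`: the `s` pipes (connecting the two ends of pipe `i`)
together with Alice's connections `EA x` and Bob's connections `EB y`. -/
def GHGame.Adj {n s : ℕ} (G : GHGame n s) (x y : Fin n → Bool) :
    GHVertex s → GHVertex s → Prop
  | Sum.inl a, Sum.inl a' => (G.EA x).partner a = some a'
  | Sum.inl a, Sum.inr b => a = some b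
  | Sum.inr b, Sum.inl a => a = some b
  | Sum.inr b, Sum.inr b' => (G.EB y).partner b = some b'

/-- `p` is the maximal path starting at the water tap in the graph `G(x,y)`:
it starts at the tap, follows edges without repeating a vertex, and cannot be extended. -/
def GHGame.IsMaximalPath {n s : ℕ} (G : GHGame n s) (x y : Fin n → Bool)
    (p : List (GHVertex s)) : Prop :=
  p.head? = some (Sum.inl (none : Option (Fin s))) ∧ p.Nodup ∧
    List.Chain' (G.Adj x y) p ∧
    ∀ v w, p.getLast? = some v → G.Adj x y v w → w ∈ p

/-- The game `G` computes `f` if for all inputs `x, y` the maximal path from the tap ends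
on Bob's side exactly when `f x y = true` (and on Alice's side exactly when `f x y = false`). -/
def GHGame.Computes {n s : ℕ} (G : GHGame n s)
    (f : (Fin n → Bool) → (Fin n → Bool) → Bool) : Prop :=
  ∀ x y, ∃ p v, G.IsMaximalPath x y p ∧ p.getLast? = some v ∧ v.isRight = f x y

namespace GHEq

abbrev Pipe (n : ℕ) := Option (Fin n × Fin 3)

def bitF (b : Bool) : Fin 3 := if b then 1 else 0

lemma bitF_ne_two (b : Bool) : bitF b ≠ 2 := by cases b <;> simp [bitF]

lemma bitF_inj {a b : Bool} : bitF a = bitF b ↔ a = b := by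
  cases a <;> cases b <;> simp [bitF]

lemma eq_bitF_not {c : Fin 3} {b : Bool} (h2 : c ≠ 2) (hb : c ≠ bitF b) : c = bitF (!b) := by
  fin_cases c <;> cases b <;> simp_all [bitF]

variable {n : ℕ}

def Dp (n : ℕ) (j : ℕ) (b : Bool) : Pipe n :=
  if h : j < n then some (⟨j, h⟩, bitF b) else none

def Fp (n : ℕ) (j : ℕ) : Pipe n :=
  if h : j < n then some (⟨j, h⟩, 2) else none

lemma Dp_eval {j : ℕ} (hj : j < n) (b : Bool) : Dp n j b = some (⟨j, hj⟩, bitF b) := dif_pos hj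
lemma Fp_eval {j : ℕ} (hj : j < n) : Fp n j = some (⟨j, hj⟩, 2) := dif_pos hj

def aliceP (x : Fin n → Bool) : Option (Pipe n) → Option (Option (Pipe n))
  | none => if h : 0 < n then some (some (Dp n 0 (x ⟨0, h⟩))) else some (some none)
  | some none => if 0 < n then none else some none
  | some (some (i, c)) =>
      if c = bitF (x i) then
        if (i : ℕ) = 0 then some none
        else some (some (Fp n ((i : ℕ) - 1)))
      else if c = 2 then
        if h : (i : ℕ) + 1 < n then some (some (Dp n ((i : ℕ) + 1) (x ⟨(i : ℕ) + 1, h⟩)))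
        else none
      else none

def bobP (y : Fin n → Bool) : Pipe n → Option (Pipe n)
  | none =>
      if h : 0 < n ∧ (n - 1) % 2 = 0 then some (Dp n (n - 1) (!(y ⟨n - 1, by omega⟩)))
      else none
  | some (i, c) =>
      if c = 2 then
        if (i : ℕ) + 1 < n then some (Dp n i (y i)) else none
      else if c = bitF (y i) then
        if (i : ℕ) + 1 < n then some (Fp n i) else none
      else
        if (i : ℕ) % 2 = 0 then
          if h : (i : ℕ) + 1 < n then some (Dp n ((i : ℕ) + 1) (!(y ⟨(i : ℕ) + 1, h⟩)))
          else some none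
        else some (Dp n ((i : ℕ) - 1) (!(y ⟨(i : ℕ) - 1, by omega⟩)))

section eval
variable (x y : Fin n → Bool)

lemma aliceP_tap (h : 0 < n) : aliceP x none = some (some (Dp n 0 (x ⟨0, h⟩))) := by
  simp [aliceP, h]

lemma aliceP_tap0 (h : ¬ 0 < n) : aliceP x none = some (some none) := by
  simp [aliceP, h]

lemma aliceP_Z (h : 0 < n) : aliceP x (some none) = none := by
  simp [aliceP, h]

lemma aliceP_Z0 (h : ¬ 0 < n) : aliceP x (some none) = some none := by
  simp [aliceP, h]

lemma aliceP_D {j : ℕ} (hj : j < n) (b : Bool) :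
    aliceP x (some (Dp n j b)) =
      if b = x ⟨j, hj⟩ then
        (if j = 0 then some none else some (some (Fp n (j - 1))))
      else none := by
  rw [Dp, dif_pos hj]
  by_cases hb : b = x ⟨j, hj⟩ <;>
    simp [aliceP, hb, bitF_inj, bitF_ne_two, (bitF_ne_two _).symm]

lemma aliceP_F {j : ℕ} (hj : j < n) :
    aliceP x (some (Fp n j)) =
      if h : j + 1 < n then some (some (Dp n (j + 1) (x ⟨j + 1, h⟩))) else none := by
  rw [Fp, dif_pos hj]
  simp [aliceP, (bitF_ne_two (x ⟨j, hj⟩)).symm]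

lemma bobP_Z :
    bobP y (none : Pipe n) =
      if h : 0 < n ∧ (n - 1) % 2 = 0 then some (Dp n (n - 1) (!(y ⟨n - 1, by omega⟩)))
      else none := rfl

lemma bobP_F {j : ℕ} (hj : j < n) :
    bobP y (Fp n j) = if j + 1 < n then some (Dp n j (y ⟨j, hj⟩)) else none := by
  rw [Fp, dif_pos hj]
  simp [bobP]

lemma bobP_D {j : ℕ} (hj : j < n) (b : Bool) :
    bobP y (Dp n j b) =
      if b = y ⟨j, hj⟩ then (if j + 1 < n then some (Fp n j) else none)
      else if j % 2 = 0 then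
        (if h : j + 1 < n then some (Dp n (j + 1) (!(y ⟨j + 1, h⟩))) else some none)
      else some (Dp n (j - 1) (!(y ⟨j - 1, by omega⟩))) := by
  rw [Dp, dif_pos hj]
  by_cases hb : b = y ⟨j, hj⟩ <;>
    simp [bobP, hb, bitF_inj, bitF_ne_two]

end eval

theorem aliceP_symm (x : Fin n → Bool) :
    ∀ a b, aliceP x a = some b → aliceP x b = some a := by
  intro a b h
  match a with
  | none =>
    by_cases h0 : 0 < n
    · rw [aliceP_tap x h0] at h
      obtain rfl : some (Dp n 0 (x ⟨0, h0⟩)) = b := by exact Option.some.inj h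
      rw [aliceP_D x h0]
      simp
    · rw [aliceP_tap0 x h0] at h
      obtain rfl : some none = b := Option.some.inj h
      rw [aliceP_Z0 x h0]
  | some none =>
    by_cases h0 : 0 < n
    · rw [aliceP_Z x h0] at h; exact absurd h (by simp)
    · rw [aliceP_Z0 x h0] at h
      obtain rfl : none = b := Option.some.inj h
      rw [aliceP_tap0 x h0]
  | some (some (i, c)) =>
    have hin : (i : ℕ) < n := i.2
    have h0 : 0 < n := by omega
    by_cases hc2 : c = 2
    · -- a is the pipe F i
      have ha : (some (i, c) : Pipe n) = Fp n (i : ℕ) := by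
        rw [Fp_eval hin, hc2]
      rw [ha] at h ⊢
      rw [aliceP_F x hin] at h
      split at h
      · next h' =>
        obtain rfl : some (Dp n ((i:ℕ)+1) (x ⟨(i:ℕ)+1, h'⟩)) = b := Option.some.inj h
        rw [aliceP_D x h']
        have e : (i : ℕ) + 1 - 1 = (i : ℕ) := by omega
        simp [e]
      · exact absurd h (by simp)
    · by_cases hc : c = bitF (x i)
      · -- a is the data pipe Alice uses at stage i
        have ha : (some (i, c) : Pipe n) = Dp n (i : ℕ) (x i) := by
          rw [Dp_eval hin, hc]
        rw [ha] at h ⊢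
        rw [aliceP_D x hin] at h
        rw [if_pos rfl] at h
        by_cases hi0 : (i : ℕ) = 0
        · rw [if_pos hi0] at h
          obtain rfl : none = b := Option.some.inj h
          rw [aliceP_tap x h0]
          have : i = ⟨0, h0⟩ := Fin.ext hi0
          rw [this]
        · rw [if_neg hi0] at h
          obtain rfl : some (Fp n ((i:ℕ)-1)) = b := Option.some.inj h
          have hj : (i : ℕ) - 1 < n := by omega
          rw [aliceP_F x hj]
          have e : (i : ℕ) - 1 + 1 = (i : ℕ) := by omega
          rw [dif_pos (by omega : (i:ℕ) - 1 + 1 < n)]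
          simp [e]
      · -- a is a data pipe Alice does not use: no partner
        have hc' : c = bitF (!(x i)) := eq_bitF_not hc2 hc
        have ha : (some (i, c) : Pipe n) = Dp n (i : ℕ) (!(x i)) := by
          rw [Dp_eval hin, hc']
        rw [ha] at h
        rw [aliceP_D x hin] at h
        rw [if_neg (by simp)] at h
        exact absurd h (by simp)

theorem bobP_symm (y : Fin n → Bool) :
    ∀ a b, bobP y a = some b → bobP y b = some a := by
  intro a b h
  match a with
  | none =>
    rw [bobP_Z] at h
    split at h
    · next hcond =>
      obtain rfl : Dp n (n-1) (!(y ⟨n-1, by omega⟩)) = b := Option.some.inj h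
      have hj : n - 1 < n := by omega
      rw [bobP_D y hj]
      rw [if_neg (by simp)]
      rw [if_pos (by omega : (n-1) % 2 = 0)]
      rw [dif_neg (by omega : ¬ (n - 1 + 1 < n))]
    · exact absurd h (by simp)
  | some (i, c) =>
    have hin : (i : ℕ) < n := i.2
    by_cases hc2 : c = 2
    · -- F pipe
      have ha : (some (i, c) : Pipe n) = Fp n (i : ℕ) := by rw [Fp_eval hin, hc2]
      rw [ha] at h ⊢
      rw [bobP_F y hin] at h
      split at h
      · next h' =>
        obtain rfl : Dp n (i : ℕ) (y ⟨i, hin⟩) = b := Option.some.inj h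
        rw [bobP_D y hin, if_pos rfl, if_pos h']
      · exact absurd h (by simp)
    · by_cases hc : c = bitF (y i)
      · -- matched data pipe
        have ha : (some (i, c) : Pipe n) = Dp n (i : ℕ) (y i) := by rw [Dp_eval hin, hc]
        rw [ha] at h ⊢
        rw [bobP_D y hin, if_pos rfl] at h
        split at h
        · next h' =>
          obtain rfl : Fp n (i : ℕ) = b := Option.some.inj h
          rw [bobP_F y hin, if_pos h']
        · exact absurd h (by simp)
      · -- mismatched data pipe
        have hc' : c = bitF (!(y i)) := eq_bitF_not hc2 hc
        have ha : (some (i, c) : Pipe n) = Dp n (i : ℕ) (!(y i)) := by rw [Dp_eval hin, hc']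
        rw [ha] at h ⊢
        rw [bobP_D y hin, if_neg (by simp)] at h
        by_cases hpar : (i : ℕ) % 2 = 0
        · rw [if_pos hpar] at h
          split at h
          · next h' =>
            obtain rfl : Dp n ((i:ℕ)+1) (!(y ⟨(i:ℕ)+1, h'⟩)) = b := Option.some.inj h
            rw [bobP_D y h', if_neg (by simp), if_neg (by omega)]
            have e : (i : ℕ) + 1 - 1 = (i : ℕ) := by omega
            simp [e]
          · next h' =>
            obtain rfl : none = b := Option.some.inj h
            rw [bobP_Z]
            rw [dif_pos (by constructor <;> omega)]
            have e : n - 1 = (i : ℕ) := by omega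
            simp [e]
        · rw [if_neg hpar] at h
          obtain rfl : Dp n ((i:ℕ)-1) (!(y ⟨(i:ℕ)-1, by omega⟩)) = b := Option.some.inj h
          have hj : (i : ℕ) - 1 < n := by omega
          rw [bobP_D y hj, if_neg (by simp), if_pos (by omega : ((i:ℕ)-1) % 2 = 0)]
          rw [dif_pos (by omega : (i:ℕ) - 1 + 1 < n)]
          have e : (i : ℕ) - 1 + 1 = (i : ℕ) := by omega
          simp [e]

theorem aliceP_irrefl (x : Fin n → Bool) : ∀ a, aliceP x a ≠ some a := by
  intro a h
  match a with
  | none =>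
    by_cases h0 : 0 < n
    · rw [aliceP_tap x h0] at h; simp at h
    · rw [aliceP_tap0 x h0] at h; simp at h
  | some none =>
    by_cases h0 : 0 < n
    · rw [aliceP_Z x h0] at h; simp at h
    · rw [aliceP_Z0 x h0] at h; simp at h
  | some (some (i, c)) =>
    have hin : (i : ℕ) < n := i.2
    by_cases hc2 : c = 2
    · rw [show (some (i,c) : Pipe n) = Fp n (i:ℕ) from by rw [Fp_eval hin, hc2],
        aliceP_F x hin] at h
      split at h
      · next h' =>
        rw [Dp_eval h'] at h
        rw [Fp_eval hin] at h
        simp [Prod.ext_iff, Fin.ext_iff] at h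
      · simp at h
    · by_cases hc : c = bitF (x i)
      · rw [show (some (i,c) : Pipe n) = Dp n (i:ℕ) (x i) from by rw [Dp_eval hin, hc],
          aliceP_D x hin, if_pos rfl] at h
        by_cases hi0 : (i:ℕ) = 0
        · rw [if_pos hi0] at h
          rw [Dp_eval hin] at h; simp at h
        · rw [if_neg hi0] at h
          rw [Dp_eval hin, Fp_eval (by omega : (i:ℕ) - 1 < n)] at h
          simp [Prod.ext_iff, Fin.ext_iff] at h
          omega
      · rw [show (some (i,c) : Pipe n) = Dp n (i:ℕ) (!(x i)) from by
            rw [Dp_eval hin, eq_bitF_not hc2 hc],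
          aliceP_D x hin, if_neg (by simp)] at h
        simp at h

theorem bobP_irrefl (y : Fin n → Bool) : ∀ a, bobP y a ≠ some a := by
  intro a h
  match a with
  | none =>
    rw [bobP_Z] at h
    split at h
    · next hcond =>
      rw [Dp_eval (by omega : n - 1 < n)] at h
      simp at h
    · simp at h
  | some (i, c) =>
    have hin : (i : ℕ) < n := i.2
    by_cases hc2 : c = 2
    · rw [show (some (i,c) : Pipe n) = Fp n (i:ℕ) from by rw [Fp_eval hin, hc2],
        bobP_F y hin] at h
      split at h
      · rw [Dp_eval hin, Fp_eval hin] at h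
        simp at h
        exact bitF_ne_two _ h
      · simp at h
    · by_cases hc : c = bitF (y i)
      · rw [show (some (i,c) : Pipe n) = Dp n (i:ℕ) (y i) from by rw [Dp_eval hin, hc],
          bobP_D y hin, if_pos rfl] at h
        split at h
        · rw [Dp_eval hin, Fp_eval hin] at h
          simp at h
          exact bitF_ne_two _ h.symm
        · simp at h
      · rw [show (some (i,c) : Pipe n) = Dp n (i:ℕ) (!(y i)) from by
            rw [Dp_eval hin, eq_bitF_not hc2 hc],
          bobP_D y hin, if_neg (by simp)] at h
        by_cases hpar : (i : ℕ) % 2 = 0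
        · rw [if_pos hpar] at h
          split at h
          · next h' =>
            rw [Dp_eval h', Dp_eval hin] at h
            simp [Prod.ext_iff, Fin.ext_iff] at h
          · rw [Dp_eval hin] at h; simp at h
        · rw [if_neg hpar] at h
          rw [Dp_eval (by omega : (i:ℕ) - 1 < n), Dp_eval hin] at h
          simp [Prod.ext_iff, Fin.ext_iff] at h
          omega

def aliceM (x : Fin n → Bool) : PartialMatching (Option (Pipe n)) :=
  ⟨aliceP x, aliceP_symm x, aliceP_irrefl x⟩

def bobM (y : Fin n → Bool) : PartialMatching (Pipe n) :=
  ⟨bobP y, bobP_symm y, bobP_irrefl y⟩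

abbrev V (n : ℕ) := Option (Pipe n) ⊕ Pipe n

def Adj0 (x y : Fin n → Bool) : V n → V n → Prop
  | .inl a, .inl a' => aliceP x a = some a'
  | .inl a, .inr b => a = some b
  | .inr b, .inl a => a = some b
  | .inr b, .inr b' => bobP y b = some b'

variable {x y : Fin n → Bool}

@[simp] lemma adj0_ll {a a'} : Adj0 x y (.inl a) (.inl a') ↔ aliceP x a = some a' := Iff.rfl
@[simp] lemma adj0_lr {a b} : Adj0 x y (.inl a) (.inr b) ↔ a = some b := Iff.rfl
@[simp] lemma adj0_rl {b a} : Adj0 x y (.inr b) (.inl a) ↔ a = some b := Iff.rfl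
@[simp] lemma adj0_rr {b b'} : Adj0 x y (.inr b) (.inr b') ↔ bobP y b = some b' := Iff.rfl

def mapPM {α β : Type*} (e : α ≃ β) (M : PartialMatching α) : PartialMatching β where
  partner b := (M.partner (e.symm b)).map e
  symm := by
    intro a b h
    rcases Option.map_eq_some_iff.1 h with ⟨c, hc, rfl⟩
    rw [e.symm_apply_apply, M.symm _ _ hc]
    simp
  irrefl := by
    intro a h
    rcases Option.map_eq_some_iff.1 h with ⟨c, hc, he⟩
    apply M.irrefl (e.symm a)
    rw [hc]
    congr 1
    rw [← he, e.symm_apply_apply]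

def theGame (n s : ℕ) (e : Pipe n ≃ Fin s) : GHGame n s where
  EA x := mapPM (Equiv.optionCongr e) (aliceM x)
  EB y := mapPM e (bobM y)

def mapV {s : ℕ} (e : Pipe n ≃ Fin s) : V n ≃ GHVertex s :=
  Equiv.sumCongr (Equiv.optionCongr e) e

lemma adj_mapV {s : ℕ} (e : Pipe n ≃ Fin s) (u v : V n) :
    (theGame n s e).Adj x y (mapV e u) (mapV e v) ↔ Adj0 x y u v := by
  rcases u with a | b <;> rcases v with a' | b' <;>
    simp [theGame, mapV, GHGame.Adj, Adj0, mapPM, aliceM, bobM, Equiv.symm_apply_apply,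
      Option.map_eq_some_iff, (Equiv.optionCongr e).injective.eq_iff, e.injective.eq_iff,
      (Option.map_injective e.injective).eq_iff, Equiv.optionCongr_apply,
      ← Equiv.optionCongr_symm]

lemma computes_of_adj0 {s : ℕ} (e : Pipe n ≃ Fin s)
    (f : (Fin n → Bool) → (Fin n → Bool) → Bool)
    (H : ∀ x y : Fin n → Bool, ∃ (p : List (V n)) (v : V n),
      p.head? = some (Sum.inl none) ∧ p.Nodup ∧ List.Chain' (Adj0 x y) p ∧
      p.getLast? = some v ∧ (∀ w, Adj0 x y v w → w ∈ p) ∧ v.isRight = f x y) :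
    (theGame n s e).Computes f := by
  intro x y
  obtain ⟨p, v, hhead, hnodup, hchain, hlast, hmax, hright⟩ := H x y
  refine ⟨p.map (mapV e), mapV e v, ⟨?_, ?_, ?_, ?_⟩, ?_, ?_⟩
  · rw [List.head?_map, hhead]
    simp [mapV]
  · exact hnodup.map (mapV e).injective
  · rw [List.Chain', List.isChain_map]
    exact List.IsChain.imp (fun a b hab => (adj_mapV e a b).2 hab) hchain
  · intro v' w hl hadj
    rw [List.getLast?_map, hlast] at hl
    obtain rfl : mapV e v = v' := Option.some.inj hl
    have hw : w = mapV e ((mapV e).symm w) := ((mapV e).apply_symm_apply w).symm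
    rw [hw] at hadj ⊢
    rw [adj_mapV e] at hadj
    exact List.mem_map_of_mem (hmax _ hadj)
  · rw [List.getLast?_map, hlast]; rfl
  · rw [← hright]
    rcases v with a | b <;> simp [mapV]

/-! ### Path machinery -/

def AV (p : Pipe n) : V n := Sum.inl (some p)
def BV (p : Pipe n) : V n := Sum.inr p
def tapV (n : ℕ) : V n := Sum.inl none

def Xb (x : Fin n → Bool) (j : ℕ) : Bool := if h : j < n then x ⟨j, h⟩ else false

lemma Xb_eq (x : Fin n → Bool) {j : ℕ} (h : j < n) : Xb x j = x ⟨j, h⟩ := dif_pos h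

def blockL (x : Fin n → Bool) (j : ℕ) : List (V n) :=
  [AV (Dp n j (Xb x j)), BV (Dp n j (Xb x j)), BV (Fp n j), AV (Fp n j)]

def pre (x : Fin n → Bool) : ℕ → List (V n)
  | 0 => [tapV n]
  | j + 1 => pre x j ++ blockL x j

def entry (n : ℕ) (i : ℕ) : V n := if i = 0 then tapV n else AV (Fp n (i - 1))

lemma pre_head (x : Fin n → Bool) : ∀ i, (pre x i).head? = some (tapV n)
  | 0 => rfl
  | j + 1 => by rw [pre, List.head?_append, pre_head x j]; rfl

lemma pre_getLast (x : Fin n → Bool) : ∀ i, (pre x i).getLast? = some (entry n i)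
  | 0 => by simp [pre, entry, tapV]
  | j + 1 => by
      rw [pre, List.getLast?_append]
      simp [blockL, entry]

lemma alice_entry_adj {x y : Fin n → Bool} {j : ℕ} (hj : j < n) :
    Adj0 x y (entry n j) (AV (Dp n j (Xb x j))) := by
  rcases Nat.eq_zero_or_pos j with rfl | hj0
  · unfold entry
    rw [if_pos rfl]
    show aliceP x none = _
    rw [aliceP_tap x hj, Xb_eq x hj]
  · unfold entry
    rw [if_neg (by omega : ¬ j = 0)]
    show aliceP x (some (Fp n (j - 1))) = _
    rw [aliceP_F x (by omega : j - 1 < n), dif_pos (by omega : j - 1 + 1 < n)]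
    have e : j - 1 + 1 = j := by omega
    simp [e, Xb_eq x hj]

lemma chain'_pre {x y : Fin n → Bool} :
    ∀ i, i < n → (∀ k, k < i → Xb x k = Xb y k) → List.Chain' (Adj0 x y) (pre x i)
  | 0, _, _ => by simp [pre, List.Chain']
  | j + 1, hj, hm => by
    rw [pre, List.Chain', List.isChain_append]
    have hjn : j < n := by omega
    refine ⟨chain'_pre j hjn (fun k hk => hm k (by omega)), ?_, ?_⟩
    · -- chain within the block
      refine List.isChain_cons_cons.2 ⟨rfl, List.isChain_cons_cons.2 ⟨?_, List.isChain_cons_cons.2 ⟨rfl, ?_⟩⟩⟩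
      · show bobP y (Dp n j (Xb x j)) = some (Fp n j)
        rw [hm j (by omega), Xb_eq y hjn, bobP_D y hjn, if_pos rfl, if_pos hj]
      · simp
    · intro a ha b hb
      rw [pre_getLast] at ha
      obtain rfl : entry n j = a := Option.some.inj ha
      obtain rfl : AV (Dp n j (Xb x j)) = b := Option.some.inj hb
      exact alice_entry_adj hjn

lemma mem_pre {x : Fin n → Bool} {v : V n} :
    ∀ {i}, v ∈ pre x i → v = tapV n ∨ ∃ j, j < i ∧ v ∈ blockL x j := by
  intro i
  induction i with
  | zero => intro hv; simp [pre] at hv; exact Or.inl hv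
  | succ j ih =>
    intro hv
    rw [pre, List.mem_append] at hv
    rcases hv with hv | hv
    · rcases ih hv with h | ⟨k, hk, hmem⟩
      · exact Or.inl h
      · exact Or.inr ⟨k, by omega, hmem⟩
    · exact Or.inr ⟨j, by omega, hv⟩

def stOf : V n → Option ℕ
  | .inl none => none
  | .inl (some none) => none
  | .inl (some (some (k, _))) => some k
  | .inr none => none
  | .inr (some (k, _)) => some k

@[simp] lemma stOf_AV_D {j : ℕ} (hj : j < n) (b : Bool) : stOf (AV (Dp n j b)) = some j := by
  rw [Dp_eval hj]; rfl
@[simp] lemma stOf_BV_D {j : ℕ} (hj : j < n) (b : Bool) : stOf (BV (Dp n j b)) = some j := by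
  rw [Dp_eval hj]; rfl
@[simp] lemma stOf_AV_F {j : ℕ} (hj : j < n) : stOf (AV (Fp n j)) = some j := by
  rw [Fp_eval hj]; rfl
@[simp] lemma stOf_BV_F {j : ℕ} (hj : j < n) : stOf (BV (Fp n j)) = some j := by
  rw [Fp_eval hj]; rfl

lemma stOf_blockL {x : Fin n → Bool} {j : ℕ} (hj : j < n) {v : V n}
    (hv : v ∈ blockL x j) : stOf v = some j := by
  simp only [blockL, List.mem_cons, List.mem_singleton, List.not_mem_nil, or_false] at hv
  rcases hv with rfl | rfl | rfl | rfl
  · exact stOf_AV_D hj _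
  · exact stOf_BV_D hj _
  · exact stOf_BV_F hj
  · exact stOf_AV_F hj

lemma stOf_pre {x : Fin n → Bool} {i : ℕ} (hi : i ≤ n) {v : V n} (hv : v ∈ pre x i) :
    v = tapV n ∨ ∃ j, j < i ∧ stOf v = some j := by
  rcases mem_pre hv with h | ⟨j, hj, hmem⟩
  · exact Or.inl h
  · exact Or.inr ⟨j, hj, stOf_blockL (by omega) hmem⟩

lemma not_mem_pre {x : Fin n → Bool} {i : ℕ} (hi : i ≤ n) {v : V n}
    (h1 : v ≠ tapV n) (h2 : ∀ j, stOf v = some j → i ≤ j) : v ∉ pre x i := by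
  intro hv
  rcases stOf_pre hi hv with h | ⟨j, hj, hst⟩
  · exact h1 h
  · exact absurd (h2 j hst) (by omega)

lemma nodup_blockL {x : Fin n → Bool} {j : ℕ} (hj : j < n) : (blockL x j).Nodup := by
  simp [blockL, AV, BV, Dp_eval hj, Fp_eval hj, Prod.ext_iff, bitF_ne_two]

lemma nodup_pre {x : Fin n → Bool} : ∀ i, i ≤ n → (pre x i).Nodup
  | 0, _ => by simp [pre]
  | j + 1, hj => by
    rw [pre, List.nodup_append]
    refine ⟨nodup_pre j (by omega), nodup_blockL (by omega), ?_⟩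
    intro a ha b hb hab; subst hab
    have hst := stOf_blockL (x := x) (by omega : j < n) hb
    rcases stOf_pre (by omega : j ≤ n) ha with rfl | ⟨k, hk, hst'⟩
    · rw [show stOf (tapV n) = none from rfl] at hst; simp at hst
    · rw [hst'] at hst; simp at hst; omega

lemma max_of_alice_free {x y : Fin n → Bool} {p : List (V n)} {q : Pipe n}
    (hfree : aliceP x (some q) = none) (hmem : BV q ∈ p) :
    ∀ w, Adj0 x y (AV q) w → w ∈ p := by
  intro w hw
  rcases w with a | b
  · rw [show Adj0 x y (AV q) (Sum.inl a) = (aliceP x (some q) = some a) from rfl, hfree] at hw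
    exact absurd hw (by simp)
  · obtain rfl : b = q := by
      have : (some q : Option (Pipe n)) = some b := hw
      exact (Option.some.inj this).symm
    exact hmem

lemma max_of_bob_free {x y : Fin n → Bool} {p : List (V n)} {q : Pipe n}
    (hfree : bobP y q = none) (hmem : AV q ∈ p) :
    ∀ w, Adj0 x y (BV q) w → w ∈ p := by
  intro w hw
  rcases w with a | b
  · obtain rfl : a = some q := hw
    exact hmem
  · rw [show Adj0 x y (BV q) (Sum.inr b) = (bobP y q = some b) from rfl, hfree] at hw
    exact absurd hw (by simp)

lemma not_mem_blockL {x : Fin n → Bool} {j : ℕ} {v : V n}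
    (h1 : v ≠ AV (Dp n j (Xb x j))) (h2 : v ≠ BV (Dp n j (Xb x j)))
    (h3 : v ≠ BV (Fp n j)) (h4 : v ≠ AV (Fp n j)) : v ∉ blockL x j := by
  simp only [blockL, List.mem_cons, List.not_mem_nil, or_false, List.mem_singleton]
  tauto

lemma not_mem_pre' {x : Fin n → Bool} {i : ℕ} {v : V n}
    (h1 : v ≠ tapV n) (h2 : ∀ j, j < i → v ∉ blockL x j) : v ∉ pre x i := by
  intro hv
  rcases mem_pre hv with h | ⟨j, hj, hmem⟩
  · exact h1 h
  · exact h2 j hj hmem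

lemma bool_ne_eq {a b : Bool} (h : a ≠ b) : a = !b := by
  cases a <;> cases b <;> simp_all

lemma main (x y : Fin n → Bool) :
    ∃ (p : List (V n)) (v : V n),
      p.head? = some (Sum.inl none) ∧ p.Nodup ∧ List.Chain' (Adj0 x y) p ∧
      p.getLast? = some v ∧ (∀ w, Adj0 x y v w → w ∈ p) ∧ v.isRight = decide (x = y) := by
  by_cases hxy : x = y
  · subst hxy
    rcases Nat.eq_zero_or_pos n with hn0 | h0
    · -- n = 0 : the tap is connected to the single pipe Z
      subst hn0
      refine ⟨[tapV 0, AV none, BV none], BV none, rfl, ?_, ?_, by simp, ?_, by simp [BV]⟩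
      · simp [tapV, AV, BV]
      · refine List.isChain_cons_cons.2 ⟨?_, List.isChain_cons_cons.2 ⟨?_, by simp⟩⟩
        · show aliceP x none = some (some none)
          rw [aliceP_tap0 x (by omega)]
        · show (some none : Option (Pipe 0)) = some none
          rfl
      · exact max_of_bob_free (by rw [bobP_Z, dif_neg (by omega)]) (by simp)
    · -- x = y, n > 0 : the full matched path, ending at Bob's end of the last data pipe
      have hn1 : n - 1 < n := by omega
      refine ⟨pre x (n-1) ++ [AV (Dp n (n-1) (Xb x (n-1))), BV (Dp n (n-1) (Xb x (n-1)))],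
        BV (Dp n (n-1) (Xb x (n-1))), ?_, ?_, ?_, ?_, ?_, by simp [BV]⟩
      · rw [List.head?_append, pre_head]; rfl
      · rw [List.nodup_append]
        refine ⟨nodup_pre (n-1) (by omega), ?_, ?_⟩
        · simp [AV, BV]
        · intro a ha b hb hab; subst hab
          simp only [List.mem_cons, List.mem_singleton, List.not_mem_nil, or_false] at hb
          rcases hb with rfl | rfl
          · exact not_mem_pre (by omega) (by simp [AV, tapV, Dp_eval hn1])
              (fun j hj => by rw [stOf_AV_D hn1] at hj; simp only [Option.some.injEq] at hj; omega) ha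
          · exact not_mem_pre (by omega) (by simp [BV, tapV])
              (fun j hj => by rw [stOf_BV_D hn1] at hj; simp only [Option.some.injEq] at hj; omega) ha
      · rw [List.Chain', List.isChain_append]
        refine ⟨chain'_pre (n-1) hn1 (fun _ _ => rfl), ?_, ?_⟩
        · exact List.isChain_cons_cons.2 ⟨rfl, by simp⟩
        · intro a ha b hb
          rw [pre_getLast] at ha
          obtain rfl : entry n (n-1) = a := Option.some.inj ha
          obtain rfl : AV (Dp n (n-1) (Xb x (n-1))) = b := Option.some.inj (by simpa using hb)
          exact alice_entry_adj hn1
      · rw [List.getLast?_append]; rfl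
      · refine max_of_bob_free ?_ (by simp)
        rw [Xb_eq x hn1, bobP_D x hn1, if_pos rfl, if_neg (by omega)]
  · -- x ≠ y : find the first mismatch
    have hne : ∃ j, Xb x j ≠ Xb y j := by
      rcases Function.ne_iff.1 hxy with ⟨k, hk⟩
      exact ⟨k, by rw [Xb_eq x k.2, Xb_eq y k.2]; simpa using hk⟩
    set i := Nat.find hne with hidef
    have hi : Xb x i ≠ Xb y i := Nat.find_spec hne
    have hmin : ∀ k, k < i → Xb x k = Xb y k := fun k hk => not_not.1 (Nat.find_min hne hk)
    have hin : i < n := by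
      by_contra h
      exact hi (by rw [Xb, dif_neg (by omega), Xb, dif_neg (by omega)])
    have hd : decide (x = y) = false := by simp [hxy]
    rw [hd]
    have hXx : Xb x i = !(Xb y i) := bool_ne_eq hi
    have hbobDi : bobP y (Dp n i (Xb x i)) =
        (if i % 2 = 0 then
          (if h : i + 1 < n then some (Dp n (i+1) (!(y ⟨i+1, h⟩))) else some none)
        else some (Dp n (i-1) (!(y ⟨i-1, by omega⟩)))) := by
      rw [bobP_D y hin, if_neg (by rw [← Xb_eq y hin]; exact hi)]
    -- facts about the common middle part M
    set M : List (V n) := pre x i ++ [AV (Dp n i (Xb x i)), BV (Dp n i (Xb x i))] with hMdef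
    have hM_head : M.head? = some (tapV n) := by
      rw [hMdef, List.head?_append, pre_head]; rfl
    have hM_chain : List.Chain' (Adj0 x y) M := by
      rw [hMdef, List.Chain', List.isChain_append]
      refine ⟨chain'_pre i hin hmin, List.isChain_cons_cons.2 ⟨rfl, by simp⟩, ?_⟩
      intro a ha b hb
      rw [pre_getLast] at ha
      obtain rfl : entry n i = a := Option.some.inj ha
      obtain rfl : AV (Dp n i (Xb x i)) = b := Option.some.inj (by simpa using hb)
      exact alice_entry_adj hin
    have hM_last : M.getLast? = some (BV (Dp n i (Xb x i))) := by
      rw [hMdef, List.getLast?_append]; rfl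
    have hM_nodup : M.Nodup := by
      rw [hMdef, List.nodup_append]
      refine ⟨nodup_pre i (by omega), by simp [AV, BV], ?_⟩
      intro a ha b hb hab; subst hab
      simp only [List.mem_cons, List.mem_singleton, List.not_mem_nil, or_false] at hb
      rcases hb with rfl | rfl
      · exact not_mem_pre (by omega) (by simp [AV, tapV, Dp_eval hin])
          (fun j hj => by rw [stOf_AV_D hin] at hj; simp only [Option.some.injEq] at hj; omega) ha
      · exact not_mem_pre (by omega) (by simp [BV, tapV])
          (fun j hj => by rw [stOf_BV_D hin] at hj; simp only [Option.some.injEq] at hj; omega) ha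
    have hM_mem : ∀ a ∈ M, a = tapV n ∨ (∃ j, j < i ∧ a ∈ blockL x j) ∨
        a = AV (Dp n i (Xb x i)) ∨ a = BV (Dp n i (Xb x i)) := by
      intro a ha
      rw [hMdef, List.mem_append] at ha
      rcases ha with ha | ha
      · rcases mem_pre ha with h | ⟨j, hj, hmem⟩
        · exact Or.inl h
        · exact Or.inr (Or.inl ⟨j, hj, hmem⟩)
      · simp only [List.mem_cons, List.mem_singleton, List.not_mem_nil, or_false] at ha
        rcases ha with rfl | rfl
        · exact Or.inr (Or.inr (Or.inl rfl))
        · exact Or.inr (Or.inr (Or.inr rfl))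
    by_cases hpar : i % 2 = 0
    · rw [if_pos hpar] at hbobDi
      by_cases h1 : i + 1 < n
      · rw [dif_pos h1] at hbobDi
        have hyi1 : y ⟨i+1, h1⟩ = Xb y (i+1) := (Xb_eq y h1).symm
        have hne1 : ¬ (i = i + 1) := by omega
        have hne1' : ¬ (i + 1 = i) := by omega
        by_cases h2 : Xb x (i+1) = Xb y (i+1)
        · -- A1 : the next stage matches, water dies at Alice's unused data pipe of stage i+1
          refine ⟨M ++ [BV (Dp n (i+1) (!(Xb x (i+1)))), AV (Dp n (i+1) (!(Xb x (i+1))))],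
            AV (Dp n (i+1) (!(Xb x (i+1)))), ?_, ?_, ?_, ?_, ?_, by simp [AV]⟩
          · rw [List.head?_append, hM_head]; rfl
          · rw [List.nodup_append]
            refine ⟨hM_nodup, by simp [AV, BV], ?_⟩
            intro a ha b hb hab; subst hab
            simp only [List.mem_cons, List.mem_singleton, List.not_mem_nil, or_false] at hb
            rcases hM_mem a ha with rfl | ⟨j, hj, hmem⟩ | rfl | rfl
            · simp [tapV, AV, BV] at hb
            · have hst := stOf_blockL (show j < n by omega) hmem
              rcases hb with rfl | rfl
              · rw [stOf_BV_D h1] at hst; simp only [Option.some.injEq] at hst; omega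
              · rw [stOf_AV_D h1] at hst; simp only [Option.some.injEq] at hst; omega
            · simp [AV, BV, Dp_eval hin, Dp_eval h1, Prod.ext_iff, Fin.ext_iff, hne1] at hb
            · simp [AV, BV, Dp_eval hin, Dp_eval h1, Prod.ext_iff, Fin.ext_iff, hne1] at hb
          · rw [List.Chain', List.isChain_append]
            refine ⟨hM_chain, List.isChain_cons_cons.2 ⟨rfl, by simp⟩, ?_⟩
            intro a ha b hb
            rw [hM_last] at ha
            obtain rfl : BV (Dp n i (Xb x i)) = a := Option.some.inj ha
            obtain rfl : BV (Dp n (i+1) (!(Xb x (i+1)))) = b := Option.some.inj (by simpa using hb)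
            show bobP y _ = _
            rw [hbobDi, hyi1, ← h2]
          · rw [List.getLast?_append]; rfl
          · refine max_of_alice_free ?_ (by simp)
            rw [aliceP_D x h1, if_neg (by rw [← Xb_eq x h1]; simp)]
        · -- A2 : the next stage also mismatches, water flows back through F i and dies
          have hx1 : Xb x (i+1) = !(Xb y (i+1)) := bool_ne_eq h2
          have hyx : Xb y i = !(Xb x i) := by rw [hXx]; simp
          refine ⟨M ++ [BV (Dp n (i+1) (Xb x (i+1))), AV (Dp n (i+1) (Xb x (i+1))),
              AV (Fp n i), BV (Fp n i), BV (Dp n i (Xb y i)), AV (Dp n i (Xb y i))],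
            AV (Dp n i (Xb y i)), ?_, ?_, ?_, ?_, ?_, by simp [AV]⟩
          · rw [List.head?_append, hM_head]; rfl
          · rw [List.nodup_append]
            refine ⟨hM_nodup, ?_, ?_⟩
            · simp [AV, BV, Dp_eval hin, Dp_eval h1, Fp_eval hin, Prod.ext_iff, Fin.ext_iff,
                hne1, hne1', bitF_ne_two, bitF_inj, (bitF_ne_two _).symm]
            · intro a ha b hb hab; subst hab
              simp only [List.mem_cons, List.mem_singleton, List.not_mem_nil, or_false] at hb
              rcases hM_mem a ha with rfl | ⟨j, hj, hmem⟩ | rfl | rfl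
              · simp [tapV, AV, BV] at hb
              · have hst := stOf_blockL (show j < n by omega) hmem
                rcases hb with rfl | rfl | rfl | rfl | rfl | rfl
                · rw [stOf_BV_D h1] at hst; simp only [Option.some.injEq] at hst; omega
                · rw [stOf_AV_D h1] at hst; simp only [Option.some.injEq] at hst; omega
                · rw [stOf_AV_F hin] at hst; simp only [Option.some.injEq] at hst; omega
                · rw [stOf_BV_F hin] at hst; simp only [Option.some.injEq] at hst; omega
                · rw [stOf_BV_D hin] at hst; simp only [Option.some.injEq] at hst; omega
                · rw [stOf_AV_D hin] at hst; simp only [Option.some.injEq] at hst; omega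
              · simp only [AV, BV, Dp_eval hin, Dp_eval h1, Fp_eval hin, Sum.inl.injEq,
                  Sum.inr.injEq, Option.some.injEq, Prod.ext_iff, List.mem_cons,
                  List.not_mem_nil, or_false, reduceCtorEq, false_or, false_and, hne1,
                  Fin.mk.injEq, and_false, or_self] at hb
                simp [bitF_inj, bitF_ne_two, hi] at hb
              · simp only [AV, BV, Dp_eval hin, Dp_eval h1, Fp_eval hin, Sum.inl.injEq,
                  Sum.inr.injEq, Option.some.injEq, Prod.ext_iff, List.mem_cons,
                  List.not_mem_nil, or_false, reduceCtorEq, false_or, false_and, hne1,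
                  Fin.mk.injEq, and_false, or_self] at hb
                simp [bitF_inj, bitF_ne_two, hi] at hb
          · rw [List.Chain', List.isChain_append]
            refine ⟨hM_chain, ?_, ?_⟩
            · refine List.isChain_cons_cons.2 ⟨rfl, List.isChain_cons_cons.2 ⟨?_, List.isChain_cons_cons.2 ⟨rfl,
                List.isChain_cons_cons.2 ⟨?_, List.isChain_cons_cons.2 ⟨rfl, by simp⟩⟩⟩⟩⟩
              · show aliceP x _ = _
                rw [aliceP_D x h1, if_pos (Xb_eq x h1), if_neg (by omega)]
                have e : i + 1 - 1 = i := by omega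
                rw [e]
              · show bobP y _ = _
                rw [bobP_F y hin, if_pos h1, Xb_eq y hin]
            · intro a ha b hb
              rw [hM_last] at ha
              obtain rfl : BV (Dp n i (Xb x i)) = a := Option.some.inj ha
              obtain rfl : BV (Dp n (i+1) (Xb x (i+1))) = b := Option.some.inj (by simpa using hb)
              show bobP y _ = _
              rw [hbobDi, hyi1, ← hx1]
          · rw [List.getLast?_append]; rfl
          · refine max_of_alice_free ?_ (by simp)
            rw [aliceP_D x hin, if_neg (by rw [← Xb_eq x hin, hyx]; simp)]
      · -- B : even mismatch at the last stage, water dies at Alice's end of pipe Z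
        rw [dif_neg h1] at hbobDi
        refine ⟨M ++ [BV (none : Pipe n), AV (none : Pipe n)], AV (none : Pipe n),
          ?_, ?_, ?_, ?_, ?_, by simp [AV]⟩
        · rw [List.head?_append, hM_head]; rfl
        · rw [List.nodup_append]
          refine ⟨hM_nodup, by simp [AV, BV], ?_⟩
          intro a ha b hb hab; subst hab
          simp only [List.mem_cons, List.mem_singleton, List.not_mem_nil, or_false] at hb
          rcases hM_mem a ha with rfl | ⟨j, hj, hmem⟩ | rfl | rfl
          · simp [tapV, AV, BV] at hb
          · have hst := stOf_blockL (show j < n by omega) hmem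
            rcases hb with rfl | rfl
            · rw [show stOf (BV (none : Pipe n)) = none from rfl] at hst; simp at hst
            · rw [show stOf (AV (none : Pipe n)) = none from rfl] at hst; simp at hst
          · simp [AV, BV, Dp_eval hin] at hb
          · simp [AV, BV, Dp_eval hin] at hb
        · rw [List.Chain', List.isChain_append]
          refine ⟨hM_chain, List.isChain_cons_cons.2 ⟨rfl, by simp⟩, ?_⟩
          intro a ha b hb
          rw [hM_last] at ha
          obtain rfl : BV (Dp n i (Xb x i)) = a := Option.some.inj ha
          obtain rfl : BV (none : Pipe n) = b := Option.some.inj (by simpa using hb)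
          exact hbobDi
        · rw [List.getLast?_append]; rfl
        · refine max_of_alice_free ?_ (by simp)
          exact aliceP_Z x (by omega)
    · -- C : odd mismatch, water flows to the (matched) previous stage and dies there
      rw [if_neg hpar] at hbobDi
      have hi0 : 0 < i := by omega
      have hi1n : i - 1 < n := by omega
      have hnei : ¬ (i - 1 = i) := by omega
      have hnei' : ¬ (i = i - 1) := by omega
      have hyx1 : y ⟨i-1, hi1n⟩ = Xb x (i-1) := by
        rw [← Xb_eq y hi1n]
        exact (hmin (i-1) (by omega)).symm
      refine ⟨M ++ [BV (Dp n (i-1) (!(Xb x (i-1)))), AV (Dp n (i-1) (!(Xb x (i-1))))],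
        AV (Dp n (i-1) (!(Xb x (i-1)))), ?_, ?_, ?_, ?_, ?_, by simp [AV]⟩
      · rw [List.head?_append, hM_head]; rfl
      · rw [List.nodup_append]
        refine ⟨hM_nodup, by simp [AV, BV], ?_⟩
        intro a ha b hb hab; subst hab
        simp only [List.mem_cons, List.mem_singleton, List.not_mem_nil, or_false] at hb
        rcases hM_mem a ha with rfl | ⟨j, hj, hmem⟩ | rfl | rfl
        · simp [tapV, AV, BV] at hb
        · have hjn : j < n := by omega
          have hst := stOf_blockL hjn hmem
          rcases hb with rfl | rfl
          · rw [stOf_BV_D hi1n] at hst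
            simp only [Option.some.injEq] at hst
            obtain rfl : j = i - 1 := hst.symm
            simp [blockL, BV, AV, Dp_eval hi1n, Fp_eval hi1n, Prod.ext_iff,
              bitF_inj, bitF_ne_two] at hmem
          · rw [stOf_AV_D hi1n] at hst
            simp only [Option.some.injEq] at hst
            obtain rfl : j = i - 1 := hst.symm
            simp [blockL, BV, AV, Dp_eval hi1n, Fp_eval hi1n, Prod.ext_iff,
              bitF_inj, bitF_ne_two] at hmem
        · simp [AV, BV, Dp_eval hin, Dp_eval hi1n, Prod.ext_iff, Fin.ext_iff, hnei, hnei'] at hb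
        · simp [AV, BV, Dp_eval hin, Dp_eval hi1n, Prod.ext_iff, Fin.ext_iff, hnei, hnei'] at hb
      · rw [List.Chain', List.isChain_append]
        refine ⟨hM_chain, List.isChain_cons_cons.2 ⟨rfl, by simp⟩, ?_⟩
        intro a ha b hb
        rw [hM_last] at ha
        obtain rfl : BV (Dp n i (Xb x i)) = a := Option.some.inj ha
        obtain rfl : BV (Dp n (i-1) (!(Xb x (i-1)))) = b := Option.some.inj (by simpa using hb)
        show bobP y _ = _
        rw [hbobDi, hyx1]

      · rw [List.getLast?_append]; rfl
      · refine max_of_alice_free ?_ (by simp)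
        rw [aliceP_D x hi1n, if_neg (by rw [← Xb_eq x hi1n]; simp)]


end GHEq

/-- The equality function on `n`-bit strings has garden-hose complexity at most `3n + 1`. -/
theorem gh_equality (n : ℕ) :
    ∃ s, s ≤ 3 * n + 1 ∧ ∃ G : GHGame n s,
      G.Computes (fun x y => decide (x = y)) := by
  refine ⟨3 * n + 1, le_refl _, GHEq.theGame n (3 * n + 1)
    ((Equiv.optionCongr finProdFinEquiv).trans
      ((finSuccEquiv (n * 3)).symm.trans (finCongr (by ring)))), ?_⟩
  exact GHEq.computes_of_adj0 _ _ (fun x y => GHEq.main x y)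
end

section
/- The inner product function IP(x,y) = Σᵢ xᵢyᵢ mod 2 on n-bit strings has garden-hose complexity at most 4n + 1. -/
namespace GHIP

variable {α : Type*} [DecidableEq α]

/-- Endpoints of an edge list. -/
def epList : List (α × α) → List α
  | [] => []
  | (u, v) :: es => u :: v :: epList es

/-- Partner function from an edge list. -/
def edgePartner : List (α × α) → α → Option α
  | [], _ => none
  | (u, v) :: es, a => if a = u then some v else if a = v then some u else edgePartner es a

lemma epList_mem_of_mem {es : List (α × α)} {u v : α} (h : (u, v) ∈ es) :
    u ∈ epList es ∧ v ∈ epList es := by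
  induction es with
  | nil => simp at h
  | cons e es ih =>
    obtain ⟨p, q⟩ := e
    rcases List.mem_cons.mp h with h | h
    · obtain ⟨rfl, rfl⟩ := Prod.mk.injEq .. ▸ h
      constructor <;> simp [epList]
    · obtain ⟨h1, h2⟩ := ih h
      constructor <;> simp [epList, h1, h2]

lemma edgePartner_eq_some {es : List (α × α)} {a b : α} (h : edgePartner es a = some b) :
    (a, b) ∈ es ∨ (b, a) ∈ es := by
  induction es with
  | nil => simp [edgePartner] at h
  | cons e es ih =>
    obtain ⟨u, v⟩ := e
    simp only [edgePartner] at h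
    split_ifs at h with h1 h2
    · left; obtain rfl := h1; obtain rfl := Option.some.inj h; exact List.mem_cons_self
    · right; obtain rfl := h2; obtain rfl := Option.some.inj h; exact List.mem_cons_self
    · rcases ih h with h' | h'
      · exact Or.inl (List.mem_cons_of_mem _ h')
      · exact Or.inr (List.mem_cons_of_mem _ h')

lemma edgePartner_of_mem {es : List (α × α)} (hnd : (epList es).Nodup)
    {u v : α} (h : (u, v) ∈ es) :
    edgePartner es u = some v ∧ edgePartner es v = some u := by
  induction es with
  | nil => simp at h
  | cons e es ih =>
    obtain ⟨p, q⟩ := e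
    simp only [epList, List.nodup_cons, List.mem_cons] at hnd
    obtain ⟨hp, hq, hnd'⟩ := hnd
    rcases List.mem_cons.mp h with h | h
    · obtain ⟨rfl, rfl⟩ := Prod.mk.injEq .. ▸ h
      have hne : v ≠ u := fun hh => hp (Or.inl hh.symm)
      constructor
      · simp [edgePartner]
      · simp [edgePartner, hne]
    · obtain ⟨h1, h2⟩ := epList_mem_of_mem h
      have hu1 : u ≠ p := fun hh => hp (Or.inr (hh ▸ h1))
      have hu2 : u ≠ q := fun hh => hq (hh ▸ h1)
      have hv1 : v ≠ p := fun hh => hp (Or.inr (hh ▸ h2))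
      have hv2 : v ≠ q := fun hh => hq (hh ▸ h2)
      have := ih hnd' h
      constructor <;> simp [edgePartner, hu1, hu2, hv1, hv2, this.1, this.2]

lemma edgePartner_eq_none {es : List (α × α)} {a : α} (h : a ∉ epList es) :
    edgePartner es a = none := by
  induction es with
  | nil => rfl
  | cons e es ih =>
    obtain ⟨u, v⟩ := e
    simp only [epList, List.mem_cons] at h
    push_neg at h
    obtain ⟨h1, h2, h3⟩ := h
    simp [edgePartner, h1, h2, ih h3]

lemma pair_ne_of_nodup {es : List (α × α)} (hnd : (epList es).Nodup)
    {u v : α} (h : (u, v) ∈ es) : u ≠ v := by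
  induction es with
  | nil => simp at h
  | cons e es ih =>
    obtain ⟨p, q⟩ := e
    simp only [epList, List.nodup_cons, List.mem_cons] at hnd
    obtain ⟨hp, hq, hnd'⟩ := hnd
    rcases List.mem_cons.mp h with h | h
    · obtain ⟨rfl, rfl⟩ := Prod.mk.injEq .. ▸ h
      exact fun hh => hp (Or.inl hh)
    · exact ih hnd' h

/-- A `PartialMatching` from a list of edges with pairwise distinct endpoints. -/
def matchingOfEdges (es : List (α × α)) (h : (epList es).Nodup) : PartialMatching α where
  partner := edgePartner es
  symm a b hab := by
    rcases edgePartner_eq_some hab with h' | h'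
    · exact (edgePartner_of_mem h h').2
    · exact (edgePartner_of_mem h h').1
  irrefl a ha := by
    rcases edgePartner_eq_some ha with h' | h' <;> exact pair_ne_of_nodup h h' rfl

end GHIP

namespace GHIP

/-- Pipe `c` of block `i` (4 pipes per block). -/
def pp (n : ℕ) (i : Fin n) (c : Fin 4) : Fin (4 * n + 1) :=
  ⟨4 * i.val + c.val, by have := i.isLt; have := c.isLt; omega⟩

/-- The extra final pipe. -/
def zp (n : ℕ) : Fin (4 * n + 1) := ⟨4 * n, by omega⟩

lemma pp_val (n : ℕ) (i : Fin n) (c : Fin 4) : (pp n i c).val = 4 * i.val + c.val := rfl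

lemma zp_val (n : ℕ) : (zp n).val = 4 * n := rfl

lemma pp_ne_zp (n : ℕ) (i : Fin n) (c : Fin 4) : pp n i c ≠ zp n := by
  have h1 := i.isLt; have h2 := c.isLt
  simp only [Ne, Fin.ext_iff, pp_val, zp_val]
  omega

lemma pp_inj {n : ℕ} {i i' : Fin n} {c c' : Fin 4} (h : pp n i c = pp n i' c') :
    i = i' ∧ c = c' := by
  have h1 := i.isLt; have h2 := c.isLt; have h3 := i'.isLt; have h4 := c'.isLt
  rw [Fin.ext_iff, pp_val, pp_val] at h
  constructor <;> rw [Fin.ext_iff] <;> omega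

/-- The support of `x`: indices where `x i = true`, in increasing order. -/
def supp (n : ℕ) (x : Fin n → Bool) : List (Fin n) :=
  (List.finRange n).filter (fun i => x i)

lemma supp_nodup (n : ℕ) (x : Fin n → Bool) : (supp n x).Nodup :=
  (List.nodup_finRange n).filter _

/-- Bob's edges: in block `i`, connect entry `E_b` to exit `X_{b ⊕ y i}`. -/
def bEdges (n : ℕ) (y : Fin n → Bool) : List (Fin (4 * n + 1) × Fin (4 * n + 1)) :=
  (List.finRange n).flatMap fun i =>
    if y i then [(pp n i 0, pp n i 3), (pp n i 1, pp n i 2)]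
    else [(pp n i 0, pp n i 2), (pp n i 1, pp n i 3)]

lemma epList_append (es es' : List ((Fin (4*n+1)) × (Fin (4*n+1)))) :
    epList (es ++ es') = epList es ++ epList es' := by
  induction es with
  | nil => rfl
  | cons e es ih => obtain ⟨u, v⟩ := e; simp [epList, ih]

lemma epList_flatMap {β : Type*} (l : List β) (f : β → List ((Fin (4*n+1)) × (Fin (4*n+1)))) :
    epList (l.flatMap f) = l.flatMap (fun i => epList (f i)) := by
  induction l with
  | nil => rfl
  | cons b l ih => simp [List.flatMap_cons, epList_append, ih]

lemma mem_epList_bBlock {n : ℕ} {y : Fin n → Bool} {i : Fin n} {v : Fin (4*n+1)}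
    (h : v ∈ epList (if y i then [(pp n i 0, pp n i 3), (pp n i 1, pp n i 2)]
      else [(pp n i 0, pp n i 2), (pp n i 1, pp n i 3)])) :
    ∃ c : Fin 4, v = pp n i c := by
  split at h <;> simp [epList] at h <;>
    rcases h with rfl | rfl | rfl | rfl <;> exact ⟨_, rfl⟩

lemma pp_eq_iff {n : ℕ} {i : Fin n} {c c' : Fin 4} : pp n i c = pp n i c' ↔ c = c' :=
  ⟨fun h => (pp_inj h).2, fun h => by rw [h]⟩

lemma bEdges_nodup (n : ℕ) (y : Fin n → Bool) : (epList (bEdges n y)).Nodup := by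
  rw [bEdges, epList_flatMap]
  rw [List.nodup_flatMap]
  refine ⟨fun i _ => ?_, ?_⟩
  · split <;>
      (simp only [epList, List.nodup_cons, List.mem_cons, List.mem_singleton,
        List.not_mem_nil, List.nodup_nil, pp_eq_iff, or_false]; decide)
  · refine (List.nodup_finRange n).imp ?_
    intro i j hne v hv hv'
    obtain ⟨c, rfl⟩ := mem_epList_bBlock hv
    obtain ⟨c', hc'⟩ := mem_epList_bBlock hv'
    exact hne (pp_inj hc').1
end GHIP

namespace GHIP

/-- Alice's chain edges along the support list: exits of one block to entries of the next,
with the last block's exit-1 wired to the final pipe. -/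
def chainA (n : ℕ) : List (Fin n) → List (Option (Fin (4*n+1)) × Option (Fin (4*n+1)))
  | [] => []
  | [j] => [(some (pp n j 3), some (zp n))]
  | j :: j' :: M =>
      (some (pp n j 2), some (pp n j' 0)) :: (some (pp n j 3), some (pp n j' 1)) ::
        chainA n (j' :: M)

/-- Alice's edges, given the support list. -/
def aEdgesAux (n : ℕ) : List (Fin n) → List (Option (Fin (4*n+1)) × Option (Fin (4*n+1)))
  | [] => []
  | j :: M => (none, some (pp n j 0)) :: chainA n (j :: M)

def aEdges (n : ℕ) (x : Fin n → Bool) : List (Option (Fin (4*n+1)) × Option (Fin (4*n+1))) :=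
  aEdgesAux n (supp n x)

lemma mem_epList_chainA {n : ℕ} :
    ∀ (M : List (Fin n)) (j : Fin n) (v : Option (Fin (4*n+1))),
      v ∈ epList (chainA n (j :: M)) →
      v = some (zp n) ∨ v = some (pp n j 2) ∨ v = some (pp n j 3) ∨
        ∃ k ∈ M, ∃ c : Fin 4, v = some (pp n k c) := by
  intro M
  induction M with
  | nil =>
    intro j v hv
    simp only [chainA, epList, List.mem_cons, List.not_mem_nil, or_false] at hv
    rcases hv with rfl | rfl
    · exact Or.inr (Or.inr (Or.inl rfl))
    · exact Or.inl rfl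
  | cons j' M ih =>
    intro j v hv
    simp only [chainA, epList, List.mem_cons] at hv
    rcases hv with rfl | rfl | rfl | rfl | hv
    · exact Or.inr (Or.inl rfl)
    · exact Or.inr (Or.inr (Or.inr ⟨j', List.mem_cons_self, 0, rfl⟩))
    · exact Or.inr (Or.inr (Or.inl rfl))
    · exact Or.inr (Or.inr (Or.inr ⟨j', List.mem_cons_self, 1, rfl⟩))
    · rcases ih j' v hv with h | h | h | ⟨k, hk, c, hc⟩
      · exact Or.inl h
      · exact Or.inr (Or.inr (Or.inr ⟨j', List.mem_cons_self, 2, h⟩))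
      · exact Or.inr (Or.inr (Or.inr ⟨j', List.mem_cons_self, 3, h⟩))
      · exact Or.inr (Or.inr (Or.inr ⟨k, List.mem_cons_of_mem _ hk, c, hc⟩))

lemma ppo_ne_c {n : ℕ} {i i' : Fin n} {c c' : Fin 4} (h : c ≠ c') :
    (some (pp n i c) : Option (Fin (4*n+1))) ≠ some (pp n i' c') :=
  fun hh => h (pp_inj (Option.some.inj hh)).2

lemma ppo_ne_i {n : ℕ} {i i' : Fin n} {c c' : Fin 4} (h : i ≠ i') :
    (some (pp n i c) : Option (Fin (4*n+1))) ≠ some (pp n i' c') :=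
  fun hh => h (pp_inj (Option.some.inj hh)).1

lemma ppo_ne_zp {n : ℕ} {i : Fin n} {c : Fin 4} :
    (some (pp n i c) : Option (Fin (4*n+1))) ≠ some (zp n) :=
  fun hh => pp_ne_zp n i c (Option.some.inj hh)

lemma not_mem_chainA {n : ℕ} {M : List (Fin n)} {j0 : Fin n} {c0 : Fin 4}
    (hM : ∀ k ∈ M, j0 ≠ k) (hj : ∀ j, M.head? = some j → c0 ≠ 2 ∧ c0 ≠ 3) :
    True := trivial

lemma nodup_chainA {n : ℕ} :
    ∀ (M : List (Fin n)) (j : Fin n), (j :: M).Nodup → (epList (chainA n (j :: M))).Nodup := by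
  intro M
  induction M with
  | nil =>
    intro j _
    simp only [chainA, epList, List.nodup_cons, List.mem_cons, List.not_mem_nil,
      or_false, List.nodup_nil, and_true, List.mem_singleton]
    exact ⟨ppo_ne_zp, not_false⟩
  | cons j' M ih =>
    intro j hnd
    have hjj' : j ≠ j' := by
      intro h; rw [List.nodup_cons] at hnd; exact hnd.1 (h ▸ List.mem_cons_self)
    have hjM : j ∉ M := by
      intro h; rw [List.nodup_cons] at hnd; exact hnd.1 (List.mem_cons_of_mem _ h)
    have hj'M : j' ∉ M := by
      rw [List.nodup_cons, List.nodup_cons] at hnd; exact hnd.2.1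
    have htail : (epList (chainA n (j' :: M))).Nodup :=
      ih j' ((List.nodup_cons.mp hnd).2)
    have hchar := mem_epList_chainA M j'
    have notmem : ∀ (j0 : Fin n) (c0 : Fin 4), j0 ≠ j' → j0 ∉ M →
        (some (pp n j0 c0) : Option (Fin (4*n+1))) ∉ epList (chainA n (j' :: M)) := by
      intro j0 c0 h1 h2 hmem
      rcases hchar _ hmem with h | h | h | ⟨k, hk, c, hc⟩
      · exact ppo_ne_zp h
      · exact ppo_ne_i h1 h
      · exact ppo_ne_i h1 h
      · rcases pp_inj (Option.some.inj hc) with ⟨rfl, -⟩; exact h2 hk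
    have notmemc : ∀ (c0 : Fin 4), c0 ≠ 2 → c0 ≠ 3 →
        (some (pp n j' c0) : Option (Fin (4*n+1))) ∉ epList (chainA n (j' :: M)) := by
      intro c0 h1 h2 hmem
      rcases hchar _ hmem with h | h | h | ⟨k, hk, c, hc⟩
      · exact ppo_ne_zp h
      · exact ppo_ne_c h1 h
      · exact ppo_ne_c h2 h
      · rcases pp_inj (Option.some.inj hc) with ⟨rfl, -⟩; exact hj'M hk
    simp only [chainA, epList, List.nodup_cons, List.mem_cons]
    refine ⟨?_, ?_, ?_, ?_, htail⟩
    · push_neg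
      exact ⟨ppo_ne_i hjj', ppo_ne_c (by decide), ppo_ne_i hjj', notmem j 2 hjj' hjM⟩
    · push_neg
      exact ⟨ppo_ne_i (fun h => hjj' h.symm), ppo_ne_c (by decide), notmemc 0 (by decide) (by decide)⟩
    · push_neg
      exact ⟨ppo_ne_i hjj', notmem j 3 hjj' hjM⟩
    · exact notmemc 1 (by decide) (by decide)

lemma aEdges_nodup (n : ℕ) (x : Fin n → Bool) : (epList (aEdges n x)).Nodup := by
  rw [aEdges]
  rcases hs : supp n x with _ | ⟨j, M⟩
  · simp [aEdgesAux, epList]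
  · have hnd : (j :: M).Nodup := hs ▸ supp_nodup n x
    simp only [aEdgesAux, epList, List.nodup_cons, List.mem_cons]
    refine ⟨?_, ?_, nodup_chainA M j hnd⟩
    · push_neg
      refine ⟨fun h => by simp at h, fun hmem => ?_⟩
      rcases mem_epList_chainA M j _ hmem with h | h | h | ⟨k, hk, c, hc⟩
      · cases h
      · cases h
      · cases h
      · cases hc
    · intro hmem
      rcases mem_epList_chainA M j _ hmem with h | h | h | ⟨k, hk, c, hc⟩
      · exact ppo_ne_zp h
      · exact ppo_ne_c (by decide) h
      · exact ppo_ne_c (by decide) h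
      · rcases pp_inj (Option.some.inj hc) with ⟨rfl, -⟩
        exact (List.nodup_cons.mp hnd).1 hk

/-- The garden-hose game for inner product. -/
def game (n : ℕ) : GHGame n (4 * n + 1) where
  EA x := matchingOfEdges (aEdges n x) (aEdges_nodup n x)
  EB y := matchingOfEdges (bEdges n y) (bEdges_nodup n y)

end GHIP

namespace GHIP

def eI (b : Bool) : Fin 4 := if b then 1 else 0
def xI (b : Bool) : Fin 4 := if b then 3 else 2

lemma eI_ne_xI (b b' : Bool) : eI b ≠ xI b' := by
  cases b <;> cases b' <;> decide

/-- The path segment through block `j`, entering with parity `b`. -/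
def seg (n : ℕ) (y : Fin n → Bool) (j : Fin n) (b : Bool) : List (GHVertex (4*n+1)) :=
  [Sum.inl (some (pp n j (eI b))), Sum.inr (pp n j (eI b)),
   Sum.inr (pp n j (xI (xor b (y j)))), Sum.inl (some (pp n j (xI (xor b (y j)))))]

/-- The path through the blocks in `M`, starting with parity `b`. -/
def restPath (n : ℕ) (y : Fin n → Bool) : List (Fin n) → Bool → List (GHVertex (4*n+1))
  | [], b => if b then [Sum.inl (some (zp n)), Sum.inr (zp n)] else []
  | j :: M, b => seg n y j b ++ restPath n y M (xor b (y j))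

/-- Parity after processing the blocks in `M`. -/
def parA (n : ℕ) (y : Fin n → Bool) : List (Fin n) → Bool → Bool
  | [], b => b
  | j :: M, b => parA n y M (xor b (y j))

/-- The final vertex of the path. -/
def endV (n : ℕ) (y : Fin n → Bool) : List (Fin n) → Bool → GHVertex (4*n+1) → GHVertex (4*n+1)
  | [], b, v => if b then Sum.inr (zp n) else v
  | j :: M, b, _ => endV n y M (xor b (y j)) (Sum.inl (some (pp n j (xI (xor b (y j))))))

lemma bEdge_mem (n : ℕ) (y : Fin n → Bool) (j : Fin n) (b : Bool) :
    (pp n j (eI b), pp n j (xI (xor b (y j)))) ∈ bEdges n y := by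
  rw [bEdges]
  refine List.mem_flatMap.mpr ⟨j, List.mem_finRange j, ?_⟩
  cases hy : y j <;> cases b <;> simp [eI, xI, hy]

lemma chainA_subset_of_suffix {n : ℕ} :
    ∀ {K M : List (Fin n)}, M <:+ K → ∀ e ∈ chainA n M, e ∈ chainA n K := by
  intro K
  induction K with
  | nil =>
    intro M h e he
    rw [List.suffix_nil] at h
    subst h
    simp [chainA] at he
  | cons a K ih =>
    intro M h e he
    rcases List.suffix_cons_iff.mp h with rfl | h'
    · exact he
    · have hK := ih h' e he
      cases K with
      | nil => simp [chainA] at hK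
      | cons b K' =>
        show e ∈ chainA n (a :: b :: K')
        rw [chainA]
        exact List.mem_cons_of_mem _ (List.mem_cons_of_mem _ hK)

lemma chainA_mem_aEdges {n : ℕ} {x : Fin n → Bool} {M : List (Fin n)}
    (h : M <:+ supp n x) {e} (he : e ∈ chainA n M) : e ∈ aEdges n x := by
  have hK := chainA_subset_of_suffix h e he
  rw [aEdges]
  rcases hs : supp n x with _ | ⟨j, K⟩
  · rw [hs] at hK; simp [chainA] at hK
  · rw [hs] at hK; exact List.mem_cons_of_mem _ hK

lemma adjA {n : ℕ} {x y : Fin n → Bool} {a a' : Option (Fin (4*n+1))}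
    (h : (a, a') ∈ aEdges n x) : (game n).Adj x y (Sum.inl a) (Sum.inl a') :=
  (edgePartner_of_mem (aEdges_nodup n x) h).1

lemma adjB {n : ℕ} {x y : Fin n → Bool} {b b' : Fin (4*n+1)}
    (h : (b, b') ∈ bEdges n y) : (game n).Adj x y (Sum.inr b) (Sum.inr b') :=
  (edgePartner_of_mem (bEdges_nodup n y) h).1

lemma chain'_restPath (n : ℕ) (x y : Fin n → Bool) :
    ∀ (M : List (Fin n)) (b : Bool), M <:+ supp n x →
      List.Chain' ((game n).Adj x y) (restPath n y M b) := by
  intro M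
  induction M with
  | nil =>
    intro b _
    cases b
    · exact List.isChain_nil
    · exact List.isChain_cons_cons.mpr ⟨rfl, List.isChain_singleton _⟩
  | cons j M ih =>
    intro b hsuf
    have hsuf' : M <:+ supp n x := (List.suffix_cons j M).trans hsuf
    have hadj23 : (game n).Adj x y (Sum.inr (pp n j (eI b)))
        (Sum.inr (pp n j (xI (xor b (y j))))) := adjB (bEdge_mem n y j b)
    show List.Chain' _ (seg n y j b ++ restPath n y M (xor b (y j)))
    simp only [seg, List.cons_append, List.nil_append]
    refine List.isChain_cons_cons.mpr ⟨rfl, ?_⟩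
    refine List.isChain_cons_cons.mpr ⟨hadj23, ?_⟩
    refine List.isChain_cons_cons.mpr ⟨rfl, ?_⟩
    refine List.isChain_cons.mpr ⟨?_, ih (xor b (y j)) hsuf'⟩
    intro w hw
    cases M with
    | nil =>
      cases hb' : xor b (y j)
      · rw [hb'] at hw; simp [restPath] at hw
      · rw [hb'] at hw
        simp only [restPath, if_true, List.head?_cons, Option.mem_def,
          Option.some.injEq] at hw
        subst hw
        refine adjA (chainA_mem_aEdges hsuf ?_)
        show _ ∈ chainA n [j]
        rw [chainA]
        simp [xI]
    | cons j' M' =>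
      have hw' : w = Sum.inl (some (pp n j' (eI (xor b (y j))))) := by
        simp only [restPath, seg, List.cons_append, List.head?_cons, Option.mem_def,
          Option.some.injEq] at hw
        exact hw.symm
      subst hw'
      cases hb' : xor b (y j) <;>
        refine adjA (chainA_mem_aEdges hsuf ?_) <;>
        · show _ ∈ chainA n (j :: j' :: M')
          rw [chainA]
          simp [xI, eI]

lemma getLast_restPath (n : ℕ) (y : Fin n → Bool) :
    ∀ (M : List (Fin n)) (b : Bool) (v : GHVertex (4*n+1)),
      (v :: restPath n y M b).getLast? = some (endV n y M b v) := by
  intro M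
  induction M with
  | nil => intro b v; cases b <;> simp [restPath, endV]
  | cons j M ih =>
    intro b v
    show (v :: (seg n y j b ++ restPath n y M (xor b (y j)))).getLast? = _
    simp only [seg, List.cons_append, List.nil_append]
    rw [List.getLast?_cons_cons, List.getLast?_cons_cons, List.getLast?_cons_cons,
      List.getLast?_cons_cons]
    rw [ih]
    rfl

lemma endV_isRight (n : ℕ) (y : Fin n → Bool) :
    ∀ (M : List (Fin n)) (b : Bool) (v : GHVertex (4*n+1)), v.isRight = false →
      (endV n y M b v).isRight = parA n y M b := by
  intro M
  induction M with
  | nil => intro b v hv; cases b <;> simp [endV, parA, hv]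
  | cons j M ih =>
    intro b v hv
    show (endV n y M (xor b (y j)) _).isRight = parA n y M (xor b (y j))
    exact ih _ _ rfl

lemma endV_true (n : ℕ) (y : Fin n → Bool) :
    ∀ (M : List (Fin n)) (b : Bool) (v : GHVertex (4*n+1)),
      parA n y M b = true → endV n y M b v = Sum.inr (zp n) := by
  intro M
  induction M with
  | nil => intro b v hb; simp only [parA] at hb; simp [endV, hb]
  | cons j M ih => intro b v hb; exact ih _ _ hb

lemma endV_false (n : ℕ) (y : Fin n → Bool) :
    ∀ (M : List (Fin n)) (b : Bool) (v : GHVertex (4*n+1)) (jl : Fin n),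
      M.getLast? = some jl → parA n y M b = false →
      endV n y M b v = Sum.inl (some (pp n jl 2)) := by
  intro M
  induction M with
  | nil => intro b v jl h; simp at h
  | cons j M ih =>
    intro b v jl hl hb
    cases M with
    | nil =>
      rw [List.getLast?_singleton] at hl
      obtain rfl := Option.some.inj hl
      have hb' : xor b (y j) = false := hb
      show endV n y [] (xor b (y j)) _ = _
      rw [hb']
      simp [endV, xI]
    | cons j' M' =>
      rw [List.getLast?_cons_cons] at hl
      exact ih (xor b (y j)) (Sum.inl (some (pp n j (xI (xor b (y j)))))) jl hl hb

lemma zp_mem_restPath (n : ℕ) (y : Fin n → Bool) :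
    ∀ (M : List (Fin n)) (b : Bool), parA n y M b = true →
      Sum.inl (some (zp n)) ∈ restPath n y M b := by
  intro M
  induction M with
  | nil => intro b hb; have : b = true := hb; simp [restPath, this]
  | cons j M ih =>
    intro b hb
    exact List.mem_append_right _ (ih _ hb)

lemma xl_mem_restPath (n : ℕ) (y : Fin n → Bool) :
    ∀ (M : List (Fin n)) (b : Bool) (jl : Fin n),
      M.getLast? = some jl → parA n y M b = false →
      Sum.inr (pp n jl 2) ∈ restPath n y M b := by
  intro M
  induction M with
  | nil => intro b jl h; simp at h
  | cons j M ih =>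
    intro b jl hl hb
    cases M with
    | nil =>
      rw [List.getLast?_singleton] at hl
      obtain rfl := Option.some.inj hl
      have hb' : xor b (y j) = false := hb
      refine List.mem_append_left _ ?_
      simp [seg, hb', xI]
    | cons j' M' =>
      rw [List.getLast?_cons_cons] at hl
      exact List.mem_append_right _ (ih _ _ hl hb)

end GHIP

namespace GHIP

lemma mem_restPath {n : ℕ} {y : Fin n → Bool} :
    ∀ (M : List (Fin n)) (b : Bool) (v : GHVertex (4*n+1)), v ∈ restPath n y M b →
      (v = Sum.inl (some (zp n)) ∨ v = Sum.inr (zp n)) ∨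
      ∃ j ∈ M, ∃ c : Fin 4, v = Sum.inl (some (pp n j c)) ∨ v = Sum.inr (pp n j c) := by
  intro M
  induction M with
  | nil =>
    intro b v hv
    cases b
    · simp [restPath] at hv
    · simp only [restPath, if_true, List.mem_cons, List.mem_singleton,
        List.not_mem_nil, or_false] at hv
      rcases hv with rfl | rfl
      · exact Or.inl (Or.inl rfl)
      · exact Or.inl (Or.inr rfl)
  | cons j M ih =>
    intro b v hv
    rcases List.mem_append.mp hv with hv | hv
    · simp only [seg, List.mem_cons, List.not_mem_nil, or_false] at hv
      rcases hv with rfl | rfl | rfl | rfl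
      · exact Or.inr ⟨j, List.mem_cons_self, eI b, Or.inl rfl⟩
      · exact Or.inr ⟨j, List.mem_cons_self, eI b, Or.inr rfl⟩
      · exact Or.inr ⟨j, List.mem_cons_self, xI (xor b (y j)), Or.inr rfl⟩
      · exact Or.inr ⟨j, List.mem_cons_self, xI (xor b (y j)), Or.inl rfl⟩
    · rcases ih _ _ hv with h | ⟨k, hk, c, hc⟩
      · exact Or.inl h
      · exact Or.inr ⟨k, List.mem_cons_of_mem _ hk, c, hc⟩

lemma seg_nodup {n : ℕ} {y : Fin n → Bool} (j : Fin n) (b : Bool) :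
    (seg n y j b).Nodup := by
  have hex : eI b ≠ xI (xor b (y j)) := eI_ne_xI _ _
  simp only [seg, List.nodup_cons, List.mem_cons, List.mem_singleton,
    List.not_mem_nil, or_false, List.nodup_nil, and_true]
  refine ⟨?_, ?_, ?_⟩
  · push_neg
    refine ⟨by simp, ?_, ?_⟩
    · intro h; simp at h
    · intro h
      rw [Sum.inl.injEq, Option.some.injEq] at h
      exact hex (pp_inj h).2
  · push_neg
    refine ⟨?_, by simp⟩
    intro h
    rw [Sum.inr.injEq] at h
    exact hex (pp_inj h).2
  · simp

lemma nodup_restPath {n : ℕ} {y : Fin n → Bool} :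
    ∀ (M : List (Fin n)) (b : Bool), M.Nodup → (restPath n y M b).Nodup := by
  intro M
  induction M with
  | nil => intro b _; cases b <;> simp [restPath]
  | cons j M ih =>
    intro b hnd
    rw [List.nodup_cons] at hnd
    show (seg n y j b ++ restPath n y M (xor b (y j))).Nodup
    rw [List.nodup_append]
    refine ⟨seg_nodup j b, ih _ hnd.2, ?_⟩
    intro v hv v' hv' hvv'; subst hvv'
    have hvseg : ∃ c : Fin 4, v = Sum.inl (some (pp n j c)) ∨ v = Sum.inr (pp n j c) := by
      simp only [seg, List.mem_cons, List.not_mem_nil, or_false] at hv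
      rcases hv with rfl | rfl | rfl | rfl
      · exact ⟨eI b, Or.inl rfl⟩
      · exact ⟨eI b, Or.inr rfl⟩
      · exact ⟨xI (xor b (y j)), Or.inr rfl⟩
      · exact ⟨xI (xor b (y j)), Or.inl rfl⟩
    obtain ⟨c, hc⟩ := hvseg
    rcases mem_restPath _ _ _ hv' with h | ⟨k, hk, c', hc'⟩
    · rcases hc with rfl | rfl <;> rcases h with h | h <;>
        first
        | (cases h; done)
        | (rw [Sum.inl.injEq, Option.some.injEq] at h; exact pp_ne_zp n j c h)
        | (rw [Sum.inr.injEq] at h; exact pp_ne_zp n j c h)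
    · have hjk : j ≠ k := fun hh => hnd.1 (hh ▸ hk)
      rcases hc with rfl | rfl <;> rcases hc' with h | h <;>
        first
        | (cases h; done)
        | (rw [Sum.inl.injEq, Option.some.injEq] at h; exact hjk (pp_inj h).1)
        | (rw [Sum.inr.injEq] at h; exact hjk (pp_inj h).1)

lemma xlast_not_mem_chainA {n : ℕ} :
    ∀ (M : List (Fin n)) (jl : Fin n), M.Nodup → M.getLast? = some jl →
      (some (pp n jl 2) : Option (Fin (4*n+1))) ∉ epList (chainA n M) := by
  intro M
  induction M with
  | nil => intro jl _ h; simp at h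
  | cons j M ih =>
    intro jl hnd hl
    cases M with
    | nil =>
      rw [List.getLast?_singleton] at hl
      obtain rfl := Option.some.inj hl
      intro hmem
      simp only [chainA, epList, List.mem_cons, List.mem_singleton,
        List.not_mem_nil, or_false] at hmem
      rcases hmem with h | h
      · exact ppo_ne_c (by decide) h
      · exact ppo_ne_zp h
    | cons j' M' =>
      rw [List.getLast?_cons_cons] at hl
      have hjl : jl ∈ j' :: M' := List.mem_of_mem_getLast? (by rw [hl]; rfl)
      rw [List.nodup_cons] at hnd
      have hjjl : jl ≠ j := fun hh => hnd.1 (hh ▸ hjl)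
      intro hmem
      simp only [chainA, epList, List.mem_cons] at hmem
      rcases hmem with h | h | h | h | h
      · exact ppo_ne_i hjjl h
      · exact ppo_ne_c (by decide) h
      · exact ppo_ne_i hjjl h
      · exact ppo_ne_c (by decide) h
      · exact ih jl hnd.2 hl h

lemma partner_xlast {n : ℕ} {x : Fin n → Bool} {jl : Fin n}
    (h : (supp n x).getLast? = some jl) :
    edgePartner (aEdges n x) (some (pp n jl 2)) = none := by
  apply edgePartner_eq_none
  rw [aEdges]
  rcases hs : supp n x with _ | ⟨j, M⟩
  · simp [aEdgesAux, epList]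
  · rw [hs] at h
    intro hmem
    simp only [aEdgesAux, epList, List.mem_cons] at hmem
    rcases hmem with h' | h' | h'
    · cases h'
    · exact ppo_ne_c (by decide) h'
    · exact xlast_not_mem_chainA _ jl (hs ▸ supp_nodup n x) h h'

lemma partner_zp {n : ℕ} {y : Fin n → Bool} :
    edgePartner (bEdges n y) (zp n) = none := by
  apply edgePartner_eq_none
  rw [bEdges, epList_flatMap]
  intro hmem
  obtain ⟨i, -, hv⟩ := List.mem_flatMap.mp hmem
  obtain ⟨c, hc⟩ := mem_epList_bBlock hv
  exact pp_ne_zp n i c hc.symm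

lemma parA_eq (n : ℕ) (y : Fin n → Bool) :
    ∀ (M : List (Fin n)) (b : Bool),
      parA n y M b = xor b (decide (M.countP (fun j => y j) % 2 = 1)) := by
  intro M
  induction M with
  | nil => intro b; simp [parA]
  | cons j M ih =>
    intro b
    show parA n y M (xor b (y j)) = _
    rw [ih, List.countP_cons]
    cases hy : y j
    · simp [hy]
    · simp only [hy, if_true]
      have h2 : decide ((M.countP (fun j => y j) + 1) % 2 = 1)
          = !decide (M.countP (fun j => y j) % 2 = 1) := by
        rw [← decide_not]
        exact decide_eq_decide.mpr (by omega)
      rw [h2]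
      cases b <;> cases hd : decide (M.countP (fun j => y j) % 2 = 1) <;> simp

lemma countP_supp_eq (n : ℕ) (x y : Fin n → Bool) :
    (supp n x).countP (fun j => y j) =
      (Finset.univ.filter fun i => x i = true ∧ y i = true).card := by
  rw [supp, List.countP_filter, List.countP_eq_length_filter]
  have hnd : ((List.finRange n).filter (fun a => y a && x a)).Nodup :=
    (List.nodup_finRange n).filter _
  rw [← List.toFinset_card_of_nodup hnd, List.toFinset_filter, List.toFinset_finRange]
  congr 1
  refine Finset.filter_congr ?_
  intro i _
  simp only [Bool.and_eq_true]
  constructor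
  · rintro ⟨h1, h2⟩; exact ⟨h2, h1⟩
  · rintro ⟨h1, h2⟩; exact ⟨h2, h1⟩

end GHIP

/-- The bitwise inner product function `IP(x,y) = Σᵢ xᵢyᵢ mod 2` on `n`-bit strings
has garden-hose complexity at most `4n + 1`. -/
theorem gh_inner_product (n : ℕ) :
    ∃ s, s ≤ 4 * n + 1 ∧ ∃ G : GHGame n s,
      G.Computes (fun x y =>
        decide ((Finset.univ.filter fun i => x i = true ∧ y i = true).card % 2 = 1)) := by
  refine ⟨4 * n + 1, le_refl _, GHIP.game n, ?_⟩
  intro x y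
  set L := GHIP.supp n x with hL
  refine ⟨Sum.inl none :: GHIP.restPath n y L false,
    GHIP.endV n y L false (Sum.inl none), ⟨rfl, ?_, ?_, ?_⟩, ?_, ?_⟩
  · -- Nodup
    rw [List.nodup_cons]
    refine ⟨?_, GHIP.nodup_restPath L false (GHIP.supp_nodup n x)⟩
    intro hmem
    rcases GHIP.mem_restPath L false _ hmem with h | ⟨k, hk, c, hc⟩
    · rcases h with h | h <;> simp at h
    · rcases hc with h | h <;> simp at h
  · -- Chain'
    refine List.isChain_cons.mpr ⟨?_, GHIP.chain'_restPath n x y L false (by rw [hL])⟩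
    intro w hw
    rcases hs : L with _ | ⟨j, M⟩
    · rw [hs] at hw; simp [GHIP.restPath] at hw
    · rw [hs] at hw
      have hw' : w = Sum.inl (some (GHIP.pp n j (GHIP.eI false))) := by
        simp only [GHIP.restPath, GHIP.seg, List.cons_append, List.head?_cons,
          Option.mem_def, Option.some.injEq] at hw
        exact hw.symm
      subst hw'
      refine GHIP.adjA ?_
      rw [GHIP.aEdges, ← hL, hs]
      exact List.mem_cons_self
  · -- maximality
    intro v w hlast hadj
    rw [GHIP.getLast_restPath n y L false (Sum.inl none)] at hlast
    obtain rfl := Option.some.inj hlast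
    cases hpar : GHIP.parA n y L false
    · rcases hlx : L.getLast? with _ | jl
      · have hnil : L = [] := List.getLast?_eq_none_iff.mp hlx
        rw [hnil] at hadj
        simp only [GHIP.endV] at hadj
        cases w with
        | inl a =>
          have hp : GHIP.edgePartner (GHIP.aEdges n x) none = some a := hadj
          rw [GHIP.aEdges, ← hL, hnil] at hp
          cases hp
        | inr b => simp [GHGame.Adj] at hadj
      · rw [GHIP.endV_false n y L false (Sum.inl none) jl hlx hpar] at hadj
        cases w with
        | inl a =>
          have hp : GHIP.edgePartner (GHIP.aEdges n x) (some (GHIP.pp n jl 2)) = some a := hadj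
          rw [GHIP.partner_xlast (by rw [← hL]; exact hlx)] at hp
          cases hp
        | inr b =>
          have hb : some (GHIP.pp n jl 2) = some b := hadj
          obtain rfl := Option.some.inj hb
          exact List.mem_cons_of_mem _ (GHIP.xl_mem_restPath n y L false jl hlx hpar)
    · rw [GHIP.endV_true n y L false (Sum.inl none) hpar] at hadj
      cases w with
      | inl a =>
        have ha : a = some (GHIP.zp n) := hadj
        subst ha
        exact List.mem_cons_of_mem _ (GHIP.zp_mem_restPath n y L false hpar)
      | inr b =>
        have hp : GHIP.edgePartner (GHIP.bEdges n y) (GHIP.zp n) = some b := hadj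
        rw [GHIP.partner_zp] at hp
        cases hp
  · exact GHIP.getLast_restPath n y L false (Sum.inl none)
  · rw [GHIP.endV_isRight n y L false (Sum.inl none) rfl, GHIP.parA_eq n y L false]
    rw [hL, GHIP.countP_supp_eq n x y, Bool.false_xor]
end

section
/- The majority function MAJ(x,y) = 1 iff Σᵢ xᵢyᵢ ≥ ⌊n/2⌋ + 1 on n-bit strings has garden-hose complexity at most (n+2)². -/
namespace GHMaj
def T (n : ℕ) : ℕ := n / 2 + 1
lemma T_pos (n : ℕ) : 0 < T n := Nat.succ_pos _

variable {n : ℕ}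

def nextOne (x : Fin n → Bool) (j : ℕ) : Option (Fin n) :=
  if h : j < n then (if x ⟨j, h⟩ then some ⟨j, h⟩ else nextOne x (j+1)) else none
termination_by n - j

lemma nextOne_none {x : Fin n → Bool} {j : ℕ} (h : nextOne x j = none) :
    ∀ i : Fin n, j ≤ (i : ℕ) → x i = false := by
  induction j using nextOne.induct (x := x) with
  | case1 j hj hx => rw [nextOne, dif_pos hj, if_pos hx] at h; simp at h
  | case2 j hj hx ih =>
    rw [nextOne, dif_pos hj, if_neg (by simp_all)] at h
    intro i hi
    rcases eq_or_lt_of_le hi with h' | h'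
    · have : i = ⟨j, hj⟩ := by ext; simp only [Fin.val_mk]; omega
      subst this; simpa using hx
    · exact ih h i h'
  | case3 j hj => intro i hi; have := i.2; omega

lemma nextOne_some {x : Fin n → Bool} {j : ℕ} {i : Fin n} (h : nextOne x j = some i) :
    j ≤ (i : ℕ) ∧ x i = true ∧ ∀ k : Fin n, j ≤ (k : ℕ) → (k : ℕ) < (i : ℕ) → x k = false := by
  induction j using nextOne.induct (x := x) with
  | case1 j hj hx =>
    rw [nextOne, dif_pos hj, if_pos hx] at h
    obtain rfl : (⟨j, hj⟩ : Fin n) = i := by simpa using h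
    exact ⟨le_refl _, hx, fun k hk hk' => by simp at hk hk'; omega⟩
  | case2 j hj hx ih =>
    rw [nextOne, dif_pos hj, if_neg (by simp_all)] at h
    obtain ⟨h1, h2, h3⟩ := ih h
    refine ⟨by omega, h2, fun k hk hk' => ?_⟩
    rcases eq_or_lt_of_le hk with h' | h'
    · have : k = ⟨j, hj⟩ := by ext; simp only [Fin.val_mk]; omega
      subst this; simpa using hx
    · exact h3 k h' hk'
  | case3 j hj => rw [nextOne, dif_neg hj] at h; simp at h

lemma nextOne_intro {x : Fin n → Bool} {j : ℕ} {i : Fin n} (hj : j ≤ (i : ℕ))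
    (hx : x i = true) (hmin : ∀ k : Fin n, j ≤ (k : ℕ) → (k : ℕ) < (i : ℕ) → x k = false) :
    nextOne x j = some i := by
  induction j using nextOne.induct (x := x) with
  | case1 j hj' hx' =>
    rw [nextOne, dif_pos hj', if_pos hx']
    rcases eq_or_lt_of_le hj with h' | h'
    · congr 1; ext; simp only [Fin.val_mk]; omega
    · exact absurd (hmin ⟨j, hj'⟩ (by simp) (by simpa using h')) (by simp [hx'])
  | case2 j hj' hx' ih =>
    rw [nextOne, dif_pos hj', if_neg (by simp_all)]
    have hne : j ≠ (i : ℕ) := by rintro rfl; exact absurd hx (by simpa [Fin.ext_iff] using hx')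
    exact ih (by omega) (fun k hk hk' => hmin k (by omega) hk')
  | case3 j hj' => have := i.2; omega

def prevOne (x : Fin n → Bool) : ℕ → Option (Fin n)
  | 0 => none
  | (j+1) => if h : j < n then (if x ⟨j, h⟩ then some ⟨j, h⟩ else prevOne x j) else prevOne x j

lemma prevOne_none {x : Fin n → Bool} {m : ℕ} (h : prevOne x m = none) :
    ∀ k : Fin n, (k : ℕ) < m → x k = false := by
  induction m with
  | zero => intro k hk; omega
  | succ j ih =>
    intro k hk
    rw [prevOne] at h
    by_cases hj : j < n
    · rw [dif_pos hj] at h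
      by_cases hx : x ⟨j, hj⟩ = true
      · rw [if_pos hx] at h; simp at h
      · rw [if_neg hx] at h
        rcases eq_or_lt_of_le (Nat.lt_succ_iff.mp hk) with h' | h'
        · have : k = ⟨j, hj⟩ := by ext; simp only [Fin.val_mk]; omega
          subst this; simpa using hx
        · exact ih h k h'
    · rw [dif_neg hj] at h
      have := k.2
      exact ih h k (by omega)

lemma prevOne_some {x : Fin n → Bool} {m : ℕ} {i : Fin n} (h : prevOne x m = some i) :
    (i : ℕ) < m ∧ x i = true ∧ ∀ k : Fin n, (i : ℕ) < (k : ℕ) → (k : ℕ) < m → x k = false := by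
  induction m with
  | zero => rw [prevOne] at h; simp at h
  | succ j ih =>
    rw [prevOne] at h
    by_cases hj : j < n
    · rw [dif_pos hj] at h
      by_cases hx : x ⟨j, hj⟩ = true
      · rw [if_pos hx] at h
        obtain rfl : (⟨j, hj⟩ : Fin n) = i := by simpa using h
        exact ⟨by simp, hx, fun k hk hk' => by simp at hk; omega⟩
      · rw [if_neg hx] at h
        obtain ⟨h1, h2, h3⟩ := ih h
        refine ⟨by omega, h2, fun k hk hk' => ?_⟩
        rcases eq_or_lt_of_le (Nat.lt_succ_iff.mp hk') with h' | h'
        · have : k = ⟨j, hj⟩ := by ext; simp only [Fin.val_mk]; omega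
          subst this; simpa using hx
        · exact h3 k hk h'
    · obtain ⟨h1, h2, h3⟩ := ih (by rwa [dif_neg hj] at h)
      refine ⟨by omega, h2, fun k hk hk' => ?_⟩
      have := k.2
      exact h3 k hk (by omega)

lemma prevOne_intro {x : Fin n → Bool} {m : ℕ} {i : Fin n} (hj : (i : ℕ) < m)
    (hx : x i = true) (hmax : ∀ k : Fin n, (i : ℕ) < (k : ℕ) → (k : ℕ) < m → x k = false) :
    prevOne x m = some i := by
  induction m with
  | zero => omega
  | succ j ih =>
    rw [prevOne]
    by_cases hj' : j < n
    · rw [dif_pos hj']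
      by_cases he : (i : ℕ) = j
      · rw [if_pos (by rwa [show (⟨j, hj'⟩ : Fin n) = i from by ext; simp [he.symm]])]
        congr 1; ext; simp [he.symm]
      · have hxj : x ⟨j, hj'⟩ = false := hmax ⟨j, hj'⟩ (by simp; omega) (by simp)
        rw [if_neg (by simp [hxj])]
        exact ih (by omega) (fun k hk hk' => hmax k hk (by omega))
    · have := i.2
      rw [dif_neg hj']
      exact ih (by omega) (fun k hk hk' => hmax k hk (by omega))

abbrev Pipe (n : ℕ) := Bool × Fin n × Fin (T n)
abbrev V (n : ℕ) := Option (Pipe n) ⊕ Pipe n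

/-- Alice's abstract matching. -/
def pA (x : Fin n → Bool) : Option (Pipe n) → Option (Option (Pipe n))
  | none => (nextOne x 0).map (fun i => some (false, i, ⟨0, T_pos n⟩))
  | some (false, i, c) =>
      if x i then
        match prevOne x (i : ℕ) with
        | some j => some (some (true, j, c))
        | none => if (c : ℕ) = 0 then some none else none
      else none
  | some (true, j, c) =>
      if x j then (nextOne x ((j : ℕ)+1)).map (fun i => some (false, i, c)) else none

/-- Bob's abstract matching. -/
def pB (y : Fin n → Bool) : Pipe n → Option (Pipe n)
  | (false, i, c) =>
      if y i then
        (if h : (c : ℕ) + 1 < T n then some (true, i, ⟨(c : ℕ) + 1, h⟩) else none)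
      else some (true, i, c)
  | (true, i, c) =>
      if y i then
        (if h : 0 < (c : ℕ) then some (false, i, ⟨(c : ℕ) - 1, by omega⟩) else none)
      else some (false, i, c)

lemma pA_symm {x : Fin n → Bool} {a b : Option (Pipe n)} (h : pA x a = some b) :
    pA x b = some a := by
  match a with
  | none =>
    rw [pA] at h
    obtain ⟨i, hi, rfl⟩ := Option.map_eq_some_iff.mp h
    obtain ⟨_, hx, hmin⟩ := nextOne_some hi
    rw [pA, if_pos hx]
    have hp : prevOne x (i : ℕ) = none := by
      cases hp : prevOne x (i : ℕ) with
      | none => rfl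
      | some j =>
        obtain ⟨h1, h2, _⟩ := prevOne_some hp
        exact absurd (hmin j (by omega) h1) (by simp [h2])
    rw [hp]
    simp
  | some (false, i, c) =>
    rw [pA] at h
    by_cases hx : x i = true
    · rw [if_pos hx] at h
      cases hp : prevOne x (i : ℕ) with
      | none =>
        rw [hp] at h
        by_cases hc : (c : ℕ) = 0
        · rw [if_pos hc] at h
          obtain rfl : b = none := by symm; simpa using h
          rw [pA]
          have : nextOne x 0 = some i :=
            nextOne_intro (Nat.zero_le _) hx (fun k _ hk => prevOne_none hp k hk)
          rw [this]
          have : c = ⟨0, T_pos n⟩ := by ext; simpa using hc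
          simp [this]
        · rw [if_neg hc] at h; simp at h
      | some j =>
        rw [hp] at h
        obtain rfl : b = some (true, j, c) := by symm; simpa using h
        obtain ⟨h1, h2, h3⟩ := prevOne_some hp
        rw [pA, if_pos h2]
        have : nextOne x ((j : ℕ)+1) = some i :=
          nextOne_intro (by omega) hx (fun k hk hk' => h3 k (by omega) hk')
        rw [this]
        simp
    · rw [if_neg hx] at h; simp at h
  | some (true, j, c) =>
    rw [pA] at h
    by_cases hx : x j = true
    · rw [if_pos hx] at h
      obtain ⟨i, hi, rfl⟩ := Option.map_eq_some_iff.mp h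
      obtain ⟨h1, h2, h3⟩ := nextOne_some hi
      rw [pA, if_pos h2]
      have hp : prevOne x (i : ℕ) = some j :=
        prevOne_intro (by omega) hx (fun k hk hk' => h3 k (by omega) hk')
      rw [hp]
    · rw [if_neg hx] at h; simp at h

lemma pA_irrefl {x : Fin n → Bool} (a : Option (Pipe n)) : pA x a ≠ some a := by
  match a with
  | none =>
    rw [pA]; cases hn : nextOne x 0 <;> simp
  | some (false, i, c) =>
    rw [pA]
    by_cases hx : x i = true
    · rw [if_pos hx]
      cases hp : prevOne x (i : ℕ) with
      | none => by_cases hc : (c : ℕ) = 0 <;> simp [hc]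
      | some j => simp
    · simp [hx]
  | some (true, j, c) =>
    rw [pA]
    by_cases hx : x j = true
    · rw [if_pos hx]; cases hn : nextOne x ((j : ℕ)+1) <;> simp
    · simp [hx]

lemma pB_symm {y : Fin n → Bool} {a b : Pipe n} (h : pB y a = some b) :
    pB y b = some a := by
  match a with
  | (false, i, c) =>
    rw [pB] at h
    by_cases hy : y i = true
    · rw [if_pos hy] at h
      by_cases hlt : (c : ℕ) + 1 < T n
      · rw [dif_pos hlt] at h
        obtain rfl : b = (true, i, ⟨(c : ℕ) + 1, hlt⟩) := by symm; simpa using h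
        rw [pB, if_pos hy, dif_pos (by simp)]
        simp [Fin.ext_iff]
      · rw [dif_neg hlt] at h; simp at h
    · rw [if_neg hy] at h
      obtain rfl : b = (true, i, c) := by symm; simpa using h
      rw [pB, if_neg hy]
  | (true, i, c) =>
    rw [pB] at h
    by_cases hy : y i = true
    · rw [if_pos hy] at h
      by_cases hlt : 0 < (c : ℕ)
      · rw [dif_pos hlt] at h
        obtain rfl : b = (false, i, ⟨(c : ℕ) - 1, by omega⟩) := by symm; simpa using h
        rw [pB, if_pos hy, dif_pos (by simp; omega)]
        simp [Fin.ext_iff]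
        omega
      · rw [dif_neg hlt] at h; simp at h
    · rw [if_neg hy] at h
      obtain rfl : b = (false, i, c) := by symm; simpa using h
      rw [pB, if_neg hy]

lemma pB_irrefl {y : Fin n → Bool} (a : Pipe n) : pB y a ≠ some a := by
  match a with
  | (false, i, c) =>
    rw [pB]
    by_cases hy : y i = true
    · rw [if_pos hy]
      by_cases hlt : (c : ℕ) + 1 < T n <;> simp [hlt]
    · simp [hy]
  | (true, i, c) =>
    rw [pB]
    by_cases hy : y i = true
    · rw [if_pos hy]
      by_cases hlt : 0 < (c : ℕ) <;> simp [hlt]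
    · simp [hy]

/-- abstract adjacency -/
def adjAbs (x y : Fin n → Bool) : V n → V n → Prop
  | Sum.inl a, Sum.inl a' => pA x a = some a'
  | Sum.inl a, Sum.inr b => a = some b
  | Sum.inr b, Sum.inl a => a = some b
  | Sum.inr b, Sum.inr b' => pB y b = some b'

/-- The water path after the tap. -/
def go (x y : Fin n → Bool) (j c : ℕ) (hc : c < T n) : List (V n) :=
  match hn : nextOne x j with
  | none => []
  | some i =>
      Sum.inl (some (false, i, ⟨c, hc⟩)) :: Sum.inr (false, i, ⟨c, hc⟩) ::
        (if h : (if y i then c + 1 else c) < T n then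
          Sum.inr (true, i, ⟨if y i then c + 1 else c, h⟩) ::
            Sum.inl (some (true, i, ⟨if y i then c + 1 else c, h⟩)) ::
            go x y ((i : ℕ) + 1) (if y i then c + 1 else c) h
        else [])
termination_by n - j
decreasing_by
  have := (nextOne_some hn).1
  have := i.2
  omega

lemma go_none {x y : Fin n → Bool} {j c : ℕ} {hc : c < T n} (hn : nextOne x j = none) :
    go x y j c hc = [] := by
  rw [go]
  split
  · rfl
  · rename_i i hi; rw [hn] at hi; exact absurd hi (by simp)

lemma go_some {x y : Fin n → Bool} {j c : ℕ} {hc : c < T n} {i : Fin n}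
    (hn : nextOne x j = some i) :
    go x y j c hc =
      Sum.inl (some (false, i, ⟨c, hc⟩)) :: Sum.inr (false, i, ⟨c, hc⟩) ::
        (if h : (if y i then c + 1 else c) < T n then
          Sum.inr (true, i, ⟨if y i then c + 1 else c, h⟩) ::
            Sum.inl (some (true, i, ⟨if y i then c + 1 else c, h⟩)) ::
            go x y ((i : ℕ) + 1) (if y i then c + 1 else c) h
        else []) := by
  rw [go]
  split
  · rename_i hi; rw [hn] at hi; exact absurd hi (by simp)
  · rename_i i' hi; rw [hn] at hi
    obtain rfl : i' = i := by simpa using hi.symm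
    rfl

lemma go_chain {x y : Fin n → Bool} (j c : ℕ) (hc : c < T n) (v : V n)
    (hv : ∀ i : Fin n, nextOne x j = some i →
      adjAbs x y v (Sum.inl (some (false, i, ⟨c, hc⟩)))) :
    List.Chain (adjAbs x y) v (go x y j c hc) := by
  induction j, c, hc using go.induct (x := x) (y := y) generalizing v with
  | case1 j c hc hn => rw [go_none hn]; exact List.Chain.nil
  | case2 j c hc i hn ih =>
    rw [go_some hn]
    refine List.Chain.cons (hv i hn) (List.Chain.cons rfl ?_)
    by_cases h : (if y i then c + 1 else c) < T n
    · rw [dif_pos h]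
      refine List.Chain.cons ?_ (List.Chain.cons rfl ?_)
      · show pB y (false, i, ⟨c, hc⟩) = _
        rw [pB]
        by_cases hy : y i = true
        · rw [if_pos hy]
          rw [dif_pos (by simpa [hy] using h)]
          simp [hy]
        · rw [if_neg hy]
          simp [hy]
      · refine ih h _ (fun i₂ hn₂ => ?_)
        show pA x (some (true, i, _)) = _
        rw [pA, if_pos (nextOne_some hn).2.1, hn₂]
        simp
    · rw [dif_neg h]
      exact List.Chain.nil

lemma go_mem {x y : Fin n → Bool} {j c : ℕ} {hc : c < T n} :
    ∀ v ∈ go x y j c hc, ∃ (b : Bool) (i : Fin n) (c₀ : Fin (T n)),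
      j ≤ (i : ℕ) ∧ (v = Sum.inl (some (b, i, c₀)) ∨ v = Sum.inr (b, i, c₀)) := by
  induction j, c, hc using go.induct (x := x) (y := y) with
  | case1 j c hc hn => rw [go_none hn]; simp
  | case2 j c hc i hn ih =>
    have hji : j ≤ (i : ℕ) := (nextOne_some hn).1
    rw [go_some hn]
    intro v hv
    simp only [List.mem_cons] at hv
    rcases hv with rfl | rfl | hv
    · exact ⟨false, i, _, hji, Or.inl rfl⟩
    · exact ⟨false, i, _, hji, Or.inr rfl⟩
    by_cases h : (if y i then c + 1 else c) < T n
    · rw [dif_pos h] at hv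
      simp only [List.mem_cons] at hv
      rcases hv with rfl | rfl | hv
      · exact ⟨true, i, _, hji, Or.inr rfl⟩
      · exact ⟨true, i, _, hji, Or.inl rfl⟩
      · obtain ⟨b, i₂, c₀, hi₂, hv⟩ := ih h v hv
        exact ⟨b, i₂, c₀, by omega, hv⟩
    · rw [dif_neg h] at hv; simp at hv

lemma go_not_mem {x y : Fin n → Bool} {j c : ℕ} {hc : c < T n} (b' : Bool) (i : Fin n)
    (c' : Fin (T n)) (hij : (i : ℕ) < j) :
    Sum.inl (some (b', i, c')) ∉ go x y j c hc ∧ Sum.inr (b', i, c') ∉ go x y j c hc := by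
  constructor <;> intro hv <;> obtain ⟨b, i₂, c₀, hi₂, hv | hv⟩ := go_mem _ hv <;>
    first
    | · simp only [Sum.inl.injEq, Sum.inr.injEq, Option.some.injEq, Prod.mk.injEq] at hv
        have := congrArg Fin.val hv.2.1
        omega
    | simp at hv

lemma tap_not_mem {x y : Fin n → Bool} {j c : ℕ} {hc : c < T n} :
    (Sum.inl none : V n) ∉ go x y j c hc := by
  intro hv
  obtain ⟨b, i₂, c₀, hi₂, hv | hv⟩ := go_mem _ hv <;> simp at hv

lemma go_nodup {x y : Fin n → Bool} (j c : ℕ) (hc : c < T n) :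
    (go x y j c hc).Nodup := by
  induction j, c, hc using go.induct (x := x) (y := y) with
  | case1 j c hc hn => rw [go_none hn]; simp
  | case2 j c hc i hn ih =>
    rw [go_some hn]
    by_cases h : (if y i then c + 1 else c) < T n
    · rw [dif_pos h]
      have hni := fun (b' : Bool) (c' : Fin (T n)) =>
        @go_not_mem n x y ((i : ℕ)+1) _ h b' i c' (by omega)
      refine List.nodup_cons.mpr ⟨?_, List.nodup_cons.mpr ⟨?_, List.nodup_cons.mpr
        ⟨?_, List.nodup_cons.mpr ⟨(hni _ _).1, ih h⟩⟩⟩⟩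
      · simp only [List.mem_cons]
        push_neg
        exact ⟨by simp, by simp, by simp [Prod.ext_iff, Fin.ext_iff] <;> omega,
          (hni _ _).1⟩
      · simp only [List.mem_cons]
        push_neg
        exact ⟨by simp [Prod.ext_iff, Fin.ext_iff] <;> omega, by simp, (hni _ _).2⟩
      · simp only [List.mem_cons]
        push_neg
        exact ⟨by simp, (hni _ _).2⟩
    · rw [dif_neg h]
      simp [Prod.ext_iff]

def cntFrom (x y : Fin n → Bool) (j : ℕ) : ℕ :=
  ((Finset.univ.filter fun i : Fin n => j ≤ (i : ℕ) ∧ x i = true ∧ y i = true)).card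

lemma cnt_none {x y : Fin n → Bool} {j : ℕ} (hn : nextOne x j = none) :
    cntFrom x y j = 0 := by
  rw [cntFrom, Finset.card_eq_zero, Finset.filter_eq_empty_iff]
  rintro i - ⟨h1, h2, h3⟩
  exact absurd (nextOne_none hn i h1) (by simp [h2])

lemma cnt_some {x y : Fin n → Bool} {j : ℕ} {i : Fin n} (hn : nextOne x j = some i) :
    cntFrom x y j = (if y i then 1 else 0) + cntFrom x y ((i : ℕ) + 1) := by
  obtain ⟨h1, h2, h3⟩ := nextOne_some hn
  by_cases hy : y i = true
  · rw [if_pos hy]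
    have hset : (Finset.univ.filter fun k : Fin n => j ≤ (k : ℕ) ∧ x k = true ∧ y k = true)
        = insert i (Finset.univ.filter fun k : Fin n =>
            (i : ℕ) + 1 ≤ (k : ℕ) ∧ x k = true ∧ y k = true) := by
      ext k
      simp only [Finset.mem_filter, Finset.mem_insert, Finset.mem_univ, true_and]
      constructor
      · rintro ⟨hk1, hk2, hk3⟩
        by_cases hki : (k : ℕ) = (i : ℕ)
        · exact Or.inl (by ext; exact hki)
        · refine Or.inr ⟨?_, hk2, hk3⟩
          rcases lt_or_gt_of_ne hki with h' | h'
          · exact absurd (h3 k hk1 h') (by simp [hk2])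
          · omega
      · rintro (rfl | ⟨hk1, hk2, hk3⟩)
        · exact ⟨h1, h2, hy⟩
        · exact ⟨by omega, hk2, hk3⟩
    rw [cntFrom, hset, Finset.card_insert_of_notMem (by simp), cntFrom]
    omega
  · rw [if_neg hy]
    have hset : (Finset.univ.filter fun k : Fin n => j ≤ (k : ℕ) ∧ x k = true ∧ y k = true)
        = (Finset.univ.filter fun k : Fin n =>
            (i : ℕ) + 1 ≤ (k : ℕ) ∧ x k = true ∧ y k = true) := by
      ext k
      simp only [Finset.mem_filter, Finset.mem_univ, true_and]
      constructor
      · rintro ⟨hk1, hk2, hk3⟩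
        refine ⟨?_, hk2, hk3⟩
        by_cases hki : (k : ℕ) = (i : ℕ)
        · have : k = i := by ext; exact hki
          subst this
          exact absurd hk3 (by simp [hy])
        · rcases lt_or_gt_of_ne hki with h' | h'
          · exact absurd (h3 k hk1 h') (by simp [hk2])
          · omega
      · rintro ⟨hk1, hk2, hk3⟩
        exact ⟨by omega, hk2, hk3⟩
    rw [cntFrom, hset, cntFrom]
    omega

lemma getLast?_cons_of_ne_nil {α : Type*} {l : List α} (a : α) (h : l ≠ []) :
    (a :: l).getLast? = l.getLast? := by
  cases l with
  | nil => simp at h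
  | cons b l => rw [List.getLast?_cons_cons]

lemma go_last {x y : Fin n → Bool} (j c : ℕ) (hc : c < T n) :
    if T n ≤ c + cntFrom x y j then
      ∃ (i : Fin n) (c₀ : Fin (T n)),
        (go x y j c hc).getLast? = some (Sum.inr (false, i, c₀)) ∧ y i = true ∧
        (c₀ : ℕ) + 1 = T n ∧ Sum.inl (some (false, i, c₀)) ∈ go x y j c hc
    else
      (go x y j c hc = [] ∧ nextOne x j = none) ∨
      ∃ (i : Fin n) (c₀ : Fin (T n)),
        (go x y j c hc).getLast? = some (Sum.inl (some (true, i, c₀))) ∧ x i = true ∧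
        nextOne x ((i : ℕ) + 1) = none ∧ Sum.inr (true, i, c₀) ∈ go x y j c hc := by
  induction j, c, hc using go.induct (x := x) (y := y) with
  | case1 j c hc hn =>
    rw [if_neg (by rw [cnt_none hn]; omega)]
    exact Or.inl ⟨go_none hn, hn⟩
  | case2 j c hc i hn ih =>
    have hxi := (nextOne_some hn).2.1
    have hcnt : cntFrom x y j = (if y i then 1 else 0) + cntFrom x y ((i : ℕ) + 1) :=
      cnt_some hn
    by_cases hy : y i = true
    · simp only [hy, Bool.false_eq_true, reduceDIte, reduceIte, dite_false, if_false] at ih hcnt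
      by_cases h : c + 1 < T n
      · have ihh := ih h
        by_cases hta : T n ≤ (c + 1) + cntFrom x y ((i : ℕ) + 1)
        · rw [if_pos (by omega)]
          rw [if_pos hta] at ihh
          obtain ⟨i₂, c₀, hlast, hy2, hc0, hmem⟩ := ihh
          have htne : go x y ((i : ℕ) + 1) (c + 1) h ≠ [] := by
            rintro he; rw [he] at hlast; simp at hlast
          refine ⟨i₂, c₀, ?_, hy2, hc0, ?_⟩
          · rw [go_some hn]
            simp only [hy, Bool.false_eq_true, reduceDIte, reduceIte, dite_false, if_false]
            rw [dif_pos h, getLast?_cons_of_ne_nil _ (by simp),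
              getLast?_cons_of_ne_nil _ (by simp), getLast?_cons_of_ne_nil _ (by simp),
              getLast?_cons_of_ne_nil _ htne]
            exact hlast
          · rw [go_some hn]
            simp only [hy, Bool.false_eq_true, reduceDIte, reduceIte, dite_false, if_false]
            rw [dif_pos h]
            simp only [List.mem_cons]
            exact Or.inr (Or.inr (Or.inr (Or.inr hmem)))
        · rw [if_neg (by omega)]
          rw [if_neg hta] at ihh
          rcases ihh with ⟨hemp, hnn⟩ | ⟨i₂, c₀, hlast, hx2, hnn, hmem⟩
          · refine Or.inr ⟨i, ⟨c + 1, h⟩, ?_, hxi, hnn, ?_⟩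
            · rw [go_some hn]
              simp only [hy, Bool.false_eq_true, reduceDIte, reduceIte, dite_false, if_false]
              rw [dif_pos h, hemp]
              rfl
            · rw [go_some hn]
              simp only [hy, Bool.false_eq_true, reduceDIte, reduceIte, dite_false, if_false]
              rw [dif_pos h]
              simp
          · have htne : go x y ((i : ℕ) + 1) (c + 1) h ≠ [] := by
              rintro he; rw [he] at hlast; simp at hlast
            refine Or.inr ⟨i₂, c₀, ?_, hx2, hnn, ?_⟩
            · rw [go_some hn]
              simp only [hy, Bool.false_eq_true, reduceDIte, reduceIte, dite_false, if_false]
              rw [dif_pos h, getLast?_cons_of_ne_nil _ (by simp),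
                getLast?_cons_of_ne_nil _ (by simp), getLast?_cons_of_ne_nil _ (by simp),
                getLast?_cons_of_ne_nil _ htne]
              exact hlast
            · rw [go_some hn]
              simp only [hy, Bool.false_eq_true, reduceDIte, reduceIte, dite_false, if_false]
              rw [dif_pos h]
              simp only [List.mem_cons]
              exact Or.inr (Or.inr (Or.inr (Or.inr hmem)))
      · have hce : c + 1 = T n := by omega
        rw [if_pos (by omega)]
        refine ⟨i, ⟨c, hc⟩, ?_, hy, hce, ?_⟩
        · rw [go_some hn]
          simp only [hy, Bool.false_eq_true, reduceDIte, reduceIte, dite_false, if_false]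
          rw [dif_neg (by omega)]
          rfl
        · rw [go_some hn]
          simp
    · simp only [hy, Bool.false_eq_true, reduceDIte, reduceIte, dite_false, if_false] at ih hcnt
      have ihh := ih hc
      by_cases hta : T n ≤ c + cntFrom x y ((i : ℕ) + 1)
      · rw [if_pos (by omega)]
        rw [if_pos hta] at ihh
        obtain ⟨i₂, c₀, hlast, hy2, hc0, hmem⟩ := ihh
        have htne : go x y ((i : ℕ) + 1) c hc ≠ [] := by
          rintro he; rw [he] at hlast; simp at hlast
        refine ⟨i₂, c₀, ?_, hy2, hc0, ?_⟩
        · rw [go_some hn]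
          simp only [hy, Bool.false_eq_true, reduceDIte, reduceIte, dite_false, if_false]
          rw [dif_pos hc, getLast?_cons_of_ne_nil _ (by simp),
            getLast?_cons_of_ne_nil _ (by simp), getLast?_cons_of_ne_nil _ (by simp),
            getLast?_cons_of_ne_nil _ htne]
          exact hlast
        · rw [go_some hn]
          simp only [hy, Bool.false_eq_true, reduceDIte, reduceIte, dite_false, if_false]
          rw [dif_pos hc]
          simp only [List.mem_cons]
          exact Or.inr (Or.inr (Or.inr (Or.inr hmem)))
      · rw [if_neg (by omega)]
        rw [if_neg hta] at ihh
        rcases ihh with ⟨hemp, hnn⟩ | ⟨i₂, c₀, hlast, hx2, hnn, hmem⟩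
        · refine Or.inr ⟨i, ⟨c, hc⟩, ?_, hxi, hnn, ?_⟩
          · rw [go_some hn]
            simp only [hy, Bool.false_eq_true, reduceDIte, reduceIte, dite_false, if_false]
            rw [dif_pos hc, hemp]
            rfl
          · rw [go_some hn]
            simp only [hy, Bool.false_eq_true, reduceDIte, reduceIte, dite_false, if_false]
            rw [dif_pos hc]
            simp
        · have htne : go x y ((i : ℕ) + 1) c hc ≠ [] := by
            rintro he; rw [he] at hlast; simp at hlast
          refine Or.inr ⟨i₂, c₀, ?_, hx2, hnn, ?_⟩
          · rw [go_some hn]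
            simp only [hy, Bool.false_eq_true, reduceDIte, reduceIte, dite_false, if_false]
            rw [dif_pos hc, getLast?_cons_of_ne_nil _ (by simp),
              getLast?_cons_of_ne_nil _ (by simp), getLast?_cons_of_ne_nil _ (by simp),
              getLast?_cons_of_ne_nil _ htne]
            exact hlast
          · rw [go_some hn]
            simp only [hy, Bool.false_eq_true, reduceDIte, reduceIte, dite_false, if_false]
            rw [dif_pos hc]
            simp only [List.mem_cons]
            exact Or.inr (Or.inr (Or.inr (Or.inr hmem)))

def pathAbs (x y : Fin n → Bool) : List (V n) :=
  Sum.inl none :: go x y 0 0 (T_pos n)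

lemma pathAbs_chain (x y : Fin n → Bool) :
    List.Chain' (adjAbs x y) (pathAbs x y) := by
  show List.Chain (adjAbs x y) (Sum.inl none) (go x y 0 0 (T_pos n))
  refine go_chain 0 0 (T_pos n) _ (fun i hn => ?_)
  show pA x none = some (some (false, i, ⟨0, T_pos n⟩))
  rw [pA, hn]
  rfl

lemma pathAbs_nodup (x y : Fin n → Bool) : (pathAbs x y).Nodup :=
  List.nodup_cons.mpr ⟨tap_not_mem, go_nodup 0 0 (T_pos n)⟩

lemma pathAbs_spec (x y : Fin n → Bool) :
    ∃ v : V n, (pathAbs x y).getLast? = some v ∧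
      (∀ w, adjAbs x y v w → w ∈ pathAbs x y) ∧
      v.isRight = decide (T n ≤ cntFrom x y 0) := by
  have hl := go_last (x := x) (y := y) 0 0 (T_pos n)
  by_cases hf : T n ≤ cntFrom x y 0
  · rw [if_pos (by omega)] at hl
    obtain ⟨i, c₀, hlast, hy2, hc0, hmem⟩ := hl
    refine ⟨Sum.inr (false, i, c₀), ?_, ?_, by simp [hf]⟩
    · rw [pathAbs, getLast?_cons_of_ne_nil _ (by rintro he; rw [he] at hlast; simp at hlast)]
      exact hlast
    · intro w hadj
      match w with
      | Sum.inl a =>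
        have : a = some (false, i, c₀) := hadj
        rw [this, pathAbs]
        exact List.mem_cons_of_mem _ hmem
      | Sum.inr b =>
        have hadj' : pB y (false, i, c₀) = some b := hadj
        rw [pB, if_pos hy2, dif_neg (by omega)] at hadj'
        simp at hadj'
  · rw [if_neg (by omega)] at hl
    rcases hl with ⟨hemp, hnone⟩ | ⟨i, c₀, hlast, hx2, hnone, hmem⟩
    · refine ⟨Sum.inl none, ?_, ?_, by simp [hf]⟩
      · rw [pathAbs, hemp]
        rfl
      · intro w hadj
        match w with
        | Sum.inl a =>
          have hadj' : pA x none = some a := hadj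
          rw [pA, hnone] at hadj'
          simp at hadj'
        | Sum.inr b =>
          have : (none : Option (Pipe n)) = some b := hadj
          simp at this
    · refine ⟨Sum.inl (some (true, i, c₀)), ?_, ?_, by simp [hf]⟩
      · rw [pathAbs, getLast?_cons_of_ne_nil _ (by rintro he; rw [he] at hlast; simp at hlast)]
        exact hlast
      · intro w hadj
        match w with
        | Sum.inl a =>
          have hadj' : pA x (some (true, i, c₀)) = some a := hadj
          rw [pA, if_pos hx2, hnone] at hadj'
          simp at hadj'
        | Sum.inr b =>
          have : some (true, i, c₀) = some b := hadj
          obtain rfl : b = (true, i, c₀) := by simpa using this.symm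
          rw [pathAbs]
          exact List.mem_cons_of_mem _ hmem

section transfer

variable {s : ℕ}

lemma map_eq_some_iff' {α β : Type*} {f : α → β} (hf : Function.Injective f)
    {o : Option α} {a : α} : o.map f = some (f a) ↔ o = some a := by
  cases o <;> simp [hf.eq_iff]

lemma map_symm_map {α β : Type*} (e : α ≃ β) (a : Option α) :
    Option.map e.symm (Option.map e a) = a := by cases a <;> simp

lemma map_map_symm {α β : Type*} (e : α ≃ β) (a : Option β) :
    Option.map e (Option.map e.symm a) = a := by cases a <;> simp

/-- The concrete garden-hose game. -/
def game (e : Pipe n ≃ Fin s) : GHGame n s where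
  EA x := {
    partner := fun a => (pA x (a.map e.symm)).map (Option.map e)
    symm := by
      intro a b h
      obtain ⟨b', hb', rfl⟩ := Option.map_eq_some_iff.mp h
      rw [map_symm_map, pA_symm hb', Option.map_some, map_map_symm]
    irrefl := by
      intro a h
      obtain ⟨b', hb', he⟩ := Option.map_eq_some_iff.mp h
      rw [← he, map_symm_map] at hb'
      have : Option.map e.symm a = b' := by rw [← he, map_symm_map]
      rw [← this] at hb'
      exact pA_irrefl _ hb' }
  EB y := {
    partner := fun b => (pB y (e.symm b)).map e
    symm := by
      intro a b h
      obtain ⟨b', hb', rfl⟩ := Option.map_eq_some_iff.mp h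
      rw [Equiv.symm_apply_apply, pB_symm hb', Option.map_some, Equiv.apply_symm_apply]
    irrefl := by
      intro a h
      obtain ⟨b', hb', he⟩ := Option.map_eq_some_iff.mp h
      rw [← he, Equiv.symm_apply_apply] at hb'
      exact pB_irrefl _ hb' }

/-- vertex renaming -/
def fmap (e : Pipe n ≃ Fin s) : V n → GHVertex s := Sum.map (Option.map e) e

lemma fmap_inj (e : Pipe n ≃ Fin s) : Function.Injective (fmap e) :=
  (Option.map_injective e.injective).sumMap e.injective

lemma fmap_surj (e : Pipe n ≃ Fin s) : Function.Surjective (fmap e) := by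
  intro w
  refine ⟨Sum.map (Option.map e.symm) e.symm w, ?_⟩
  cases w with
  | inl a => show Sum.inl (Option.map e (Option.map e.symm a)) = _; rw [map_map_symm]
  | inr b => show Sum.inr (e (e.symm b)) = _; rw [Equiv.apply_symm_apply]

lemma adj_fmap (e : Pipe n ≃ Fin s) (x y : Fin n → Bool) (v w : V n) :
    (game e).Adj x y (fmap e v) (fmap e w) ↔ adjAbs x y v w := by
  match v, w with
  | Sum.inl a, Sum.inl a' =>
    show ((game e).EA x).partner (Option.map e a) = some (Option.map e a') ↔ pA x a = some a'
    show (pA x ((Option.map e a).map e.symm)).map (Option.map e)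
      = some (Option.map e a') ↔ pA x a = some a'
    rw [map_symm_map]
    exact map_eq_some_iff' (Option.map_injective e.injective)
  | Sum.inl a, Sum.inr b =>
    show Option.map e a = some (e b) ↔ a = some b
    exact map_eq_some_iff' e.injective
  | Sum.inr b, Sum.inl a =>
    show Option.map e a = some (e b) ↔ a = some b
    exact map_eq_some_iff' e.injective
  | Sum.inr b, Sum.inr b' =>
    show ((game e).EB y).partner (e b) = some (e b') ↔ pB y b = some b'
    show (pB y (e.symm (e b))).map e = some (e b') ↔ pB y b = some b'
    rw [Equiv.symm_apply_apply]
    exact map_eq_some_iff' e.injective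

end transfer

end GHMaj

/-- The majority function `MAJ(x,y) = 1` iff `Σᵢ xᵢyᵢ ≥ ⌊n/2⌋ + 1` on `n`-bit strings
has garden-hose complexity at most `(n+2)²`. -/
theorem gh_majority (n : ℕ) :
    ∃ s, s ≤ (n + 2) ^ 2 ∧ ∃ G : GHGame n s,
      G.Computes (fun x y =>
        decide ((Finset.univ.filter fun i => x i = true ∧ y i = true).card ≥ n / 2 + 1)) := by
  classical
  refine ⟨2 * (n * GHMaj.T n), ?_, ?_⟩
  · have h2 : n / 2 * 2 ≤ n := Nat.div_mul_le_self n 2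
    rw [GHMaj.T]
    nlinarith
  · have hcard : Fintype.card (GHMaj.Pipe n) = 2 * (n * GHMaj.T n) := by
      simp [GHMaj.Pipe]
    let e : GHMaj.Pipe n ≃ Fin (2 * (n * GHMaj.T n)) := Fintype.equivFinOfCardEq hcard
    refine ⟨GHMaj.game e, ?_⟩
    intro x y
    obtain ⟨v, hlast, hmax, hval⟩ := GHMaj.pathAbs_spec x y
    refine ⟨(GHMaj.pathAbs x y).map (GHMaj.fmap e), GHMaj.fmap e v, ⟨?_, ?_, ?_, ?_⟩, ?_, ?_⟩
    · show ((GHMaj.fmap e (Sum.inl none)) :: _).head? = _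
      rfl
    · exact (GHMaj.pathAbs_nodup x y).map (GHMaj.fmap_inj e)
    · show List.IsChain _ _
      rw [List.isChain_map]
      exact List.IsChain.imp (fun a b hab => (GHMaj.adj_fmap e x y a b).mpr hab)
        (GHMaj.pathAbs_chain x y)
    · intro v' w hlast' hadj
      rw [List.getLast?_map, hlast] at hlast'
      obtain rfl : v' = GHMaj.fmap e v := by simpa using hlast'.symm
      obtain ⟨w', rfl⟩ := GHMaj.fmap_surj e w
      exact List.mem_map_of_mem (hmax w' ((GHMaj.adj_fmap e x y v w').mp hadj))
    · rw [List.getLast?_map, hlast]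
      rfl
    · rw [show Sum.isRight (GHMaj.fmap e v) = v.isRight from by cases v <;> rfl, hval]
      have hc : GHMaj.cntFrom x y 0
          = (Finset.univ.filter fun i => x i = true ∧ y i = true).card := by
        rw [GHMaj.cntFrom]
        congr 1
        ext k
        simp
      rw [GHMaj.T, hc]
end

section
/- If f: {0,1}ⁿ × {0,1}ⁿ → {0,1} is injective for Bob (for every y ≠ y' there exists x with f(x,y) ≠ f(x,y')), then the garden-hose complexity s = GH(f) satisfies s·log₂(s) ≥ n. -/
section GHAux

variable {V : Type*} {A : V → V → Prop} {start : V}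

private theorem GH.path_prefix
    (hsymm : ∀ a b, A a b → A b a)
    (H1 : ∀ a b, A start a → A start b → a = b)
    (H2 : ∀ v a b c, A v a → A v b → A v c → a = b ∨ a = c ∨ b = c)
    (p : List V)
    (hp1 : p.head? = some start) (hp2 : p.Nodup) (hp3 : List.Chain' A p)
    (hpmax : ∀ v w, p.getLast? = some v → A v w → w ∈ p) :
    ∀ q : List V, q.head? = some start → q.Nodup → List.Chain' A q → q <+: p := by
  intro q
  induction q using List.reverseRecOn with
  | nil => intro h; simp at h
  | append_singleton r b ih =>
    intro hq1 hq2 hq3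
    rcases List.isChain_append.mp hq3 with ⟨hr3, -, hlast⟩
    rcases eq_or_ne r [] with rfl | hr
    · simp at hq1; subst hq1
      cases p with
      | nil => simp at hp1
      | cons x t => simp at hp1; subst hp1; simp [List.prefix_cons_inj]
    · have hr1 : r.head? = some start := by
        obtain ⟨c, r', rfl⟩ := List.exists_cons_of_ne_nil hr
        simpa using hq1
      have hbr : b ∉ r := by
        have := List.nodup_append.mp hq2
        simp [List.Disjoint] at this
        tauto
      have hv : r.getLast? = some (r.getLast hr) := List.getLast?_eq_getLast hr
      set v := r.getLast hr with hvdef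
      have hvb : A v b := hlast v (by simpa using hv) b (by simp)
      obtain ⟨t, rfl⟩ : r <+: p := ih hr1 (hq2.sublist (by simp)) hr3
      cases t with
      | nil =>
        exfalso
        have : b ∈ r ++ ([] : List V) := hpmax v b (by simpa using hv) hvb
        simp at this; exact hbr this
      | cons a t' =>
        have hva : A v a := by
          rcases List.isChain_append.mp hp3 with ⟨-, -, h⟩
          exact h v (by simpa using hv) a (by simp)
        have har : a ∉ r := fun ha =>
          (List.nodup_append.mp hp2).2.2 a ha a List.mem_cons_self rfl
        have hab : a = b := by
          rcases eq_or_ne r.length 1 with h1 | h1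
          · obtain ⟨c, rfl⟩ := List.length_eq_one_iff.mp h1
            simp at hr1 hv
            subst hr1
            rw [hv] at *
            exact H1 a b (hv ▸ hva) (hv ▸ hvb)
          · have hlen : 2 ≤ r.length := by
              rcases r with _ | ⟨c, _ | ⟨d, r''⟩⟩ <;> simp_all
            have hrev : List.Chain' A r.reverse := by
              exact List.isChain_reverse.mpr (hr3.imp (fun a b h => hsymm a b h))
            obtain ⟨v', u, rest, hrr⟩ : ∃ v' u rest, r.reverse = v' :: u :: rest := by
              rcases hre : r.reverse with _ | ⟨v', _ | ⟨u, rest⟩⟩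
              · simp_all
              · have := congrArg List.length hre; simp at this; omega
              · exact ⟨v', u, rest, rfl⟩
            have hv' : v' = v := by
              have : r.reverse.head? = some v := by rw [List.head?_reverse]; exact hv
              rw [hrr] at this; simpa using this
            subst hv'
            have hvu : A v u := by
              rw [hrr] at hrev
              exact hrev.rel_head
            have hur : u ∈ r := by
              have : u ∈ r.reverse := by rw [hrr]; simp
              simpa using this
            rcases H2 v a b u hva hvb hvu with h | h | h
            · exact h
            · exact absurd (h ▸ hur) har
            · exact absurd (h ▸ hur) hbr
        subst hab
        exact ⟨t', by simp⟩

private theorem GH.path_unique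
    (hsymm : ∀ a b, A a b → A b a)
    (H1 : ∀ a b, A start a → A start b → a = b)
    (H2 : ∀ v a b c, A v a → A v b → A v c → a = b ∨ a = c ∨ b = c)
    (p q : List V)
    (hp1 : p.head? = some start) (hp2 : p.Nodup) (hp3 : List.Chain' A p)
    (hpmax : ∀ v w, p.getLast? = some v → A v w → w ∈ p)
    (hq1 : q.head? = some start) (hq2 : q.Nodup) (hq3 : List.Chain' A q)
    (hqmax : ∀ v w, q.getLast? = some v → A v w → w ∈ q) :
    p = q :=
  (GH.path_prefix hsymm H1 H2 q hq1 hq2 hq3 hqmax p hp1 hp2 hp3).eq_of_length_le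
    (GH.path_prefix hsymm H1 H2 p hp1 hp2 hp3 hpmax q hq1 hq2 hq3).length_le

end GHAux

section GHAdj

variable {n s : ℕ} (G : GHGame n s) (x y : Fin n → Bool)

private theorem GH.adj_symm : ∀ a b, G.Adj x y a b → G.Adj x y b a := by
  rintro (a | a) (b | b) h <;> simp only [GHGame.Adj] at h ⊢
  · exact (G.EA x).symm _ _ h
  · exact h
  · exact h
  · exact (G.EB y).symm _ _ h

private theorem GH.adj_H1 :
    ∀ a b, G.Adj x y (Sum.inl none) a → G.Adj x y (Sum.inl none) b → a = b := by
  rintro (a | a) (b | b) h h' <;> simp only [GHGame.Adj] at h h'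
  · rw [h] at h'; simpa using h'
  · exact absurd h' (by simp)
  · exact absurd h (by simp)
  · exact absurd h (by simp)

private theorem GH.adj_H2 : ∀ v a b c, G.Adj x y v a → G.Adj x y v b → G.Adj x y v c →
    a = b ∨ a = c ∨ b = c := by
  rintro (v | v) a b c
  · have key : ∀ w, G.Adj x y (Sum.inl v) w →
        (∃ a', (G.EA x).partner v = some a' ∧ w = Sum.inl a') ∨
          (∃ i, v = some i ∧ w = Sum.inr i) := by
      rintro (w | w) h <;> simp only [GHGame.Adj] at h
      · exact Or.inl ⟨w, h, rfl⟩
      · exact Or.inr ⟨w, h, rfl⟩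
    intro ha hb hc
    rcases key a ha with ⟨a', h1, rfl⟩ | ⟨i, h1, rfl⟩ <;>
      rcases key b hb with ⟨b', h2, rfl⟩ | ⟨j, h2, rfl⟩ <;>
      rcases key c hc with ⟨c', h3, rfl⟩ | ⟨k, h3, rfl⟩ <;>
      simp_all
  · have key : ∀ w, G.Adj x y (Sum.inr v) w →
        w = Sum.inl (some v) ∨ (∃ i, (G.EB y).partner v = some i ∧ w = Sum.inr i) := by
      rintro (w | w) h <;> simp only [GHGame.Adj] at h
      · exact Or.inl (by rw [h])
      · exact Or.inr ⟨w, h, rfl⟩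
    intro ha hb hc
    rcases key a ha with rfl | ⟨i, h1, rfl⟩ <;>
      rcases key b hb with rfl | ⟨j, h2, rfl⟩ <;>
      rcases key c hc with rfl | ⟨k, h3, rfl⟩ <;>
      simp_all

private theorem GH.adj_eq {y' : Fin n → Bool} (h : (G.EB y).partner = (G.EB y').partner) :
    G.Adj x y = G.Adj x y' := by
  funext a b
  rcases a with a | a <;> rcases b with b | b <;> simp only [GHGame.Adj, h]

end GHAdj

private theorem GH.card_matchings (s : ℕ) :
    Fintype.card {g : Fin s → Option (Fin s) // ∀ a, g a ≠ some a} = s ^ s := by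
  rw [Fintype.card_congr (Equiv.subtypePiEquivPi (p := fun a (o : Option (Fin s)) => o ≠ some a))]
  rw [Fintype.card_pi]
  have : ∀ a : Fin s, Fintype.card {o : Option (Fin s) // o ≠ some a} = s := by
    intro a
    have := Fintype.card_subtype_compl (p := fun o : Option (Fin s) => o = some a)
    simp only [Fintype.card_option, Fintype.card_fin, Fintype.card_subtype_eq] at this
    simpa using this
  simp [this]

/-- If `f` is injective for Bob (distinct `y`'s can always be distinguished by some `x`),
then any garden-hose game of size `s` computing `f` satisfies `s · log₂ s ≥ n`;
in particular the garden-hose complexity `s = GH(f)` satisfies `s · log₂ s ≥ n`. -/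
theorem gh_lower_bound_injective (n : ℕ)
    (f : (Fin n → Bool) → (Fin n → Bool) → Bool)
    (hinj : ∀ y y', y ≠ y' → ∃ x, f x y ≠ f x y') :
    ∀ s, (∃ G : GHGame n s, G.Computes f) →
      (n : ℝ) ≤ (s : ℝ) * Real.logb 2 (s : ℝ) := by
  intro s ⟨G, hG⟩
  -- The map y ↦ Bob's partner function is injective.
  have hFinj : Function.Injective
      (fun y : Fin n → Bool =>
        (⟨(G.EB y).partner, (G.EB y).irrefl⟩ :
          {g : Fin s → Option (Fin s) // ∀ a, g a ≠ some a})) := by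
    intro y y' hyy'
    by_contra hne
    obtain ⟨x, hx⟩ := hinj y y' hne
    obtain ⟨p, v, ⟨hp1, hp2, hp3, hpmax⟩, hpl, hpv⟩ := hG x y
    obtain ⟨q, w, ⟨hq1, hq2, hq3, hqmax⟩, hql, hqw⟩ := hG x y'
    have hpart : (G.EB y).partner = (G.EB y').partner := congrArg Subtype.val hyy'
    have hAdj : G.Adj x y = G.Adj x y' := GH.adj_eq G x y hpart
    rw [hAdj] at hp3 hpmax
    have hpq : p = q :=
      GH.path_unique (GH.adj_symm G x y') (GH.adj_H1 G x y') (GH.adj_H2 G x y')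
        p q hp1 hp2 hp3 hpmax hq1 hq2 hq3 hqmax
    rw [hpq, hql] at hpl
    have : v = w := by injection hpl with h; exact h.symm
    rw [this, hqw] at hpv
    exact hx hpv.symm
  have hcard : 2 ^ n ≤ s ^ s := by
    have h := Fintype.card_le_of_injective _ hFinj
    rwa [GH.card_matchings, Fintype.card_fun, Fintype.card_bool, Fintype.card_fin] at h
  have hR : (2 : ℝ) ^ n ≤ (s : ℝ) ^ s := by exact_mod_cast hcard
  have h1 : Real.logb 2 ((2 : ℝ) ^ n) ≤ Real.logb 2 ((s : ℝ) ^ s) :=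
    Real.logb_le_logb_of_le one_lt_two (by positivity) hR
  rw [Real.logb_pow, Real.logb_pow, Real.logb_self_eq_one (by norm_num)] at h1
  simpa using h1
end

section
/- For every n there exists a Boolean function f: {0,1}ⁿ × {0,1}ⁿ → {0,1} whose garden-hose complexity s = GH(f) satisfies (s+1)·log₂(s+1) ≥ 2^{n-1}; in particular GH(f) is exponential in n. -/
namespace GH

variable {n s : ℕ}

/-- The (at most two) potential neighbors of a vertex. -/
def nbrs (G : GHGame n s) (x y : Fin n → Bool) :
    GHVertex s → Option (GHVertex s) × Option (GHVertex s)
  | Sum.inl a => (((G.EA x).partner a).map Sum.inl, a.map Sum.inr)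
  | Sum.inr b => (some (Sum.inl (some b)), ((G.EB y).partner b).map Sum.inr)

lemma adj_iff (G : GHGame n s) (x y : Fin n → Bool) (v w : GHVertex s) :
    G.Adj x y v w ↔ (nbrs G x y v).1 = some w ∨ (nbrs G x y v).2 = some w := by
  rcases v with (a | b) <;> rcases w with (a' | b')
  · cases hp : (G.EA x).partner a <;> cases a <;>
      simp [GHGame.Adj, nbrs, hp, eq_comm]
  · cases hp : (G.EA x).partner a <;> cases a <;>
      simp [GHGame.Adj, nbrs, hp, eq_comm]
  · cases hp : (G.EB y).partner b <;>
      simp [GHGame.Adj, nbrs, hp, eq_comm]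
  · cases hp : (G.EB y).partner b <;>
      simp [GHGame.Adj, nbrs, hp, eq_comm]

lemma adj_symm_s14 (G : GHGame n s) (x y : Fin n → Bool) :
    ∀ v w, G.Adj x y v w → G.Adj x y w v := by
  rintro (a | b) (a' | b') h <;> simp only [GHGame.Adj] at h ⊢
  · exact (G.EA x).symm _ _ h
  · exact h
  · exact h
  · exact (G.EB y).symm _ _ h

lemma adj_tap (G : GHGame n s) (x y : Fin n → Bool) {w w' : GHVertex s}
    (h : G.Adj x y (Sum.inl none) w) (h' : G.Adj x y (Sum.inl none) w') : w = w' := by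
  rw [adj_iff] at h h'
  simp only [nbrs, Option.map_none] at h h'
  rcases h with h | h; swap; · simp at h
  rcases h' with h' | h'; swap; · simp at h'
  rw [h] at h'; exact Option.some_injective _ h'

lemma adj_deg2 (G : GHGame n s) (x y : Fin n → Bool) {v w1 w2 w3 : GHVertex s}
    (h1 : G.Adj x y v w1) (h2 : G.Adj x y v w2) (h3 : G.Adj x y v w3) :
    w1 = w2 ∨ w1 = w3 ∨ w2 = w3 := by
  rw [adj_iff] at h1 h2 h3
  rcases h1 with h1 | h1 <;> rcases h2 with h2 | h2 <;> rcases h3 with h3 | h3 <;>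
    simp_all <;> tauto

end GH

namespace GH
variable {n s : ℕ}

lemma gets_agree (G : GHGame n s) (x y : Fin n → Bool) {p q : List (GHVertex s)}
    (hp : G.IsMaximalPath x y p) (hq : G.IsMaximalPath x y q) :
    ∀ i (hip : i < p.length) (hiq : i < q.length), p.get ⟨i, hip⟩ = q.get ⟨i, hiq⟩ := by
  obtain ⟨hp1, hp2, hp3, _⟩ := hp
  obtain ⟨hq1, hq2, hq3, _⟩ := hq
  intro i
  induction i using Nat.strong_induction_on with
  | _ i IH =>
  intro hip hiq
  have hpne : p ≠ [] := by rintro rfl; simp at hp1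
  have hqne : q ≠ [] := by rintro rfl; simp at hq1
  match i with
  | 0 =>
    rw [List.get_mk_zero, List.get_mk_zero]
    rw [List.head?_eq_head hpne] at hp1
    rw [List.head?_eq_head hqne] at hq1
    rw [Option.some_injective _ hp1, Option.some_injective _ hq1]
  | Nat.succ i =>
    have hi : p.get ⟨i, by omega⟩ = q.get ⟨i, by omega⟩ := IH i (by omega) (by omega) (by omega)
    have A1 : G.Adj x y (p.get ⟨i, by omega⟩) (p.get ⟨i+1, hip⟩) :=
      List.isChain_iff_getElem.mp hp3 i (by omega)
    have A2 : G.Adj x y (p.get ⟨i, by omega⟩) (q.get ⟨i+1, hiq⟩) := by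
      rw [hi]; exact List.isChain_iff_getElem.mp hq3 i (by omega)
    cases i with
    | zero =>
      have h0 : p.get ⟨0, by omega⟩ = Sum.inl none := by
        rw [List.get_mk_zero]
        rw [List.head?_eq_head hpne] at hp1
        exact Option.some_injective _ hp1
      rw [h0] at A1 A2
      exact adj_tap G x y A1 A2
    | succ j =>
      have hj : p.get ⟨j, by omega⟩ = q.get ⟨j, by omega⟩ := IH j (by omega) (by omega) (by omega)
      have A3 : G.Adj x y (p.get ⟨j+1, by omega⟩) (p.get ⟨j, by omega⟩) :=
        adj_symm_s14 G x y _ _ (List.isChain_iff_getElem.mp hp3 j (by omega))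
      rcases adj_deg2 G x y A3 A1 A2 with h | h | h
      · exact absurd (List.nodup_iff_injective_get.mp hp2 h) (by simp; omega)
      · rw [hj] at h
        exact absurd (List.nodup_iff_injective_get.mp hq2 h) (by simp; omega)
      · exact h

lemma length_le (G : GHGame n s) (x y : Fin n → Bool) {p q : List (GHVertex s)}
    (hp : G.IsMaximalPath x y p) (hq : G.IsMaximalPath x y q) : q.length ≤ p.length := by
  by_contra hlt
  push_neg at hlt
  have hpne : p ≠ [] := by rintro rfl; simp [GHGame.IsMaximalPath] at hp
  have hL : 1 ≤ p.length := List.length_pos_iff.mpr hpne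
  set L := p.length with hLdef
  have hlast : p.getLast? = some (p.get ⟨L - 1, by omega⟩) := by
    rw [List.getLast?_eq_getLast hpne, List.getLast_eq_getElem]; rfl
  have hLL : L - 1 + 1 = L := by omega
  have hadj : G.Adj x y (p.get ⟨L - 1, by omega⟩) (q.get ⟨L, hlt⟩) := by
    have : G.Adj x y (q.get ⟨L - 1, by omega⟩) (q.get ⟨L - 1 + 1, by omega⟩) :=
      List.isChain_iff_getElem.mp hq.2.2.1 (L - 1) (by omega)
    have heq : q.get ⟨L - 1, by omega⟩ = p.get ⟨L - 1, by omega⟩ :=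
      (gets_agree G x y hp hq (L - 1) (by omega) (by omega)).symm
    rw [heq] at this
    simp only [hLL] at this
    exact this
  have hmem := hp.2.2.2 _ _ hlast hadj
  obtain ⟨⟨k, hk⟩, hkeq⟩ := List.mem_iff_get.mp hmem
  have : q.get ⟨k, by omega⟩ = q.get ⟨L, hlt⟩ := by
    rw [← hkeq]; exact gets_agree G x y hq hp k (by omega) (by omega)
  have := List.nodup_iff_injective_get.mp hq.2.1 this
  simp at this; omega

lemma maximalPath_unique (G : GHGame n s) (x y : Fin n → Bool) {p q : List (GHVertex s)}
    (hp : G.IsMaximalPath x y p) (hq : G.IsMaximalPath x y q) : p = q := by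
  have hlen : p.length = q.length :=
    le_antisymm (length_le G x y hq hp) (length_le G x y hp hq)
  exact List.ext_get hlen (fun i h1 h2 => gets_agree G x y hp hq i h1 h2)

end GH

namespace GH
variable {n s : ℕ}

lemma computes_unique {G : GHGame n s} {f f' : (Fin n → Bool) → (Fin n → Bool) → Bool}
    (h : G.Computes f) (h' : G.Computes f') : f = f' := by
  funext x y
  obtain ⟨p, v, hp, hlast, hv⟩ := h x y
  obtain ⟨p', v', hp', hlast', hv'⟩ := h' x y
  rw [maximalPath_unique G x y hp hp'] at hlast
  rw [hlast] at hlast'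
  rw [← hv, ← hv', Option.some_injective _ hlast']

/-- Encoding of a game by its raw matching data. -/
abbrev Code (n s : ℕ) : Type :=
  ((Fin n → Bool) → ∀ a : Option (Fin s), {v : Option (Option (Fin s)) // v ≠ some a}) ×
  ((Fin n → Bool) → ∀ b : Fin s, {v : Option (Fin s) // v ≠ some b})

instance : Nonempty (Code n s) :=
  ⟨(fun _ a => ⟨none, by simp⟩, fun _ b => ⟨none, by simp⟩)⟩

def encode (G : GHGame n s) : Code n s :=
  (fun x a => ⟨(G.EA x).partner a, (G.EA x).irrefl a⟩,
   fun y b => ⟨(G.EB y).partner b, (G.EB y).irrefl b⟩)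

lemma adj_congr {G G' : GHGame n s} (h : encode G = encode G') (x y : Fin n → Bool)
    (v w : GHVertex s) : G.Adj x y v w ↔ G'.Adj x y v w := by
  have hA : ∀ x a, (G.EA x).partner a = (G'.EA x).partner a := fun x a =>
    congrArg Subtype.val (congrFun (congrFun (congrArg Prod.fst h) x) a)
  have hB : ∀ y b, (G.EB y).partner b = (G'.EB y).partner b := fun y b =>
    congrArg Subtype.val (congrFun (congrFun (congrArg Prod.snd h) y) b)
  rcases v with (a | b) <;> rcases w with (a' | b') <;> simp [GHGame.Adj, hA, hB]

lemma computes_congr {G G' : GHGame n s} (h : encode G = encode G')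
    {f : (Fin n → Bool) → (Fin n → Bool) → Bool} (hf : G.Computes f) : G'.Computes f := by
  intro x y
  obtain ⟨p, v, ⟨h1, h2, h3, h4⟩, hlast, hv⟩ := hf x y
  refine ⟨p, v, ⟨h1, h2, ?_, ?_⟩, hlast, hv⟩
  · exact List.IsChain.imp (fun a b hab => (adj_congr h x y a b).mp hab) h3
  · exact fun v' w hl ha => h4 v' w hl ((adj_congr h x y v' w).mpr ha)

lemma card_code_le : Fintype.card (Code n s) ≤ (s + 1) ^ ((2 * s + 1) * 2 ^ n) := by
  classical
  have hA : Fintype.card (∀ a : Option (Fin s), {v : Option (Option (Fin s)) // v ≠ some a})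
      = (s + 1) ^ (s + 1) := by
    rw [Fintype.card_pi]
    have : ∀ a : Option (Fin s),
        Fintype.card {v : Option (Option (Fin s)) // v ≠ some a} = s + 1 := by
      intro a
      rw [Fintype.card_subtype_compl]
      simp
    simp [this]
  have hB : Fintype.card (∀ b : Fin s, {v : Option (Fin s) // v ≠ some b}) = s ^ s := by
    rw [Fintype.card_pi]
    have : ∀ b : Fin s, Fintype.card {v : Option (Fin s) // v ≠ some b} = s := by
      intro b
      rw [Fintype.card_subtype_compl]
      simp
    simp [this]
  have hin : Fintype.card (Fin n → Bool) = 2 ^ n := by simp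
  have : Fintype.card (Code n s) = ((s + 1) ^ (s + 1)) ^ 2 ^ n * (s ^ s) ^ 2 ^ n := by
    simp [Fintype.card_prod, Fintype.card_fun, hA, hB]
  rw [this]
  calc ((s + 1) ^ (s + 1)) ^ 2 ^ n * (s ^ s) ^ 2 ^ n
      ≤ ((s + 1) ^ (s + 1)) ^ 2 ^ n * ((s + 1) ^ s) ^ 2 ^ n := by
        gcongr <;> omega
    _ = (s + 1) ^ ((2 * s + 1) * 2 ^ n) := by
        rw [← pow_mul, ← pow_mul, ← pow_add, ← add_mul]
        ring_nf

lemma card_computable_le (n s : ℕ) [DecidablePred fun f : (Fin n → Bool) → (Fin n → Bool) → Bool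
      => ∃ G : GHGame n s, G.Computes f] :
    (Finset.univ.filter
        (fun f : (Fin n → Bool) → (Fin n → Bool) → Bool => ∃ G : GHGame n s, G.Computes f)).card
      ≤ Fintype.card (Code n s) := by
  classical
  set g : ((Fin n → Bool) → (Fin n → Bool) → Bool) → Code n s := fun f =>
    if h : ∃ G : GHGame n s, G.Computes f then encode h.choose else Classical.arbitrary _ with hg
  rw [← Finset.card_univ (α := Code n s)]
  apply Finset.card_le_card_of_injOn g (fun f _ => Finset.mem_univ _)
  intro f1 h1 f2 h2 heq
  simp only [Finset.coe_filter, Set.mem_setOf_eq, Finset.mem_univ, true_and] at h1 h2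
  rw [hg] at heq
  simp only [dif_pos h1, dif_pos h2] at heq
  exact computes_unique (computes_congr heq h1.choose_spec) h2.choose_spec

end GH

open GH

/-- There exist Boolean functions with exponential garden-hose complexity: for every `n`
there is an `f` such that every garden-hose game of size `s` computing `f` satisfies
`(s+1) · log₂(s+1) ≥ 2^(n-1)`. -/
theorem gh_exponential_function (n : ℕ) :
    ∃ f : (Fin n → Bool) → (Fin n → Bool) → Bool,
      ∀ s, (∃ G : GHGame n s, G.Computes f) →
        (2 : ℝ) ^ (n - 1 : ℕ) ≤ ((s : ℝ) + 1) * Real.logb 2 ((s : ℝ) + 1) := by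
  classical
  set K : ℕ := 2 ^ (n - 1) with hK
  have hK1 : 1 ≤ K := Nat.one_le_two_pow
  have hKcast : ((K : ℕ) : ℝ) = (2 : ℝ) ^ (n - 1 : ℕ) := by rw [hK]; push_cast; ring
  set Bad : Finset ℕ := (Finset.range K).filter
    (fun s => ((s : ℝ) + 1) * Real.logb 2 ((s : ℝ) + 1) < (2 : ℝ) ^ (n - 1 : ℕ)) with hBad
  have hlog1 : ∀ s : ℕ, 1 ≤ s → (1 : ℝ) ≤ Real.logb 2 ((s : ℝ) + 1) := by
    intro s hs
    have h1 : (1 : ℝ) ≤ (s : ℝ) := by exact_mod_cast hs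
    calc (1 : ℝ) = Real.logb 2 2 := (Real.logb_self_eq_one (by norm_num)).symm
      _ ≤ Real.logb 2 ((s : ℝ) + 1) := by
          gcongr
          · norm_num
          · linarith
  have hbad_mem : ∀ s : ℕ,
      ((s : ℝ) + 1) * Real.logb 2 ((s : ℝ) + 1) < (2 : ℝ) ^ (n - 1 : ℕ) → s ∈ Bad := by
    intro s hs
    rw [hBad, Finset.mem_filter, Finset.mem_range]
    refine ⟨?_, hs⟩
    by_contra hge
    push_neg at hge
    have hs1 : 1 ≤ s := le_trans hK1 hge
    have hlog := hlog1 s hs1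
    have hsK : ((K : ℕ) : ℝ) ≤ (s : ℝ) := by exact_mod_cast hge
    have hs0 : (0 : ℝ) ≤ (s : ℝ) := by positivity
    nlinarith [hKcast]
  -- the set of functions computable at some bad size
  set C : Finset ((Fin n → Bool) → (Fin n → Bool) → Bool) :=
    Bad.biUnion (fun s => Finset.univ.filter
      (fun f => ∃ G : GHGame n s, G.Computes f)) with hC
  have hcardF : Fintype.card ((Fin n → Bool) → (Fin n → Bool) → Bool) = 2 ^ (2 ^ n * 2 ^ n) := by
    simp [Fintype.card_fun, pow_mul]
  have hcard : C.card < Fintype.card ((Fin n → Bool) → (Fin n → Bool) → Bool) := by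
    rcases Finset.eq_empty_or_nonempty Bad with hBe | hBne
    · rw [hC, hBe]
      simp [Fintype.card_pos]
    · set M : ℕ := Bad.max' hBne with hM
      have hMmem : M ∈ Bad := Bad.max'_mem hBne
      have hsum : C.card ≤ (M + 1) * (M + 1) ^ ((2 * M + 1) * 2 ^ n) := by
        calc C.card ≤ ∑ t ∈ Bad, (Finset.univ.filter
              (fun f : (Fin n → Bool) → (Fin n → Bool) → Bool =>
                ∃ G : GHGame n t, G.Computes f)).card := Finset.card_biUnion_le
          _ ≤ Bad.card • ((M + 1) ^ ((2 * M + 1) * 2 ^ n)) := by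
              apply Finset.sum_le_card_nsmul
              intro t ht
              have htM : t ≤ M := Bad.le_max' t ht
              calc (Finset.univ.filter (fun f : (Fin n → Bool) → (Fin n → Bool) → Bool =>
                      ∃ G : GHGame n t, G.Computes f)).card
                  ≤ Fintype.card (Code n t) := card_computable_le n t
                _ ≤ (t + 1) ^ ((2 * t + 1) * 2 ^ n) := card_code_le
                _ ≤ (M + 1) ^ ((2 * M + 1) * 2 ^ n) := by
                    calc (t + 1) ^ ((2 * t + 1) * 2 ^ n)
                        ≤ (M + 1) ^ ((2 * t + 1) * 2 ^ n) :=
                          Nat.pow_le_pow_left (by omega) _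
                      _ ≤ (M + 1) ^ ((2 * M + 1) * 2 ^ n) :=
                          Nat.pow_le_pow_right (by omega) (by gcongr <;> omega)
          _ ≤ (M + 1) * (M + 1) ^ ((2 * M + 1) * 2 ^ n) := by
              rw [smul_eq_mul]
              gcongr
              have : Bad ⊆ Finset.range (M + 1) := by
                intro t ht
                rw [Finset.mem_range]
                exact Nat.lt_succ_of_le (Bad.le_max' t ht)
              calc Bad.card ≤ (Finset.range (M+1)).card := Finset.card_le_card this
                _ = M + 1 := Finset.card_range _
      rw [hcardF]
      rcases Nat.eq_zero_or_pos M with hM0 | hMpos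
      · rw [hM0] at hsum
        norm_num at hsum
        calc C.card ≤ 1 := hsum
          _ < 2 ^ (2 ^ n * 2 ^ n) := Nat.one_lt_two_pow (by positivity)
      -- M ≥ 1 : use the real logarithm bound
      · have hMbad : ((M : ℝ) + 1) * Real.logb 2 ((M : ℝ) + 1) < (2 : ℝ) ^ (n - 1 : ℕ) := by
          have := Finset.mem_filter.mp hMmem
          exact this.2
        have hlogM : (1 : ℝ) ≤ Real.logb 2 ((M : ℝ) + 1) := hlog1 M hMpos
        -- first derive n ≥ 1 (in fact n ≥ 3)
        have hn2 : 2 ≤ n - 1 := by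
          by_contra hn
          push_neg at hn
          have h1 : (2 : ℝ) ^ (n - 1 : ℕ) ≤ (2 : ℝ) ^ (1 : ℕ) :=
            pow_le_pow_right₀ (by norm_num) (by omega)
          have hM2 : (2 : ℝ) ≤ (M : ℝ) + 1 := by
            have : (1 : ℝ) ≤ (M : ℝ) := by exact_mod_cast hMpos
            linarith
          nlinarith
        have hn1 : 1 ≤ n := by omega
        -- real-number comparison
        have hlt : (((M + 1) * (M + 1) ^ ((2 * M + 1) * 2 ^ n) : ℕ) : ℝ)
            < ((2 ^ (2 ^ n * 2 ^ n) : ℕ) : ℝ) := by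
          push_cast
          rw [← pow_succ']
          have hlog2 : (0 : ℝ) < Real.log 2 := Real.log_pos (by norm_num)
          have hMlog : ((M : ℝ) + 1) * Real.log ((M : ℝ) + 1)
              < (2 : ℝ) ^ (n - 1 : ℕ) * Real.log 2 := by
            have := hMbad
            rw [Real.logb, div_eq_mul_inv] at this
            calc ((M : ℝ) + 1) * Real.log ((M : ℝ) + 1)
                = (((M : ℝ) + 1) * (Real.log ((M : ℝ) + 1) * (Real.log 2)⁻¹)) * Real.log 2 := by
                  field_simp
              _ < (2 : ℝ) ^ (n - 1 : ℕ) * Real.log 2 := by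
                  apply mul_lt_mul_of_pos_right _ hlog2
                  calc ((M : ℝ) + 1) * (Real.log ((M : ℝ) + 1) * (Real.log 2)⁻¹)
                      = ((M : ℝ) + 1) * Real.logb 2 ((M : ℝ) + 1) := by
                        rw [Real.logb, div_eq_mul_inv]
                    _ < _ := hMbad
          have hlogMpos : (0 : ℝ) ≤ Real.log ((M : ℝ) + 1) := by
            apply Real.log_nonneg
            have : (0 : ℝ) ≤ (M : ℝ) := by positivity
            linarith
          -- compare logs
          apply (Real.log_lt_log_iff (by positivity) (by positivity)).mp
          rw [Real.log_pow, Real.log_pow]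
          have hexp : ((2 * M + 1) * 2 ^ n + 1 : ℕ) ≤ ((2 * M + 2) * 2 ^ n : ℕ) := by
            have : 1 ≤ 2 ^ n := Nat.one_le_two_pow
            nlinarith
          have h2n : (2 : ℝ) * (2 : ℝ) ^ (n - 1 : ℕ) = (2 : ℝ) ^ n := by
            rw [← pow_succ']
            congr 1
            omega
          calc (((2 * M + 1) * 2 ^ n + 1 : ℕ) : ℝ) * Real.log ((M : ℝ) + 1)
              ≤ (((2 * M + 2) * 2 ^ n : ℕ) : ℝ) * Real.log ((M : ℝ) + 1) := by
                apply mul_le_mul_of_nonneg_right _ hlogMpos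
                exact_mod_cast hexp
            _ = (2 * (2 : ℝ) ^ n) * (((M : ℝ) + 1) * Real.log ((M : ℝ) + 1)) := by
                push_cast; ring
            _ < (2 * (2 : ℝ) ^ n) * ((2 : ℝ) ^ (n - 1 : ℕ) * Real.log 2) := by
                apply mul_lt_mul_of_pos_left hMlog
                positivity
            _ = ((2 ^ n * 2 ^ n : ℕ) : ℝ) * Real.log 2 := by
                push_cast
                rw [show (2 : ℝ) * (2:ℝ) ^ n * ((2:ℝ) ^ (n - 1 : ℕ) * Real.log 2)
                    = ((2:ℝ) * (2:ℝ) ^ (n - 1 : ℕ)) * (2:ℝ) ^ n * Real.log 2 by ring, h2n]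
        have := Nat.cast_lt (α := ℝ) |>.mp hlt
        omega
  obtain ⟨f, hf⟩ : ∃ f : (Fin n → Bool) → (Fin n → Bool) → Bool, f ∉ C := by
    by_contra h
    push_neg at h
    have hsub : (Finset.univ : Finset ((Fin n → Bool) → (Fin n → Bool) → Bool)) ⊆ C :=
      fun f _ => h f
    have := Finset.card_le_card hsub
    rw [Finset.card_univ] at this
    omega
  refine ⟨f, fun s hs => ?_⟩
  by_contra hineq
  push_neg at hineq
  exact hf (Finset.mem_biUnion.mpr ⟨s, hbad_mem s hineq,
    Finset.mem_filter.mpr ⟨Finset.mem_univ _, hs⟩⟩)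
end

section
/- Let |ψ⁰⟩ and |ψ¹⟩ be pure states on registers R⊗A⊗Ã⊗B⊗B̃ (with R, A, B single qubits) such that there exist unitaries U acting on A⊗Ã with U|ψ⁰⟩ = |β⟩_{RA} ⊗ |P⟩_{ÃBB̃}, and V acting on B⊗B̃ with V|ψ¹⟩ = |β⟩_{RB} ⊗ |Q⟩_{AÃB̃}, where |β⟩ = (|00⟩ + |11⟩)/√2. Then |⟨ψ⁰|ψ¹⟩|² ≤ 1/4. -/
open Matrix Kronecker

noncomputable def cinner {ι : Type*} [Fintype ι] (v w : ι → ℂ) : ℂ :=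
  ∑ i, (starRingEnd ℂ) (v i) * w i

lemma kron_conjT {m n p q : Type*} (A : Matrix m n ℂ) (B : Matrix p q ℂ) :
    (A ⊗ₖ B)ᴴ = Aᴴ ⊗ₖ Bᴴ := by
  ext ⟨i, j⟩ ⟨k, l⟩
  simp [Matrix.conjTranspose_apply, Matrix.kroneckerMap_apply, mul_comm]

lemma cinner_mulVec {n : Type*} [Fintype n] [DecidableEq n] {M : Matrix n n ℂ}
    (h : star M * M = 1) (f g : n → ℂ) :
    cinner (M.mulVec f) (M.mulVec g) = cinner f g := by
  have h1 : cinner (M.mulVec f) (M.mulVec g)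
      = dotProduct (star (M.mulVec f)) (M.mulVec g) := by
    simp only [cinner, dotProduct, Pi.star_apply, starRingEnd_apply]
  have h2 : cinner f g = dotProduct (star f) g := by
    simp only [cinner, dotProduct, Pi.star_apply, starRingEnd_apply]
  rw [h1, h2, Matrix.star_mulVec, ← Matrix.dotProduct_mulVec, Matrix.mulVec_mulVec,
    ← Matrix.star_eq_conjTranspose, h, Matrix.one_mulVec]

def eqv (dA dB : ℕ) :
    (Fin 2 × (Fin 2 × Fin dA) × (Fin 2 × Fin dB)) ≃ (Fin 2 × Fin 2 × Fin dA × Fin 2 × Fin dB) where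
  toFun z := (z.1, z.2.1.1, z.2.1.2, z.2.2.1, z.2.2.2)
  invFun x := (x.1, (x.2.1, x.2.2.1), (x.2.2.2.1, x.2.2.2.2))
  left_inv := by rintro ⟨r, ⟨a, at'⟩, ⟨b, bt⟩⟩; rfl
  right_inv := by rintro ⟨r, a, at', b, bt⟩; rfl

def eqv2 (dA dB : ℕ) :
    ((Fin 2 × Fin dA × Fin dB) × (Fin 2 × Fin 2)) ≃ (Fin 2 × Fin 2 × Fin dA × Fin 2 × Fin dB) where
  toFun z := (z.1.1, z.2.1, z.1.2.1, z.2.2, z.1.2.2)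
  invFun x := ((x.1, x.2.2.1, x.2.2.2.2), (x.2.1, x.2.2.2.1))
  left_inv := by rintro ⟨⟨r, at', bt⟩, ⟨a, b⟩⟩; rfl
  right_inv := by rintro ⟨r, a, at', b, bt⟩; rfl

noncomputable def Wm (dA dB : ℕ) (U : Matrix (Fin 2 × Fin dA) (Fin 2 × Fin dA) ℂ)
    (V : Matrix (Fin 2 × Fin dB) (Fin 2 × Fin dB) ℂ) :
    Matrix (Fin 2 × Fin 2 × Fin dA × Fin 2 × Fin dB) (Fin 2 × Fin 2 × Fin dA × Fin 2 × Fin dB) ℂ :=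
  (((1 : Matrix (Fin 2) (Fin 2) ℂ) ⊗ₖ (U ⊗ₖ V)).submatrix (eqv dA dB).symm (eqv dA dB).symm)

lemma Wm_apply (dA dB : ℕ) (U : Matrix (Fin 2 × Fin dA) (Fin 2 × Fin dA) ℂ)
    (V : Matrix (Fin 2 × Fin dB) (Fin 2 × Fin dB) ℂ)
    (x y : Fin 2 × Fin 2 × Fin dA × Fin 2 × Fin dB) :
    Wm dA dB U V x y = (if x.1 = y.1 then 1 else 0)
      * (U (x.2.1, x.2.2.1) (y.2.1, y.2.2.1)
        * V (x.2.2.2.1, x.2.2.2.2) (y.2.2.2.1, y.2.2.2.2)) := by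
  simp [Wm, Matrix.submatrix_apply, Matrix.kroneckerMap_apply, Matrix.one_apply, eqv]

lemma Wm_unitary (dA dB : ℕ) {U : Matrix (Fin 2 × Fin dA) (Fin 2 × Fin dA) ℂ}
    {V : Matrix (Fin 2 × Fin dB) (Fin 2 × Fin dB) ℂ}
    (hU : U ∈ Matrix.unitaryGroup (Fin 2 × Fin dA) ℂ)
    (hV : V ∈ Matrix.unitaryGroup (Fin 2 × Fin dB) ℂ) :
    star (Wm dA dB U V) * Wm dA dB U V = 1 := by
  have hU1 : Uᴴ * U = 1 := hU.1
  have hV1 : Vᴴ * V = 1 := hV.1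
  rw [Matrix.star_eq_conjTranspose, Wm, Matrix.conjTranspose_submatrix,
    Matrix.submatrix_mul_equiv, kron_conjT, kron_conjT, Matrix.conjTranspose_one,
    ← Matrix.mul_kronecker_mul, ← Matrix.mul_kronecker_mul, one_mul, hU1, hV1,
    Matrix.one_kronecker_one, Matrix.one_kronecker_one, Matrix.submatrix_one_equiv]

noncomputable def Pp {dA dB : ℕ} (V : Matrix (Fin 2 × Fin dB) (Fin 2 × Fin dB) ℂ)
    (P : Fin dA × Fin 2 × Fin dB → ℂ) : Fin dA × Fin 2 × Fin dB → ℂ :=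
  fun z => ∑ q : Fin 2 × Fin dB, V (z.2.1, z.2.2) q * P (z.1, q.1, q.2)

noncomputable def Qp {dA dB : ℕ} (U : Matrix (Fin 2 × Fin dA) (Fin 2 × Fin dA) ℂ)
    (Q : Fin 2 × Fin dA × Fin dB → ℂ) : Fin 2 × Fin dA × Fin dB → ℂ :=
  fun z => ∑ p : Fin 2 × Fin dA, U (z.1, z.2.1) p * Q (p.1, p.2, z.2.2)

/-- If from the state `|ψ⁰⟩` Alice can locally (by a unitary `U` on `A⊗Ã`) extract an
EPR pair `|β⟩_{RA}`, and from `|ψ¹⟩` Bob can locally (by a unitary `V` on `B⊗B̃`)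
extract an EPR pair `|β⟩_{RB}`, then `|⟨ψ⁰|ψ¹⟩|² ≤ 1/4`.
States live on registers `R ⊗ A ⊗ Ã ⊗ B ⊗ B̃` with `R, A, B` single qubits;
`U` and `V` act as the identity on the unmentioned registers. -/
theorem localized_qubits_inner_product (dA dB : ℕ)
    (ψ0 ψ1 : Fin 2 × Fin 2 × Fin dA × Fin 2 × Fin dB → ℂ)
    (hψ0 : cinner ψ0 ψ0 = 1) (hψ1 : cinner ψ1 ψ1 = 1)
    (U : Matrix (Fin 2 × Fin dA) (Fin 2 × Fin dA) ℂ)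
    (hU : U ∈ Matrix.unitaryGroup (Fin 2 × Fin dA) ℂ)
    (V : Matrix (Fin 2 × Fin dB) (Fin 2 × Fin dB) ℂ)
    (hV : V ∈ Matrix.unitaryGroup (Fin 2 × Fin dB) ℂ)
    (P : Fin dA × Fin 2 × Fin dB → ℂ) (Q : Fin 2 × Fin dA × Fin dB → ℂ)
    (hUψ0 : ∀ (r aq : Fin 2) (at' : Fin dA) (bq : Fin 2) (bt : Fin dB),
      (∑ p : Fin 2 × Fin dA, U (aq, at') p * ψ0 (r, p.1, p.2, bq, bt))
        = (if r = aq then ((Real.sqrt 2 : ℂ))⁻¹ else 0) * P (at', bq, bt))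
    (hVψ1 : ∀ (r aq : Fin 2) (at' : Fin dA) (bq : Fin 2) (bt : Fin dB),
      (∑ p : Fin 2 × Fin dB, V (bq, bt) p * ψ1 (r, aq, at', p.1, p.2))
        = (if r = bq then ((Real.sqrt 2 : ℂ))⁻¹ else 0) * Q (aq, at', bt)) :
    ‖cinner ψ0 ψ1‖ ^ 2 ≤ 1 / 4 := by
  classical
  have hcc : (starRingEnd ℂ) ((Real.sqrt 2 : ℂ))⁻¹ * ((Real.sqrt 2 : ℂ))⁻¹ = (2 : ℂ)⁻¹ := by
    rw [map_inv₀, Complex.conj_ofReal, ← mul_inv, ← Complex.ofReal_mul,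
      Real.mul_self_sqrt (by norm_num)]
    norm_num
  -- action of W on ψ0
  have key0 : ∀ x : Fin 2 × Fin 2 × Fin dA × Fin 2 × Fin dB,
      (Wm dA dB U V).mulVec ψ0 x
        = (if x.1 = x.2.1 then ((Real.sqrt 2 : ℂ))⁻¹ else 0)
            * Pp V P (x.2.2.1, x.2.2.2.1, x.2.2.2.2) := by
    intro x
    have e1 : (Wm dA dB U V).mulVec ψ0 x = ∑ y, Wm dA dB U V x y * ψ0 y := rfl
    rw [e1, ← Equiv.sum_comp (eqv dA dB) (fun y => Wm dA dB U V x y * ψ0 y),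
      Fintype.sum_prod_type, Finset.sum_comm]
    have e2 : ∀ w : (Fin 2 × Fin dA) × (Fin 2 × Fin dB),
        (∑ r' : Fin 2, Wm dA dB U V x (eqv dA dB (r', w)) * ψ0 (eqv dA dB (r', w)))
        = U (x.2.1, x.2.2.1) w.1 * V (x.2.2.2.1, x.2.2.2.2) w.2
            * ψ0 (x.1, w.1.1, w.1.2, w.2.1, w.2.2) := by
      intro w
      simp [eqv, Wm_apply, ite_mul, Finset.sum_ite_eq]
    simp only [e2]
    rw [Fintype.sum_prod_type_right]
    have e3 : ∀ q : Fin 2 × Fin dB,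
        (∑ p : Fin 2 × Fin dA, U (x.2.1, x.2.2.1) p * V (x.2.2.2.1, x.2.2.2.2) q
           * ψ0 (x.1, p.1, p.2, q.1, q.2))
        = V (x.2.2.2.1, x.2.2.2.2) q
            * ((if x.1 = x.2.1 then ((Real.sqrt 2 : ℂ))⁻¹ else 0) * P (x.2.2.1, q.1, q.2)) := by
      intro q
      rw [← hUψ0 x.1 x.2.1 x.2.2.1 q.1 q.2, Finset.mul_sum]
      exact Finset.sum_congr rfl fun p _ => by ring
    simp only [e3]
    show _ = _ * Pp V P (x.2.2.1, x.2.2.2.1, x.2.2.2.2)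
    unfold Pp
    rw [Finset.mul_sum]
    exact Finset.sum_congr rfl fun q _ => by ring
  -- action of W on ψ1
  have key1 : ∀ x : Fin 2 × Fin 2 × Fin dA × Fin 2 × Fin dB,
      (Wm dA dB U V).mulVec ψ1 x
        = (if x.1 = x.2.2.2.1 then ((Real.sqrt 2 : ℂ))⁻¹ else 0)
            * Qp U Q (x.2.1, x.2.2.1, x.2.2.2.2) := by
    intro x
    have e1 : (Wm dA dB U V).mulVec ψ1 x = ∑ y, Wm dA dB U V x y * ψ1 y := rfl
    rw [e1, ← Equiv.sum_comp (eqv dA dB) (fun y => Wm dA dB U V x y * ψ1 y),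
      Fintype.sum_prod_type, Finset.sum_comm]
    have e2 : ∀ w : (Fin 2 × Fin dA) × (Fin 2 × Fin dB),
        (∑ r' : Fin 2, Wm dA dB U V x (eqv dA dB (r', w)) * ψ1 (eqv dA dB (r', w)))
        = U (x.2.1, x.2.2.1) w.1 * V (x.2.2.2.1, x.2.2.2.2) w.2
            * ψ1 (x.1, w.1.1, w.1.2, w.2.1, w.2.2) := by
      intro w
      simp [eqv, Wm_apply, ite_mul, Finset.sum_ite_eq]
    simp only [e2]
    rw [Fintype.sum_prod_type]
    have e3 : ∀ p : Fin 2 × Fin dA,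
        (∑ q : Fin 2 × Fin dB, U (x.2.1, x.2.2.1) p * V (x.2.2.2.1, x.2.2.2.2) q
           * ψ1 (x.1, p.1, p.2, q.1, q.2))
        = U (x.2.1, x.2.2.1) p
            * ((if x.1 = x.2.2.2.1 then ((Real.sqrt 2 : ℂ))⁻¹ else 0) * Q (p.1, p.2, x.2.2.2.2)) := by
      intro p
      rw [← hVψ1 x.1 p.1 p.2 x.2.2.2.1 x.2.2.2.2, Finset.mul_sum]
      exact Finset.sum_congr rfl fun q _ => by ring
    simp only [e3]
    show _ = _ * Qp U Q (x.2.1, x.2.2.1, x.2.2.2.2)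
    unfold Qp
    rw [Finset.mul_sum]
    exact Finset.sum_congr rfl fun p _ => by ring

  -- general sum reshuffling helpers
  have reduce : ∀ F : (Fin 2 × Fin 2 × Fin dA × Fin 2 × Fin dB) → ℂ,
      ∑ x, F x = ∑ k : Fin 2 × Fin dA × Fin dB, ∑ ab : Fin 2 × Fin 2, F (eqv2 dA dB (k, ab)) := by
    intro F
    rw [← Equiv.sum_comp (eqv2 dA dB) F, Fintype.sum_prod_type]
  have two_sum : ∀ G : Fin dA × Fin dB → Fin 2 → ℂ,
      (∑ k : Fin 2 × Fin dA × Fin dB, ∑ b : Fin 2, G k.2 b)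
        = 2 * ∑ w : Fin dA × Fin dB, ∑ b : Fin 2, G w b := by
    intro G
    rw [Fintype.sum_prod_type]
    have : ∀ x : Fin 2, (∑ y : Fin dA × Fin dB, ∑ b : Fin 2, G (x, y).2 b)
        = ∑ w : Fin dA × Fin dB, ∑ b : Fin 2, G w b := fun x => rfl
    simp only [this]
    rw [Fin.sum_univ_two, two_mul]
  have one_sum : ∀ G : Fin dA × Fin dB → Fin 2 → ℂ,
      (∑ k : Fin 2 × Fin dA × Fin dB, G k.2 k.1) = ∑ w : Fin dA × Fin dB, ∑ b : Fin 2, G w b := by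
    intro G
    rw [Fintype.sum_prod_type]
    exact Finset.sum_comm
  -- pointwise collapsed inner sums
  have inner01 : ∀ k : Fin 2 × Fin dA × Fin dB,
      (∑ ab : Fin 2 × Fin 2,
        (starRingEnd ℂ) ((if k.1 = ab.1 then ((Real.sqrt 2 : ℂ))⁻¹ else 0)
            * Pp V P (k.2.1, ab.2, k.2.2))
          * ((if k.1 = ab.2 then ((Real.sqrt 2 : ℂ))⁻¹ else 0) * Qp U Q (ab.1, k.2.1, k.2.2)))
      = ((starRingEnd ℂ) ((Real.sqrt 2 : ℂ))⁻¹ * ((Real.sqrt 2 : ℂ))⁻¹)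
          * ((starRingEnd ℂ) (Pp V P (k.2.1, k.1, k.2.2)) * Qp U Q (k.1, k.2.1, k.2.2)) := by
    rintro ⟨r, w⟩
    rw [Fintype.sum_prod_type, Fin.sum_univ_two, Fin.sum_univ_two, Fin.sum_univ_two]
    fin_cases r <;> simp <;> ring
  have inner00 : ∀ k : Fin 2 × Fin dA × Fin dB,
      (∑ ab : Fin 2 × Fin 2,
        (starRingEnd ℂ) ((if k.1 = ab.1 then ((Real.sqrt 2 : ℂ))⁻¹ else 0)
            * Pp V P (k.2.1, ab.2, k.2.2))
          * ((if k.1 = ab.1 then ((Real.sqrt 2 : ℂ))⁻¹ else 0) * Pp V P (k.2.1, ab.2, k.2.2)))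
      = ((starRingEnd ℂ) ((Real.sqrt 2 : ℂ))⁻¹ * ((Real.sqrt 2 : ℂ))⁻¹)
          * (∑ b : Fin 2, (starRingEnd ℂ) (Pp V P (k.2.1, b, k.2.2)) * Pp V P (k.2.1, b, k.2.2)) := by
    rintro ⟨r, w⟩
    rw [Fintype.sum_prod_type, Fin.sum_univ_two, Fin.sum_univ_two, Fin.sum_univ_two,
      Fin.sum_univ_two]
    fin_cases r <;> simp <;> ring
  have inner11 : ∀ k : Fin 2 × Fin dA × Fin dB,
      (∑ ab : Fin 2 × Fin 2,
        (starRingEnd ℂ) ((if k.1 = ab.2 then ((Real.sqrt 2 : ℂ))⁻¹ else 0)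
            * Qp U Q (ab.1, k.2.1, k.2.2))
          * ((if k.1 = ab.2 then ((Real.sqrt 2 : ℂ))⁻¹ else 0) * Qp U Q (ab.1, k.2.1, k.2.2)))
      = ((starRingEnd ℂ) ((Real.sqrt 2 : ℂ))⁻¹ * ((Real.sqrt 2 : ℂ))⁻¹)
          * (∑ a : Fin 2, (starRingEnd ℂ) (Qp U Q (a, k.2.1, k.2.2)) * Qp U Q (a, k.2.1, k.2.2)) := by
    rintro ⟨r, w⟩
    rw [Fintype.sum_prod_type, Fin.sum_univ_two, Fin.sum_univ_two, Fin.sum_univ_two,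
      Fin.sum_univ_two]
    fin_cases r <;> simp <;> ring
  -- the three global identities
  have hS01 : cinner ψ0 ψ1 = (2 : ℂ)⁻¹ * ∑ k : Fin 2 × Fin dA × Fin dB,
      (starRingEnd ℂ) (Pp V P (k.2.1, k.1, k.2.2)) * Qp U Q (k.1, k.2.1, k.2.2) := by
    rw [← cinner_mulVec (Wm_unitary dA dB hU hV) ψ0 ψ1]
    unfold cinner
    rw [reduce]
    simp only [key0, key1, eqv2, Equiv.coe_fn_mk]
    simp only [inner01, hcc]
    rw [← Finset.mul_sum]
  have hP : cinner ψ0 ψ0 = (2 : ℂ)⁻¹ * ∑ k : Fin 2 × Fin dA × Fin dB, ∑ b : Fin 2,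
      (starRingEnd ℂ) (Pp V P (k.2.1, b, k.2.2)) * Pp V P (k.2.1, b, k.2.2) := by
    rw [← cinner_mulVec (Wm_unitary dA dB hU hV) ψ0 ψ0]
    unfold cinner
    rw [reduce]
    simp only [key0, eqv2, Equiv.coe_fn_mk]
    simp only [inner00, hcc]
    rw [← Finset.mul_sum]
  have hQ : cinner ψ1 ψ1 = (2 : ℂ)⁻¹ * ∑ k : Fin 2 × Fin dA × Fin dB, ∑ a : Fin 2,
      (starRingEnd ℂ) (Qp U Q (a, k.2.1, k.2.2)) * Qp U Q (a, k.2.1, k.2.2) := by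
    rw [← cinner_mulVec (Wm_unitary dA dB hU hV) ψ1 ψ1]
    unfold cinner
    rw [reduce]
    simp only [key1, eqv2, Equiv.coe_fn_mk]
    simp only [inner11, hcc]
    rw [← Finset.mul_sum]
  -- norms of P' and Q'
  have hPnorm : ∑ k : Fin 2 × Fin dA × Fin dB,
      (starRingEnd ℂ) (Pp V P (k.2.1, k.1, k.2.2)) * Pp V P (k.2.1, k.1, k.2.2) = 1 := by
    have h2 : (2 : ℂ)⁻¹ * (∑ k : Fin 2 × Fin dA × Fin dB, ∑ b : Fin 2,
        (starRingEnd ℂ) (Pp V P (k.2.1, b, k.2.2)) * Pp V P (k.2.1, b, k.2.2)) = 1 :=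
      hP.symm.trans hψ0
    have h3 := two_sum (fun w b => (starRingEnd ℂ) (Pp V P (w.1, b, w.2)) * Pp V P (w.1, b, w.2))
    have h4 := one_sum (fun w b => (starRingEnd ℂ) (Pp V P (w.1, b, w.2)) * Pp V P (w.1, b, w.2))
    rw [h4]
    linear_combination h2 - (2 : ℂ)⁻¹ * h3
  have hQnorm : ∑ k : Fin 2 × Fin dA × Fin dB,
      (starRingEnd ℂ) (Qp U Q (k.1, k.2.1, k.2.2)) * Qp U Q (k.1, k.2.1, k.2.2) = 1 := by
    have h2 : (2 : ℂ)⁻¹ * (∑ k : Fin 2 × Fin dA × Fin dB, ∑ a : Fin 2,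
        (starRingEnd ℂ) (Qp U Q (a, k.2.1, k.2.2)) * Qp U Q (a, k.2.1, k.2.2)) = 1 :=
      hQ.symm.trans hψ1
    have h3 := two_sum (fun w a => (starRingEnd ℂ) (Qp U Q (a, w.1, w.2)) * Qp U Q (a, w.1, w.2))
    have h4 := one_sum (fun w a => (starRingEnd ℂ) (Qp U Q (a, w.1, w.2)) * Qp U Q (a, w.1, w.2))
    rw [h4]
    linear_combination h2 - (2 : ℂ)⁻¹ * h3
  -- real versions
  have hPr : ∑ k : Fin 2 × Fin dA × Fin dB,
      ‖Pp V P (k.2.1, k.1, k.2.2)‖ ^ 2 = (1 : ℝ) := by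
    have h4 : ((∑ k : Fin 2 × Fin dA × Fin dB,
        ‖Pp V P (k.2.1, k.1, k.2.2)‖ ^ 2 : ℝ) : ℂ) = 1 := by
      push_cast
      rw [← hPnorm]
      refine Finset.sum_congr rfl fun k _ => ?_
      rw [mul_comm, Complex.mul_conj, Complex.normSq_eq_norm_sq]
      push_cast
      ring
    exact_mod_cast h4
  have hQr : ∑ k : Fin 2 × Fin dA × Fin dB,
      ‖Qp U Q (k.1, k.2.1, k.2.2)‖ ^ 2 = (1 : ℝ) := by
    have h4 : ((∑ k : Fin 2 × Fin dA × Fin dB,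
        ‖Qp U Q (k.1, k.2.1, k.2.2)‖ ^ 2 : ℝ) : ℂ) = 1 := by
      push_cast
      rw [← hQnorm]
      refine Finset.sum_congr rfl fun k _ => ?_
      rw [mul_comm, Complex.mul_conj, Complex.normSq_eq_norm_sq]
      push_cast
      ring
    exact_mod_cast h4
  -- Cauchy-Schwarz
  have hSle : ‖∑ k : Fin 2 × Fin dA × Fin dB,
      (starRingEnd ℂ) (Pp V P (k.2.1, k.1, k.2.2)) * Qp U Q (k.1, k.2.1, k.2.2)‖ ≤ 1 := by
    have t1 : ‖∑ k : Fin 2 × Fin dA × Fin dB,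
        (starRingEnd ℂ) (Pp V P (k.2.1, k.1, k.2.2)) * Qp U Q (k.1, k.2.1, k.2.2)‖
        ≤ ∑ k : Fin 2 × Fin dA × Fin dB,
          ‖Pp V P (k.2.1, k.1, k.2.2)‖ * ‖Qp U Q (k.1, k.2.1, k.2.2)‖ := by
      refine le_trans (norm_sum_le _ _) (le_of_eq ?_)
      refine Finset.sum_congr rfl fun k _ => ?_
      rw [norm_mul, Complex.norm_conj]
    have t2 := Finset.sum_mul_sq_le_sq_mul_sq Finset.univ
      (fun k : Fin 2 × Fin dA × Fin dB => ‖Pp V P (k.2.1, k.1, k.2.2)‖)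
      (fun k : Fin 2 × Fin dA × Fin dB => ‖Qp U Q (k.1, k.2.1, k.2.2)‖)
    rw [hPr, hQr, one_mul] at t2
    have t0 : (0:ℝ) ≤ ∑ k : Fin 2 × Fin dA × Fin dB,
        ‖Pp V P (k.2.1, k.1, k.2.2)‖ * ‖Qp U Q (k.1, k.2.1, k.2.2)‖ :=
      Finset.sum_nonneg fun k _ => mul_nonneg (norm_nonneg _) (norm_nonneg _)
    nlinarith [t1, t2, t0, norm_nonneg (∑ k : Fin 2 × Fin dA × Fin dB,
      (starRingEnd ℂ) (Pp V P (k.2.1, k.1, k.2.2)) * Qp U Q (k.1, k.2.1, k.2.2))]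
  have habs : ‖cinner ψ0 ψ1‖ ≤ 1 / 2 := by
    rw [hS01, norm_mul, norm_inv, Complex.norm_two]
    nlinarith [hSle]
  calc ‖cinner ψ0 ψ1‖ ^ 2 ≤ (1 / 2 : ℝ) ^ 2 :=
        pow_le_pow_left₀ (norm_nonneg _) habs 2
    _ = 1 / 4 := by norm_num
end
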